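/- arXiv:2105.11441 — 4 statements merged into one kernel-verified Lean document; each statement's English description precedes it below -/
import Mathlib

section
/- Let n ≥ 1, λ ∈ (0,1) and p ≥ 1 be a real number, and let K, L ⊆ ℝⁿ be bounded sets with G(K)·G(L) > 0. Then G((1-λ)·K +_p λ·L + (-1,1)ⁿ)^{p/n} ≥ (1-λ)·G(K)^{p/n} + λ·G(L)^{p/n}, where the last + denotes the Minkowski sum with the open cube (-1,1)ⁿ. -/
open scoped Pointwise

/-- The `L_p` sum of two sets (Lutwak–Yang–Zhang pointwise definition); for `p = 1`
it is the Minkowski sum. -/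
noncomputable def pSum {E : Type*} [AddCommGroup E] [Module ℝ E] (p : ℝ) (K L : Set E) :
    Set E :=
  if p = 1 then K + L
  else {w | ∃ x ∈ K, ∃ y ∈ L, ∃ μ ∈ Set.Icc (0 : ℝ) 1,
    w = ((1 - μ) ^ (1 - 1 / p) : ℝ) • x + ((μ : ℝ) ^ (1 - 1 / p) : ℝ) • y}

/-- The `L_p` scalar multiplication `t · K = t^{1/p} K`. -/
noncomputable def pSmul {E : Type*} [AddCommGroup E] [Module ℝ E] (p t : ℝ) (K : Set E) :
    Set E :=
  ((t : ℝ) ^ (1 / p : ℝ)) • K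

/-- The set of integer points of `ℝⁿ`. -/
def intPts (n : ℕ) : Set (Fin n → ℝ) := {x | ∀ i, ∃ m : ℤ, x i = (m : ℝ)}

/-- The lattice point enumerator `G(M) = |M ∩ ℤⁿ|`. -/
noncomputable def latG {n : ℕ} (M : Set (Fin n → ℝ)) : ℕ := (M ∩ intPts n).ncard

/-- The open cube `(a, b)ⁿ` in `ℝⁿ`. -/
def cube (n : ℕ) (a b : ℝ) : Set (Fin n → ℝ) := {x | ∀ i, x i ∈ Set.Ioo a b}

open MeasureTheory Set
open scoped ENNReal NNReal

namespace BMaux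

variable {n : ℕ}

abbrev Box (n : ℕ) := (Fin n → ℝ) × (Fin n → ℝ)

def bset (b : Box n) : Set (Fin n → ℝ) := Set.pi Set.univ fun i => Set.Ico (b.1 i) (b.2 i)

def good (b : Box n) : Prop := ∀ i, b.1 i < b.2 i

noncomputable instance : DecidablePred (good (n := n)) := fun _ => Classical.dec _

lemma bset_measurable (b : Box n) : MeasurableSet (bset b) :=
  MeasurableSet.univ_pi fun _ => measurableSet_Ico

lemma volume_bset (b : Box n) : volume (bset b) = ∏ i, ENNReal.ofReal (b.2 i - b.1 i) := by
  rw [bset, volume_pi_pi]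
  simp [Real.volume_Ico]

lemma volume_bset_ne_top (b : Box n) : volume (bset b) ≠ ⊤ := by
  rw [volume_bset]
  exact ENNReal.prod_ne_top (by intro i _; exact ENNReal.ofReal_ne_top)

lemma bset_empty {b : Box n} (h : ¬ good b) : bset b = ∅ := by
  simp only [good, not_forall, not_lt] at h
  obtain ⟨i, hi⟩ := h
  apply Set.univ_pi_eq_empty (i := i)
  exact Set.Ico_eq_empty (by exact not_lt.mpr hi)

lemma volume_bset_pos {b : Box n} (h : good b) : 0 < volume (bset b) := by
  rw [volume_bset]
  refine lt_of_le_of_ne zero_le (Ne.symm ?_)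
  rw [Finset.prod_ne_zero_iff]
  exact fun i _ => ne_of_gt (ENNReal.ofReal_pos.2 (sub_pos.2 (h i)))

def U (F : Finset (Box n)) : Set (Fin n → ℝ) := ⋃ b ∈ F, bset b

lemma U_measurable (F : Finset (Box n)) : MeasurableSet (U F) :=
  MeasurableSet.biUnion F.countable_toSet fun b _ => bset_measurable b

lemma volume_U_ne_top (F : Finset (Box n)) : volume (U F) ≠ ⊤ := by
  refine ne_top_of_le_ne_top ?_ (measure_biUnion_finset_le F bset)
  exact ENNReal.sum_ne_top.2 fun b _ => volume_bset_ne_top b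

noncomputable def vol (S : Set (Fin n → ℝ)) : ℝ := (volume S).toReal

lemma vol_nonneg (S : Set (Fin n → ℝ)) : 0 ≤ vol S := ENNReal.toReal_nonneg

lemma vol_bset {b : Box n} (h : good b) : vol (bset b) = ∏ i, (b.2 i - b.1 i) := by
  rw [vol, volume_bset, ENNReal.toReal_prod]
  exact Finset.prod_congr rfl fun i _ => ENNReal.toReal_ofReal (le_of_lt (sub_pos.2 (h i)))

lemma vol_U_pos {F : Finset (Box n)} {b : Box n} (hb : b ∈ F) (h : good b) : 0 < vol (U F) := by
  have h1 : volume (bset b) ≤ volume (U F) := measure_mono (Set.subset_biUnion_of_mem hb)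
  have h2 := volume_bset_pos h
  refine ENNReal.toReal_pos (fun hz => ?_) (volume_U_ne_top F)
  rw [hz] at h1
  exact absurd (le_antisymm h1 zero_le) (ne_of_gt h2)

lemma vol_mono {S T : Set (Fin n → ℝ)} (h : S ⊆ T) (hT : volume T ≠ ⊤) : vol S ≤ vol T :=
  ENNReal.toReal_mono hT (measure_mono h)


lemma Ico_add_Ico {a b c d : ℝ} (h1 : a < b) (h2 : c < d) :
    Set.Ico a b + Set.Ico c d = Set.Ico (a + c) (b + d) := by
  apply Set.Subset.antisymm
  · rintro z ⟨x, hx, y, hy, rfl⟩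
    exact ⟨add_le_add hx.1 hy.1, add_lt_add hx.2 hy.2⟩
  · rintro z ⟨hz1, hz2⟩
    rcases lt_or_ge z (b + c) with h | h
    · exact ⟨z - c, ⟨by linarith, by linarith⟩, c, ⟨le_refl c, h2⟩, by ring⟩
    · have hm1 := min_le_left (b - a) (d - (z - b))
      have hm2 := min_le_right (b - a) (d - (z - b))
      have hmp : 0 < min (b - a) (d - (z - b)) := lt_min (by linarith) (by linarith)
      set e := min (b - a) (d - (z - b)) / 2 with he
      exact ⟨b - e, ⟨by simp only [he]; linarith, by simp only [he]; linarith⟩,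
        z - (b - e), ⟨by simp only [he]; linarith, by simp only [he]; linarith⟩, by ring⟩

lemma pi_add_pi {S T : Fin n → Set ℝ} (hS : ∀ i, (S i).Nonempty) (hT : ∀ i, (T i).Nonempty) :
    Set.pi Set.univ S + Set.pi Set.univ T = Set.pi Set.univ (fun i => S i + T i) := by
  apply Set.Subset.antisymm
  · rintro z ⟨x, hx, y, hy, rfl⟩ i _
    exact ⟨x i, hx i (Set.mem_univ i), y i, hy i (Set.mem_univ i), rfl⟩
  · intro z hz
    have : ∀ i, ∃ x ∈ S i, ∃ y ∈ T i, x + y = z i := by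
      intro i
      obtain ⟨x, hx, y, hy, hxy⟩ := hz i (Set.mem_univ i)
      exact ⟨x, hx, y, hy, hxy⟩
    choose x hx y hy hxy using this
    exact ⟨x, fun i _ => hx i, y, fun i _ => hy i, funext fun i => (hxy i)⟩

def badd (b c : Box n) : Box n := (b.1 + c.1, b.2 + c.2)

lemma good_badd {b c : Box n} (hb : good b) (hc : good c) : good (badd b c) :=
  fun i => add_lt_add (hb i) (hc i)

lemma bset_add_bset {b c : Box n} (hb : good b) (hc : good c) :
    bset b + bset c = bset (badd b c) := by
  rw [bset, bset, pi_add_pi (fun i => Set.nonempty_Ico.2 (hb i)) (fun i => Set.nonempty_Ico.2 (hc i))]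
  exact Set.pi_congr rfl fun i _ => Ico_add_Ico (hb i) (hc i)

lemma U_add_U (F G : Finset (Box n)) :
    U F + U G = ⋃ b ∈ F, ⋃ c ∈ G, (bset b + bset c) := by
  apply Set.Subset.antisymm
  · rintro z ⟨x, hx, y, hy, rfl⟩
    obtain ⟨b, hb, hxb⟩ := Set.mem_iUnion₂.1 hx
    obtain ⟨c, hc, hyc⟩ := Set.mem_iUnion₂.1 hy
    exact Set.mem_iUnion₂.2 ⟨b, hb, Set.mem_iUnion₂.2 ⟨c, hc, x, hxb, y, hyc, rfl⟩⟩
  · intro z hz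
    obtain ⟨b, hb, hz2⟩ := Set.mem_iUnion₂.1 hz
    obtain ⟨c, hc, x, hxb, y, hyc, rfl⟩ := Set.mem_iUnion₂.1 hz2
    exact ⟨x, Set.mem_biUnion hb hxb, y, Set.mem_biUnion hc hyc, rfl⟩

lemma U_add_U_good {F G : Finset (Box n)} (hF : ∀ b ∈ F, good b) (hG : ∀ c ∈ G, good c) :
    U F + U G = ⋃ b ∈ F, ⋃ c ∈ G, bset (badd b c) := by
  rw [U_add_U]
  exact Set.iUnion₂_congr fun b hb => Set.iUnion₂_congr fun c hc =>
    bset_add_bset (hF b hb) (hG c hc)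

lemma measurable_U_add_U {F G : Finset (Box n)} (hF : ∀ b ∈ F, good b) (hG : ∀ c ∈ G, good c) :
    MeasurableSet (U F + U G) := by
  rw [U_add_U_good hF hG]
  exact MeasurableSet.biUnion F.countable_toSet fun b _ =>
    MeasurableSet.biUnion G.countable_toSet fun c _ => bset_measurable _

lemma volume_U_add_U_ne_top {F G : Finset (Box n)} (hF : ∀ b ∈ F, good b) (hG : ∀ c ∈ G, good c) :
    volume (U F + U G) ≠ ⊤ := by
  rw [U_add_U_good hF hG]
  refine ne_top_of_le_ne_top ?_ (measure_biUnion_finset_le F _)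
  refine ENNReal.sum_ne_top.2 fun b _ => ?_
  refine ne_top_of_le_ne_top ?_ (measure_biUnion_finset_le G _)
  exact ENNReal.sum_ne_top.2 fun c _ => volume_bset_ne_top _


def clipLe (i : Fin n) (t : ℝ) (b : Box n) : Box n :=
  (b.1, Function.update b.2 i (min (b.2 i) t))

def clipGe (i : Fin n) (t : ℝ) (b : Box n) : Box n :=
  (Function.update b.1 i (max (b.1 i) t), b.2)

lemma bset_clipLe (i : Fin n) (t : ℝ) (b : Box n) :
    bset (clipLe i t b) = bset b ∩ {x | x i < t} := by
  ext x
  simp only [bset, clipLe, Set.mem_inter_iff, Set.mem_pi, Set.mem_univ, forall_true_left,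
    Set.mem_Ico, Set.mem_setOf_eq]
  constructor
  · intro h
    refine ⟨fun j => ?_, ?_⟩
    · have hj := h j
      rcases eq_or_ne j i with rfl | hne
      · rw [Function.update_self] at hj
        exact ⟨hj.1, lt_of_lt_of_le hj.2 (min_le_left _ _)⟩
      · rwa [Function.update_of_ne hne] at hj
    · have hi := h i
      rw [Function.update_self] at hi
      exact lt_of_lt_of_le hi.2 (min_le_right _ _)
  · rintro ⟨h, hi⟩ j
    rcases eq_or_ne j i with rfl | hne
    · rw [Function.update_self]
      exact ⟨(h j).1, lt_min (h j).2 hi⟩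
    · rw [Function.update_of_ne hne]
      exact h j

lemma bset_clipGe (i : Fin n) (t : ℝ) (b : Box n) :
    bset (clipGe i t b) = bset b ∩ {x | t ≤ x i} := by
  ext x
  simp only [bset, clipGe, Set.mem_inter_iff, Set.mem_pi, Set.mem_univ, forall_true_left,
    Set.mem_Ico, Set.mem_setOf_eq]
  constructor
  · intro h
    refine ⟨fun j => ?_, ?_⟩
    · have hj := h j
      rcases eq_or_ne j i with rfl | hne
      · rw [Function.update_self] at hj
        exact ⟨le_trans (le_max_left _ _) hj.1, hj.2⟩
      · rwa [Function.update_of_ne hne] at hj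
    · have hi := h i
      rw [Function.update_self] at hi
      exact le_trans (le_max_right _ _) hi.1
  · rintro ⟨h, hi⟩ j
    rcases eq_or_ne j i with rfl | hne
    · rw [Function.update_self]
      exact ⟨max_le (h j).1 hi, (h j).2⟩
    · rw [Function.update_of_ne hne]
      exact h j

lemma U_filter_good (S : Finset (Box n)) : U (S.filter good) = U S := by
  apply Set.Subset.antisymm
  · exact Set.iUnion₂_mono' fun b hb => ⟨b, Finset.mem_of_mem_filter b hb, le_refl _⟩
  · intro x hx
    obtain ⟨b, hb, hxb⟩ := Set.mem_iUnion₂.1 hx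
    by_cases hgood : good b
    · exact Set.mem_biUnion (Finset.mem_filter.2 ⟨hb, hgood⟩) hxb
    · rw [bset_empty hgood] at hxb
      exact absurd hxb (Set.notMem_empty x)

lemma U_image (f : Box n → Box n) (F : Finset (Box n)) :
    U (F.image f) = ⋃ b ∈ F, bset (f b) := by
  apply Set.Subset.antisymm
  · intro x hx
    obtain ⟨c, hc, hxc⟩ := Set.mem_iUnion₂.1 hx
    obtain ⟨b, hb, rfl⟩ := Finset.mem_image.1 hc
    exact Set.mem_biUnion hb hxc
  · intro x hx
    obtain ⟨b, hb, hxb⟩ := Set.mem_iUnion₂.1 hx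
    exact Set.mem_biUnion (Finset.mem_image_of_mem f hb) hxb

noncomputable def Fle (i : Fin n) (t : ℝ) (F : Finset (Box n)) : Finset (Box n) :=
  (F.image (clipLe i t)).filter good

noncomputable def Fge (i : Fin n) (t : ℝ) (F : Finset (Box n)) : Finset (Box n) :=
  (F.image (clipGe i t)).filter good

lemma U_Fle (i : Fin n) (t : ℝ) (F : Finset (Box n)) :
    U (Fle i t F) = U F ∩ {x | x i < t} := by
  rw [Fle, U_filter_good, U_image]
  rw [show (⋃ b ∈ F, bset (clipLe i t b)) = ⋃ b ∈ F, (bset b ∩ {x | x i < t}) from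
    Set.iUnion₂_congr fun b _ => bset_clipLe i t b]
  rw [U, Set.iUnion₂_inter]

lemma U_Fge (i : Fin n) (t : ℝ) (F : Finset (Box n)) :
    U (Fge i t F) = U F ∩ {x | t ≤ x i} := by
  rw [Fge, U_filter_good, U_image]
  rw [show (⋃ b ∈ F, bset (clipGe i t b)) = ⋃ b ∈ F, (bset b ∩ {x | t ≤ x i}) from
    Set.iUnion₂_congr fun b _ => bset_clipGe i t b]
  rw [U, Set.iUnion₂_inter]

lemma Fle_good (i : Fin n) (t : ℝ) (F : Finset (Box n)) : ∀ b ∈ Fle i t F, good b :=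
  fun b hb => (Finset.mem_filter.1 hb).2

lemma Fge_good (i : Fin n) (t : ℝ) (F : Finset (Box n)) : ∀ b ∈ Fge i t F, good b :=
  fun b hb => (Finset.mem_filter.1 hb).2

lemma vol_clipLe_formula (i : Fin n) (b : Box n) (s : ℝ) :
    vol (bset (clipLe i s b)) =
      max (min (b.2 i) s - b.1 i) 0 * ∏ j ∈ Finset.univ.erase i, max (b.2 j - b.1 j) 0 := by
  rw [vol, volume_bset, ENNReal.toReal_prod]
  rw [Finset.prod_eq_mul_prod_sdiff_singleton_of_mem (Finset.mem_univ i)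
    (fun j => ((ENNReal.ofReal ((clipLe i s b).2 j - (clipLe i s b).1 j)).toReal))]
  congr 1
  · rw [clipLe]
    simp only [Function.update_self]
    exact ENNReal.toReal_ofReal'
  · rw [show Finset.univ \ {i} = Finset.univ.erase i by
      rw [Finset.erase_eq]]
    refine Finset.prod_congr rfl fun j hj => ?_
    rw [clipLe]
    simp only
    rw [Function.update_of_ne (Finset.ne_of_mem_erase hj)]
    exact ENNReal.toReal_ofReal'

lemma continuous_vol_clipLe (i : Fin n) (b : Box n) :
    Continuous fun s => vol (bset (clipLe i s b)) := by
  simp only [vol_clipLe_formula]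
  apply Continuous.mul _ continuous_const
  exact ((continuous_const.min continuous_id).sub continuous_const).max continuous_const

lemma vol_slice (i : Fin n) (s : ℝ) {G : Finset (Box n)}
    (hdisj : (G : Set (Box n)).PairwiseDisjoint bset) :
    vol (U G ∩ {x | x i < s}) = ∑ c ∈ G, vol (bset (clipLe i s c)) := by
  have h1 : U G ∩ {x | x i < s} = ⋃ c ∈ G, bset (clipLe i s c) := by
    rw [show (⋃ c ∈ G, bset (clipLe i s c)) = ⋃ c ∈ G, (bset c ∩ {x | x i < s}) from
      Set.iUnion₂_congr fun c _ => bset_clipLe i s c]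
    rw [U, Set.iUnion₂_inter]
  rw [h1, vol]
  rw [measure_biUnion_finset (hdisj.mono_on ?_) (fun c _ => bset_measurable _)]
  · rw [ENNReal.toReal_sum (fun c _ => volume_bset_ne_top _)]
    rfl
  · intro c hc
    rw [bset_clipLe]
    exact Set.inter_subset_left


lemma vol_split {S : Set (Fin n → ℝ)} (hfin : volume S ≠ ⊤) {H : Set (Fin n → ℝ)}
    (hH : MeasurableSet H) : vol S = vol (S ∩ H) + vol (S \ H) := by
  rw [vol, vol, vol, ← measure_inter_add_diff S hH, ENNReal.toReal_add]
  · exact ne_top_of_le_ne_top hfin (measure_mono Set.inter_subset_left)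
  · exact ne_top_of_le_ne_top hfin (measure_mono Set.diff_subset)

lemma exists_sep {b c : Box n} (hb : good b) (hc : good c)
    (hdisj : Disjoint (bset b) (bset c)) : ∃ i, b.2 i ≤ c.1 i ∨ c.2 i ≤ b.1 i := by
  by_contra hcon
  push_neg at hcon
  have hx : (fun i => max (b.1 i) (c.1 i)) ∈ bset b := by
    intro i _
    exact ⟨le_max_left _ _, max_lt (hb i) (hcon i).1⟩
  have hx' : (fun i => max (b.1 i) (c.1 i)) ∈ bset c := by
    intro i _
    exact ⟨le_max_right _ _, max_lt (hcon i).2 (hc i)⟩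
  exact Set.disjoint_left.1 hdisj hx hx'

lemma nonempty_of_vol_pos {S : Finset (Box n)} (h : 0 < vol (U S)) : S.Nonempty := by
  rcases S.eq_empty_or_nonempty with rfl | h'
  · simp [U, vol] at h
  · exact h'

lemma box_BM (hn : 0 < n) {b c : Box n} (hb : good b) (hc : good c) :
    (vol (bset b) ^ ((n : ℝ))⁻¹ + vol (bset c) ^ ((n : ℝ))⁻¹) ^ n ≤ vol (bset b + bset c) := by
  rw [bset_add_bset hb hc, vol_bset (good_badd hb hc), vol_bset hb, vol_bset hc]
  set p : Fin n → ℝ := fun i => b.2 i - b.1 i with hp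
  set q : Fin n → ℝ := fun i => c.2 i - c.1 i with hq
  have hpp : ∀ i, 0 < p i := fun i => sub_pos.2 (hb i)
  have hqp : ∀ i, 0 < q i := fun i => sub_pos.2 (hc i)
  have hprod : ∏ i, ((badd b c).2 i - (badd b c).1 i) = ∏ i, (p i + q i) := by
    refine Finset.prod_congr rfl fun i _ => ?_
    simp only [badd, Pi.add_apply, hp, hq]
    ring
  rw [hprod]
  set P := ∏ i, p i with hP
  set Q := ∏ i, q i with hQ
  set R := ∏ i, (p i + q i) with hR
  have hPpos : 0 < P := Finset.prod_pos fun i _ => hpp i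
  have hQpos : 0 < Q := Finset.prod_pos fun i _ => hqp i
  have hRpos : 0 < R := Finset.prod_pos fun i _ => add_pos (hpp i) (hqp i)
  have hw : ∑ _i : Fin n, ((n : ℝ))⁻¹ = 1 := by
    rw [Finset.sum_const, Finset.card_univ, Fintype.card_fin, nsmul_eq_mul]
    field_simp
  have key : ∀ (z : Fin n → ℝ), (∀ i, 0 ≤ z i) →
      (∏ i, z i) ^ ((n : ℝ))⁻¹ ≤ ∑ i, ((n : ℝ))⁻¹ * z i := by
    intro z hz
    rw [← Real.finset_prod_rpow _ _ (fun i _ => hz i)]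
    exact Real.geom_mean_le_arith_mean_weighted _ _ _ (fun i _ => inv_nonneg.2 (Nat.cast_nonneg n)) hw
      (fun i _ => hz i)
  have h1 : P ^ ((n : ℝ))⁻¹ / R ^ ((n : ℝ))⁻¹ ≤ ∑ i, ((n : ℝ))⁻¹ * (p i / (p i + q i)) := by
    rw [← Real.div_rpow hPpos.le hRpos.le, hP, hR, ← Finset.prod_div_distrib]
    exact key _ fun i => div_nonneg (hpp i).le (add_pos (hpp i) (hqp i)).le
  have h2 : Q ^ ((n : ℝ))⁻¹ / R ^ ((n : ℝ))⁻¹ ≤ ∑ i, ((n : ℝ))⁻¹ * (q i / (p i + q i)) := by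
    rw [← Real.div_rpow hQpos.le hRpos.le, hQ, hR, ← Finset.prod_div_distrib]
    exact key _ fun i => div_nonneg (hqp i).le (add_pos (hpp i) (hqp i)).le
  have hsum : (∑ i, ((n : ℝ))⁻¹ * (p i / (p i + q i))) +
      (∑ i, ((n : ℝ))⁻¹ * (q i / (p i + q i))) = 1 := by
    rw [← Finset.sum_add_distrib, ← hw]
    refine Finset.sum_congr rfl fun i _ => ?_
    have h0 : p i + q i ≠ 0 := (add_pos (hpp i) (hqp i)).ne'
    field_simp
  have hRr : 0 < R ^ ((n : ℝ))⁻¹ := Real.rpow_pos_of_pos hRpos _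
  have hkey : P ^ ((n : ℝ))⁻¹ + Q ^ ((n : ℝ))⁻¹ ≤ R ^ ((n : ℝ))⁻¹ := by
    rw [← div_le_one hRr, add_div]
    calc P ^ ((n : ℝ))⁻¹ / R ^ ((n : ℝ))⁻¹ + Q ^ ((n : ℝ))⁻¹ / R ^ ((n : ℝ))⁻¹ ≤ _ :=
          add_le_add h1 h2
      _ = 1 := hsum
  calc (P ^ ((n : ℝ))⁻¹ + Q ^ ((n : ℝ))⁻¹) ^ n ≤ (R ^ ((n : ℝ))⁻¹) ^ n := by
        exact pow_le_pow_left₀ (by positivity) hkey n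
    _ = R := Real.rpow_inv_natCast_pow hRpos.le hn.ne'


lemma disjoint_Fle (i : Fin n) (t : ℝ) {F : Finset (Box n)}
    (hdisj : (↑F : Set (Box n)).PairwiseDisjoint bset) :
    (↑(Fle i t F) : Set (Box n)).PairwiseDisjoint bset := by
  intro c₁ hc₁ c₂ hc₂ hne
  obtain ⟨b₁, hb₁, rfl⟩ := Finset.mem_image.1 (Finset.mem_of_mem_filter _ hc₁)
  obtain ⟨b₂, hb₂, rfl⟩ := Finset.mem_image.1 (Finset.mem_of_mem_filter _ hc₂)
  have hbne : b₁ ≠ b₂ := fun h => hne (by rw [h])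
  refine Set.disjoint_of_subset ?_ ?_ (hdisj hb₁ hb₂ hbne)
  · rw [bset_clipLe]; exact Set.inter_subset_left
  · rw [bset_clipLe]; exact Set.inter_subset_left

lemma disjoint_Fge (i : Fin n) (t : ℝ) {F : Finset (Box n)}
    (hdisj : (↑F : Set (Box n)).PairwiseDisjoint bset) :
    (↑(Fge i t F) : Set (Box n)).PairwiseDisjoint bset := by
  intro c₁ hc₁ c₂ hc₂ hne
  obtain ⟨b₁, hb₁, rfl⟩ := Finset.mem_image.1 (Finset.mem_of_mem_filter _ hc₁)
  obtain ⟨b₂, hb₂, rfl⟩ := Finset.mem_image.1 (Finset.mem_of_mem_filter _ hc₂)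
  have hbne : b₁ ≠ b₂ := fun h => hne (by rw [h])
  refine Set.disjoint_of_subset ?_ ?_ (hdisj hb₁ hb₂ hbne)
  · rw [bset_clipGe]; exact Set.inter_subset_left
  · rw [bset_clipGe]; exact Set.inter_subset_left

lemma vol_U_pos_of_good {F : Finset (Box n)} (hne : F.Nonempty) (hgood : ∀ b ∈ F, good b) :
    0 < vol (U F) := by
  obtain ⟨b, hb⟩ := hne
  exact vol_U_pos hb (hgood b hb)

/-- The main Hadwiger–Ohmann style splitting step. -/
lemma BMstep (hn : 0 < n) (N : ℕ)
    (ih : ∀ F G : Finset (Box n), F.card + G.card ≤ N → F.Nonempty → G.Nonempty →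
      (∀ b ∈ F, good b) → (∀ b ∈ G, good b) →
      (↑F : Set (Box n)).PairwiseDisjoint bset → (↑G : Set (Box n)).PairwiseDisjoint bset →
      (vol (U F) ^ ((n : ℝ))⁻¹ + vol (U G) ^ ((n : ℝ))⁻¹) ^ n ≤ vol (U F + U G))
    (F G : Finset (Box n)) (hcard : F.card + G.card ≤ N + 1)
    (hGne : G.Nonempty)
    (goodF : ∀ b ∈ F, good b) (goodG : ∀ b ∈ G, good b)
    (disjF : (↑F : Set (Box n)).PairwiseDisjoint bset)
    (disjG : (↑G : Set (Box n)).PairwiseDisjoint bset)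
    (hsep : ∃ b₁ ∈ F, ∃ b₂ ∈ F, ∃ i : Fin n, b₁.2 i ≤ b₂.1 i) :
    (vol (U F) ^ ((n : ℝ))⁻¹ + vol (U G) ^ ((n : ℝ))⁻¹) ^ n ≤ vol (U F + U G) := by
  classical
  obtain ⟨b₁, hb₁F, b₂, hb₂F, i, hsep⟩ := hsep
  have hb₁g := goodF b₁ hb₁F
  have hb₂g := goodF b₂ hb₂F
  set t : ℝ := b₂.1 i with ht
  -- the two halves of F
  set Fm := Fle i t F with hFm
  set Fp := Fge i t F with hFp
  have hb₁Fm : b₁ ∈ Fm := by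
    have hclip : clipLe i t b₁ = b₁ := by
      rw [clipLe, min_eq_left hsep, Function.update_eq_self]
    rw [hFm, Fle, Finset.mem_filter]
    exact ⟨hclip ▸ Finset.mem_image_of_mem _ hb₁F, hb₁g⟩
  have hb₂Fp : b₂ ∈ Fp := by
    have hclip : clipGe i t b₂ = b₂ := by
      rw [clipGe, ht, max_self, Function.update_eq_self]
    rw [hFp, Fge, Finset.mem_filter]
    exact ⟨hclip ▸ Finset.mem_image_of_mem _ hb₂F, hb₂g⟩
  have hcardFm : Fm.card ≤ F.card - 1 := by
    have hsub : Fm ⊆ (F.erase b₂).image (clipLe i t) := by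
      intro c hc
      obtain ⟨hcim, hcgood⟩ := Finset.mem_filter.1 hc
      obtain ⟨b, hbF, rfl⟩ := Finset.mem_image.1 hcim
      refine Finset.mem_image_of_mem _ (Finset.mem_erase.2 ⟨?_, hbF⟩)
      rintro rfl
      have : min (b.2 i) t = t := min_eq_right (le_of_lt (ht ▸ hb₂g i))
      have hbad := hcgood i
      rw [clipLe] at hbad
      simp only [Function.update_self, this] at hbad
      exact absurd hbad (lt_irrefl t).elim
    calc Fm.card ≤ ((F.erase b₂).image (clipLe i t)).card := Finset.card_le_card hsub
      _ ≤ (F.erase b₂).card := Finset.card_image_le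
      _ = F.card - 1 := Finset.card_erase_of_mem hb₂F
  have hcardFp : Fp.card ≤ F.card - 1 := by
    have hsub : Fp ⊆ (F.erase b₁).image (clipGe i t) := by
      intro c hc
      obtain ⟨hcim, hcgood⟩ := Finset.mem_filter.1 hc
      obtain ⟨b, hbF, rfl⟩ := Finset.mem_image.1 hcim
      refine Finset.mem_image_of_mem _ (Finset.mem_erase.2 ⟨?_, hbF⟩)
      rintro rfl
      have hmax : max (b.1 i) t = t := max_eq_right (le_trans (le_of_lt (hb₁g i)) hsep)
      have hbad := hcgood i
      rw [clipGe] at hbad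
      simp only [Function.update_self, hmax] at hbad
      exact absurd (lt_of_le_of_lt hsep hbad) (lt_irrefl _)
    calc Fp.card ≤ ((F.erase b₁).image (clipGe i t)).card := Finset.card_le_card hsub
      _ ≤ (F.erase b₁).card := Finset.card_image_le
      _ = F.card - 1 := Finset.card_erase_of_mem hb₁F
  -- slab measurability
  have hHmeas : ∀ s : ℝ, MeasurableSet {x : Fin n → ℝ | x i < s} := fun s =>
    measurableSet_lt (measurable_pi_apply i) measurable_const
  have hdiffeq : ∀ (S : Set (Fin n → ℝ)) (s : ℝ),
      S \ {x | x i < s} = S ∩ {x | s ≤ x i} := by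
    intro S s
    ext x
    simp [not_lt]
  -- split volumes of F
  have hsplitF : vol (U F) = vol (U Fm) + vol (U Fp) := by
    rw [hFm, hFp, U_Fle, U_Fge, ← hdiffeq]
    exact vol_split (volume_U_ne_top F) (hHmeas t)
  set A := vol (U F) with hA
  set B := vol (U G) with hB
  have hApos : 0 < A := vol_U_pos hb₁F hb₁g
  have hBpos : 0 < B := vol_U_pos_of_good hGne goodG
  have hFmpos : 0 < vol (U Fm) := vol_U_pos hb₁Fm hb₁g
  have hFppos : 0 < vol (U Fp) := vol_U_pos hb₂Fp hb₂g
  set θ := vol (U Fm) / A with hθ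
  have hθpos : 0 < θ := div_pos hFmpos hApos
  have hθlt : θ < 1 := by
    rw [hθ, div_lt_one hApos]
    linarith [hsplitF]
  have hVFm : vol (U Fm) = θ * A := by
    rw [hθ]; field_simp
  have hVFp : vol (U Fp) = (1 - θ) * A := by
    rw [hθ]; field_simp; linarith [hsplitF]
  -- find the matching cut for G
  obtain ⟨c₀, hc₀⟩ := hGne
  set m : ℝ := (G.image fun c => c.1 i).min' ⟨_, Finset.mem_image_of_mem _ hc₀⟩ with hm
  set M : ℝ := (G.image fun c => c.2 i).max' ⟨_, Finset.mem_image_of_mem _ hc₀⟩ with hM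
  set f : ℝ → ℝ := fun s => vol (U G ∩ {x | x i < s}) with hf
  have hfeq : f = fun s => ∑ c ∈ G, vol (bset (clipLe i s c)) := by
    funext s
    exact vol_slice i s disjG
  have hfcont : Continuous f := by
    rw [hfeq]
    exact continuous_finset_sum _ fun c _ => continuous_vol_clipLe i c
  have hfm : f m = 0 := by
    show vol (U G ∩ {x | x i < m}) = 0
    have : U G ∩ {x | x i < m} = ∅ := by
      apply Set.eq_empty_iff_forall_notMem.2
      rintro x ⟨hxU, hxlt⟩
      obtain ⟨c, hcG, hxc⟩ := Set.mem_iUnion₂.1 hxU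
      have h1 : m ≤ c.1 i := Finset.min'_le _ _ (Finset.mem_image_of_mem (fun c => c.1 i) hcG)
      have h2 : c.1 i ≤ x i := (hxc i (Set.mem_univ i)).1
      exact absurd hxlt (not_lt.2 (le_trans h1 h2))
    rw [this, vol, measure_empty, ENNReal.toReal_zero]
  have hfM : f M = B := by
    show vol (U G ∩ {x | x i < M}) = B
    rw [hB]
    congr 1
    apply Set.inter_eq_self_of_subset_left
    intro x hxU
    obtain ⟨c, hcG, hxc⟩ := Set.mem_iUnion₂.1 hxU
    have h2 : x i < c.2 i := (hxc i (Set.mem_univ i)).2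
    exact lt_of_lt_of_le h2 (Finset.le_max' _ _ (Finset.mem_image_of_mem (fun c => c.2 i) hcG))
  have hmM : m ≤ M := by
    have h1 : m ≤ c₀.1 i := Finset.min'_le _ _ (Finset.mem_image_of_mem (fun c => c.1 i) hc₀)
    have h2 : c₀.2 i ≤ M := Finset.le_max' _ _ (Finset.mem_image_of_mem (fun c => c.2 i) hc₀)
    exact le_trans h1 (le_trans (le_of_lt (goodG c₀ hc₀ i)) h2)
  have hmem : θ * B ∈ Set.Icc (f m) (f M) := by
    rw [hfm, hfM]
    constructor
    · positivity
    · nlinarith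
  obtain ⟨s, _, hs⟩ := intermediate_value_Icc hmM hfcont.continuousOn hmem
  -- the two halves of G
  set Gm := Fle i s G with hGm
  set Gp := Fge i s G with hGp
  have hUGm : U Gm = U G ∩ {x | x i < s} := U_Fle i s G
  have hUGp : U Gp = U G ∩ {x | s ≤ x i} := U_Fge i s G
  have hVGm : vol (U Gm) = θ * B := by rw [hUGm, ← hs]
  have hsplitG : B = vol (U Gm) + vol (U Gp) := by
    rw [hUGm, hUGp, ← hdiffeq]
    exact vol_split (volume_U_ne_top G) (hHmeas s)
  have hVGp : vol (U Gp) = (1 - θ) * B := by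
    rw [hVGm] at hsplitG
    linarith
  have hGmpos : 0 < vol (U Gm) := by rw [hVGm]; positivity
  have hGppos : 0 < vol (U Gp) := by rw [hVGp]; nlinarith
  have hGmne : Gm.Nonempty := nonempty_of_vol_pos hGmpos
  have hGpne : Gp.Nonempty := nonempty_of_vol_pos hGppos
  have hFmne : Fm.Nonempty := ⟨b₁, hb₁Fm⟩
  have hFpne : Fp.Nonempty := ⟨b₂, hb₂Fp⟩
  -- apply the induction hypothesis to the two halves
  have hcard1 : Fm.card + Gm.card ≤ N := by
    have h1 : Gm.card ≤ G.card := le_trans (Finset.card_le_card (Finset.filter_subset _ _))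
      Finset.card_image_le
    have h2 : 1 ≤ F.card := Finset.card_pos.2 ⟨b₁, hb₁F⟩
    omega
  have hcard2 : Fp.card + Gp.card ≤ N := by
    have h1 : Gp.card ≤ G.card := le_trans (Finset.card_le_card (Finset.filter_subset _ _))
      Finset.card_image_le
    have h2 : 1 ≤ F.card := Finset.card_pos.2 ⟨b₁, hb₁F⟩
    omega
  have ih1 := ih Fm Gm hcard1 hFmne hGmne (Fle_good i t F) (Fle_good i s G)
    (disjoint_Fle i t disjF) (disjoint_Fle i s disjG)
  have ih2 := ih Fp Gp hcard2 hFpne hGpne (Fge_good i t F) (Fge_good i s G)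
    (disjoint_Fge i t disjF) (disjoint_Fge i s disjG)
  -- the two half-sums sit in disjoint halfspaces inside U F + U G
  have hsub1 : U Fm + U Gm ⊆ (U F + U G) ∩ {x | x i < t + s} := by
    rintro z ⟨x, hx, y, hy, rfl⟩
    rw [U_Fle] at hx
    rw [hUGm] at hy
    refine ⟨Set.add_mem_add hx.1 hy.1, ?_⟩
    simp only [Set.mem_setOf_eq, Pi.add_apply]
    exact add_lt_add hx.2 hy.2
  have hsub2 : U Fp + U Gp ⊆ (U F + U G) \ {x | x i < t + s} := by
    rintro z ⟨x, hx, y, hy, rfl⟩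
    rw [U_Fge] at hx
    rw [hUGp] at hy
    exact ⟨Set.add_mem_add hx.1 hy.1, by
      simp only [Set.mem_setOf_eq, not_lt, Pi.add_apply]
      exact add_le_add hx.2 hy.2⟩
  have hfin : volume (U F + U G) ≠ ⊤ := volume_U_add_U_ne_top goodF goodG
  have hvolsum : vol (U Fm + U Gm) + vol (U Fp + U Gp) ≤ vol (U F + U G) := by
    rw [vol_split hfin (hHmeas (t + s))]
    exact add_le_add
      (vol_mono hsub1 (ne_top_of_le_ne_top hfin (measure_mono Set.inter_subset_left)))
      (vol_mono hsub2 (ne_top_of_le_ne_top hfin (measure_mono Set.diff_subset)))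
  -- final computation
  have hrw : ∀ (c X Y : ℝ), 0 ≤ c → 0 ≤ X → 0 ≤ Y →
      ((c * X) ^ ((n : ℝ))⁻¹ + (c * Y) ^ ((n : ℝ))⁻¹) ^ n =
        c * (X ^ ((n : ℝ))⁻¹ + Y ^ ((n : ℝ))⁻¹) ^ n := by
    intro c X Y hc hX hY
    rw [Real.mul_rpow hc hX, Real.mul_rpow hc hY, ← mul_add, mul_pow,
      Real.rpow_inv_natCast_pow hc hn.ne']
  calc (A ^ ((n : ℝ))⁻¹ + B ^ ((n : ℝ))⁻¹) ^ n
      = θ * (A ^ ((n : ℝ))⁻¹ + B ^ ((n : ℝ))⁻¹) ^ n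
        + (1 - θ) * (A ^ ((n : ℝ))⁻¹ + B ^ ((n : ℝ))⁻¹) ^ n := by ring
    _ = ((θ * A) ^ ((n : ℝ))⁻¹ + (θ * B) ^ ((n : ℝ))⁻¹) ^ n
        + (((1 - θ) * A) ^ ((n : ℝ))⁻¹ + ((1 - θ) * B) ^ ((n : ℝ))⁻¹) ^ n := by
        rw [hrw θ A B hθpos.le hApos.le hBpos.le,
          hrw (1 - θ) A B (by linarith) hApos.le hBpos.le]
    _ = (vol (U Fm) ^ ((n : ℝ))⁻¹ + vol (U Gm) ^ ((n : ℝ))⁻¹) ^ n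
        + (vol (U Fp) ^ ((n : ℝ))⁻¹ + vol (U Gp) ^ ((n : ℝ))⁻¹) ^ n := by
        rw [hVFm, hVFp, hVGm, hVGp]
    _ ≤ vol (U Fm + U Gm) + vol (U Fp + U Gp) := add_le_add ih1 ih2
    _ ≤ vol (U F + U G) := hvolsum


theorem boxBM (hn : 0 < n) (F G : Finset (Box n)) (hFne : F.Nonempty) (hGne : G.Nonempty)
    (goodF : ∀ b ∈ F, good b) (goodG : ∀ b ∈ G, good b)
    (disjF : (↑F : Set (Box n)).PairwiseDisjoint bset)
    (disjG : (↑G : Set (Box n)).PairwiseDisjoint bset) :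
    (vol (U F) ^ ((n : ℝ))⁻¹ + vol (U G) ^ ((n : ℝ))⁻¹) ^ n ≤ vol (U F + U G) := by
  have main : ∀ N : ℕ, ∀ F G : Finset (Box n), F.card + G.card ≤ N → F.Nonempty → G.Nonempty →
      (∀ b ∈ F, good b) → (∀ b ∈ G, good b) →
      (↑F : Set (Box n)).PairwiseDisjoint bset → (↑G : Set (Box n)).PairwiseDisjoint bset →
      (vol (U F) ^ ((n : ℝ))⁻¹ + vol (U G) ^ ((n : ℝ))⁻¹) ^ n ≤ vol (U F + U G) := by
    intro N
    induction N with
    | zero =>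
      intro F G hc hFne hGne _ _ _ _
      have := Finset.card_pos.2 hFne
      omega
    | succ N ihN =>
      intro F G hc hFne hGne goodF goodG disjF disjG
      by_cases hF2 : 2 ≤ F.card
      · obtain ⟨b₁, hb₁, b₂, hb₂, hne⟩ := Finset.one_lt_card.1 hF2
        obtain ⟨i, hsep⟩ := exists_sep (goodF _ hb₁) (goodF _ hb₂) (disjF hb₁ hb₂ hne)
        rcases hsep with h | h
        · exact BMstep hn N ihN F G hc hGne goodF goodG disjF disjG ⟨b₁, hb₁, b₂, hb₂, i, h⟩
        · exact BMstep hn N ihN F G hc hGne goodF goodG disjF disjG ⟨b₂, hb₂, b₁, hb₁, i, h⟩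
      · by_cases hG2 : 2 ≤ G.card
        · obtain ⟨c₁, hc₁, c₂, hc₂, hne⟩ := Finset.one_lt_card.1 hG2
          obtain ⟨i, hsep⟩ := exists_sep (goodG _ hc₁) (goodG _ hc₂) (disjG hc₁ hc₂ hne)
          have hswap : (vol (U G) ^ ((n : ℝ))⁻¹ + vol (U F) ^ ((n : ℝ))⁻¹) ^ n ≤
              vol (U G + U F) := by
            rcases hsep with h | h
            · exact BMstep hn N ihN G F (by omega) hFne goodG goodF disjG disjF
                ⟨c₁, hc₁, c₂, hc₂, i, h⟩
            · exact BMstep hn N ihN G F (by omega) hFne goodG goodF disjG disjF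
                ⟨c₂, hc₂, c₁, hc₁, i, h⟩
          rw [add_comm (U G) (U F)] at hswap
          rw [add_comm (vol (U F) ^ ((n : ℝ))⁻¹) _]
          exact hswap
        · have hFcard : F.card = 1 := by
            have := Finset.card_pos.2 hFne
            omega
          have hGcard : G.card = 1 := by
            have := Finset.card_pos.2 hGne
            omega
          obtain ⟨b, rfl⟩ := Finset.card_eq_one.1 hFcard
          obtain ⟨c, rfl⟩ := Finset.card_eq_one.1 hGcard
          have hUb : U {b} = bset b := by simp [U]
          have hUc : U {c} = bset c := by simp [U]
          rw [hUb, hUc]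
          exact box_BM hn (goodF b (Finset.mem_singleton_self b))
            (goodG c (Finset.mem_singleton_self c))
  exact main (F.card + G.card) F G le_rfl hFne hGne goodF goodG disjF disjG


lemma finite_inter_iPts {S : Set (Fin n → ℝ)} (hS : Bornology.IsBounded S) :
    (S ∩ intPts n).Finite := by
  obtain ⟨R, hR⟩ := isBounded_iff_forall_norm_le.1 hS
  set M : ℤ := ⌈R⌉ with hM
  have hfin : ((fun v : Fin n → ℤ => fun i => (v i : ℝ)) ''
      (Set.pi Set.univ fun _ : Fin n => Set.Icc (-M) M)).Finite :=
    (Set.Finite.pi fun _ => Set.finite_Icc _ _).image _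
  refine hfin.subset ?_
  rintro x ⟨hxS, hxI⟩
  choose v hv using hxI
  refine ⟨v, fun i _ => ?_, by funext i; exact (hv i).symm⟩
  have h1 : |x i| ≤ R := by
    calc |x i| = ‖x i‖ := (Real.norm_eq_abs _).symm
      _ ≤ ‖x‖ := norm_le_pi_norm x i
      _ ≤ R := hR x hxS
  rw [hv i] at h1
  have h2 : |(v i : ℝ)| ≤ (M : ℝ) := le_trans h1 (Int.le_ceil R)
  have h3 : |v i| ≤ M := by exact_mod_cast h2
  exact abs_le.1 h3

/-- The core discrete inequality, for coefficients with `c₁ + c₂ ≤ 1`. -/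
lemma core (hn : 0 < n) {c₁ c₂ : ℝ} (hc₁ : 0 < c₁) (hc₂ : 0 < c₂) (hsum : c₁ + c₂ ≤ 1)
    {K L : Set (Fin n → ℝ)} (hKb : Bornology.IsBounded K) (hLb : Bornology.IsBounded L)
    (hKne : (K ∩ intPts n).Nonempty) (hLne : (L ∩ intPts n).Nonempty)
    {T : Set (Fin n → ℝ)} (hTb : Bornology.IsBounded T)
    (hsub : ∀ x ∈ K, ∀ y ∈ L, ∀ r : Fin n → ℝ, (∀ i, r i ∈ Set.Ioo (-1 : ℝ) 1) →
      c₁ • x + c₂ • y + r ∈ T) :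
    (c₁ * ((K ∩ intPts n).ncard : ℝ) ^ ((n : ℝ))⁻¹ +
      c₂ * ((L ∩ intPts n).ncard : ℝ) ^ ((n : ℝ))⁻¹) ^ n ≤ ((T ∩ intPts n).ncard : ℝ) := by
  classical
  have hKfin : (K ∩ intPts n).Finite := finite_inter_iPts hKb
  have hLfin : (L ∩ intPts n).Finite := finite_inter_iPts hLb
  have hTfin : (T ∩ intPts n).Finite := finite_inter_iPts hTb
  set ZK := hKfin.toFinset with hZK
  set ZL := hLfin.toFinset with hZL
  set fK : (Fin n → ℝ) → Box n := fun z => (fun i => c₁ * z i, fun i => c₁ * z i + c₁) with hfK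
  set fL : (Fin n → ℝ) → Box n := fun z => (fun i => c₂ * z i, fun i => c₂ * z i + c₂) with hfL
  set F : Finset (Box n) := ZK.image fK with hF
  set G : Finset (Box n) := ZL.image fL with hG
  -- generic facts about such families
  have hgen : ∀ (c : ℝ), 0 < c → ∀ (Z : Finset (Fin n → ℝ)), (∀ z ∈ Z, z ∈ intPts n) →
      ∀ (f : (Fin n → ℝ) → Box n), (f = fun z => (fun i => c * z i, fun i => c * z i + c)) →
      (∀ b ∈ Z.image f, good b) ∧ (↑(Z.image f) : Set (Box n)).PairwiseDisjoint bset ∧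
        vol (U (Z.image f)) = (Z.card : ℝ) * c ^ n := by
    intro c hc Z hZ f hfeq
    have hgood : ∀ b ∈ Z.image f, good b := by
      intro b hb
      obtain ⟨z, _, rfl⟩ := Finset.mem_image.1 hb
      intro i
      rw [hfeq]
      simpa using hc
    have hinj : Set.InjOn f ↑Z := by
      intro z hz z' hz' h
      funext i
      have := congrFun (congrArg Prod.fst h) i
      rw [hfeq] at this
      simp only at this
      exact mul_left_cancel₀ hc.ne' this
    have hdisj : (↑(Z.image f) : Set (Box n)).PairwiseDisjoint bset := by
      rintro b hb b' hb' hne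
      rw [Finset.coe_image] at hb hb'
      obtain ⟨z, hz, rfl⟩ := hb
      obtain ⟨z', hz', rfl⟩ := hb'
      have hzz : z ≠ z' := fun h => hne (by rw [h])
      obtain ⟨i, hi⟩ := Function.ne_iff.1 hzz
      obtain ⟨mz, hmz⟩ := hZ z hz i
      obtain ⟨mz', hmz'⟩ := hZ z' hz' i
      show Disjoint (bset (f z)) (bset (f z'))
      rw [Set.disjoint_left]
      intro x hx hx'
      have h1 := hx i (Set.mem_univ i)
      have h2 := hx' i (Set.mem_univ i)
      rw [hfeq] at h1 h2
      simp only [Set.mem_Ico] at h1 h2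
      have hne' : mz ≠ mz' := by
        rintro rfl
        exact hi (by rw [hmz, hmz'])
      rcases lt_or_gt_of_ne hne' with hlt | hlt
      · have : (mz : ℝ) + 1 ≤ (mz' : ℝ) := by exact_mod_cast hlt
        have := h1.2.trans_le (le_trans (by rw [hmz, hmz']; nlinarith) h2.1)
        exact lt_irrefl _ this
      · have : (mz' : ℝ) + 1 ≤ (mz : ℝ) := by exact_mod_cast hlt
        have := h2.2.trans_le (le_trans (by rw [hmz, hmz']; nlinarith) h1.1)
        exact lt_irrefl _ this
    refine ⟨hgood, hdisj, ?_⟩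
    rw [U, vol, measure_biUnion_finset (hdisj.mono_on fun b hb => le_rfl)
      (fun b _ => bset_measurable b)]
    rw [ENNReal.toReal_sum (fun b _ => volume_bset_ne_top b)]
    rw [Finset.sum_image (fun z hz z' hz' h => hinj hz hz' h)]
    have : ∀ z ∈ Z, (volume (bset (f z))).toReal = c ^ n := by
      intro z hz
      show vol (bset (f z)) = c ^ n
      rw [vol_bset (by intro i; rw [hfeq]; simpa using hc)]
      rw [hfeq]
      simp
    rw [Finset.sum_congr rfl this, Finset.sum_const, nsmul_eq_mul]
  obtain ⟨goodF, disjF, volF⟩ := hgen c₁ hc₁ ZK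
    (fun z hz => ((hKfin.mem_toFinset).1 hz).2) fK rfl
  obtain ⟨goodG, disjG, volG⟩ := hgen c₂ hc₂ ZL
    (fun z hz => ((hLfin.mem_toFinset).1 hz).2) fL rfl
  have hFne : F.Nonempty := by
    obtain ⟨z, hz⟩ := hKne
    exact ⟨fK z, Finset.mem_image_of_mem _ (hKfin.mem_toFinset.2 hz)⟩
  have hGne : G.Nonempty := by
    obtain ⟨z, hz⟩ := hLne
    exact ⟨fL z, Finset.mem_image_of_mem _ (hLfin.mem_toFinset.2 hz)⟩
  have hBM := boxBM hn F G hFne hGne goodF goodG disjF disjG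
  -- counting: vol (U F + U G) ≤ #(T ∩ ℤⁿ)
  set D := hTfin.toFinset with hD
  have hcount : U F + U G ⊆ ⋃ m ∈ D, bset (m, m + 1) := by
    rintro u ⟨x, hx, y, hy, rfl⟩
    obtain ⟨bx, hbx, hxb⟩ := Set.mem_iUnion₂.1 hx
    obtain ⟨z, hzZ, rfl⟩ := Finset.mem_image.1 hbx
    obtain ⟨by', hby, hyb⟩ := Set.mem_iUnion₂.1 hy
    obtain ⟨w, hwZ, rfl⟩ := Finset.mem_image.1 hby
    set u := x + y with hu
    set m : Fin n → ℝ := fun i => (⌊u i⌋ : ℝ) with hmdef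
    have hmI : m ∈ intPts n := fun i => ⟨⌊u i⌋, rfl⟩
    have hzK : z ∈ K := ((hKfin.mem_toFinset).1 hzZ).1
    have hwL : w ∈ L := ((hLfin.mem_toFinset).1 hwZ).1
    have hxi : ∀ i, c₁ * z i ≤ x i ∧ x i < c₁ * z i + c₁ := by
      intro i
      have := hxb i (Set.mem_univ i)
      rw [hfK] at this
      exact this
    have hyi : ∀ i, c₂ * w i ≤ y i ∧ y i < c₂ * w i + c₂ := by
      intro i
      have := hyb i (Set.mem_univ i)
      rw [hfL] at this
      exact this
    have hmT : m ∈ T := by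
      have hr : ∀ i, (m - (c₁ • z + c₂ • w)) i ∈ Set.Ioo (-1 : ℝ) 1 := by
        intro i
        have hfl1 : u i - 1 < m i := by
          rw [hmdef]
          simp only
          linarith [Int.sub_one_lt_floor (u i)]
        have hfl2 : m i ≤ u i := by
          rw [hmdef]
          exact Int.floor_le (u i)
        have hui : u i = x i + y i := rfl
        have h1 := (hxi i).1
        have h2 := (hxi i).2
        have h3 := (hyi i).1
        have h4 := (hyi i).2
        simp only [Pi.sub_apply, Pi.add_apply, Pi.smul_apply, smul_eq_mul, Set.mem_Ioo]
        constructor <;> nlinarith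
      have := hsub z hzK w hwL (m - (c₁ • z + c₂ • w)) hr
      simpa using this
    have hmD : m ∈ D := hTfin.mem_toFinset.2 ⟨hmT, hmI⟩
    refine Set.mem_biUnion hmD ?_
    intro i _
    simp only [Pi.add_apply, Pi.one_apply, Set.mem_Ico, hmdef]
    exact ⟨Int.floor_le (u i), Int.lt_floor_add_one (u i)⟩
  have hvolcount : vol (U F + U G) ≤ (D.card : ℝ) := by
    have h1 : volume (U F + U G) ≤ ∑ m ∈ D, volume (bset (m, m + 1)) :=
      le_trans (measure_mono hcount) (measure_biUnion_finset_le D _)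
    have h2 : ∀ m ∈ D, volume (bset ((m : Fin n → ℝ), m + 1)) = 1 := by
      intro m _
      rw [volume_bset]
      simp
    rw [Finset.sum_congr rfl h2, Finset.sum_const, nsmul_eq_mul, mul_one] at h1
    calc vol (U F + U G) ≤ ((D.card : ℝ≥0∞)).toReal := ENNReal.toReal_mono (by simp) h1
      _ = (D.card : ℝ) := by simp
  -- put the three pieces together
  have hcardK : ((K ∩ intPts n).ncard : ℝ) = (ZK.card : ℝ) := by
    rw [Set.ncard_eq_toFinset_card _ hKfin]
  have hcardL : ((L ∩ intPts n).ncard : ℝ) = (ZL.card : ℝ) := by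
    rw [Set.ncard_eq_toFinset_card _ hLfin]
  have hcardT : ((T ∩ intPts n).ncard : ℝ) = (D.card : ℝ) := by
    rw [Set.ncard_eq_toFinset_card _ hTfin]
  rw [hcardK, hcardL, hcardT]
  have e1 : vol (U F) ^ ((n : ℝ))⁻¹ = c₁ * (ZK.card : ℝ) ^ ((n : ℝ))⁻¹ := by
    rw [volF, Real.mul_rpow (Nat.cast_nonneg _) (pow_nonneg hc₁.le n),
      Real.pow_rpow_inv_natCast hc₁.le hn.ne', mul_comm]
  have e2 : vol (U G) ^ ((n : ℝ))⁻¹ = c₂ * (ZL.card : ℝ) ^ ((n : ℝ))⁻¹ := by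
    rw [volG, Real.mul_rpow (Nat.cast_nonneg _) (pow_nonneg hc₂.le n),
      Real.pow_rpow_inv_natCast hc₂.le hn.ne', mul_comm]
  calc (c₁ * (ZK.card : ℝ) ^ ((n : ℝ))⁻¹ + c₂ * (ZL.card : ℝ) ^ ((n : ℝ))⁻¹) ^ n
      = (vol (U F) ^ ((n : ℝ))⁻¹ + vol (U G) ^ ((n : ℝ))⁻¹) ^ n := by rw [e1, e2]
    _ ≤ vol (U F + U G) := hBM
    _ ≤ (D.card : ℝ) := hvolcount


lemma young2 {w₁ w₂ x y : ℝ} (hw₁ : 0 ≤ w₁) (hw₂ : 0 ≤ w₂) (hx : 0 ≤ x) (hy : 0 ≤ y)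
    (hw : w₁ + w₂ = 1) : x ^ w₁ * y ^ w₂ ≤ w₁ * x + w₂ * y := by
  have h := Real.geom_mean_le_arith_mean_weighted Finset.univ ![w₁, w₂] ![x, y]
    (fun i _ => by fin_cases i <;> assumption)
    (by simp [Fin.sum_univ_two, hw])
    (fun i _ => by fin_cases i <;> assumption)
  simpa [Fin.prod_univ_two, Fin.sum_univ_two] using h

lemma cube_bounded : Bornology.IsBounded (cube n (-1) 1) := by
  refine isBounded_iff_forall_norm_le.2 ⟨1, fun x hx => ?_⟩
  refine (pi_norm_le_iff_of_nonneg (by norm_num)).2 fun i => ?_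
  have h := hx i
  rw [Real.norm_eq_abs, abs_le]
  exact ⟨le_of_lt h.1, le_of_lt h.2⟩

lemma pSum_bounded {p : ℝ} (hp : 1 ≤ p) {A B : Set (Fin n → ℝ)} (hA : Bornology.IsBounded A)
    (hB : Bornology.IsBounded B) : Bornology.IsBounded (pSum p A B) := by
  obtain ⟨RA, hRA⟩ := isBounded_iff_forall_norm_le.1 hA
  obtain ⟨RB, hRB⟩ := isBounded_iff_forall_norm_le.1 hB
  refine isBounded_iff_forall_norm_le.2 ⟨max RA 0 + max RB 0, fun w hw => ?_⟩
  have hp0 : 0 < p := by linarith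
  rw [pSum] at hw
  split_ifs at hw with h
  · obtain ⟨x, hx, y, hy, rfl⟩ := hw
    calc ‖x + y‖ ≤ ‖x‖ + ‖y‖ := norm_add_le _ _
      _ ≤ max RA 0 + max RB 0 :=
        add_le_add (le_trans (hRA x hx) (le_max_left _ _))
          (le_trans (hRB y hy) (le_max_left _ _))
  · obtain ⟨x, hx, y, hy, μ, hμ, rfl⟩ := hw
    have he : (0 : ℝ) ≤ 1 - 1 / p := by
      have h1 : 1 / p ≤ 1 := by
        rw [div_le_one hp0]
        exact hp
      linarith
    have hc1 : |((1 - μ) ^ (1 - 1 / p : ℝ) : ℝ)| ≤ 1 := by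
      rw [abs_of_nonneg (Real.rpow_nonneg (by linarith [hμ.2]) _)]
      exact Real.rpow_le_one (by linarith [hμ.2]) (by linarith [hμ.1]) he
    have hc2 : |(μ ^ (1 - 1 / p : ℝ) : ℝ)| ≤ 1 := by
      rw [abs_of_nonneg (Real.rpow_nonneg hμ.1 _)]
      exact Real.rpow_le_one hμ.1 hμ.2 he
    calc ‖((1 - μ) ^ (1 - 1 / p : ℝ) : ℝ) • x + ((μ : ℝ) ^ (1 - 1 / p : ℝ) : ℝ) • y‖
        ≤ ‖((1 - μ) ^ (1 - 1 / p : ℝ) : ℝ) • x‖ + ‖((μ : ℝ) ^ (1 - 1 / p : ℝ) : ℝ) • y‖ :=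
          norm_add_le _ _
      _ = |((1 - μ) ^ (1 - 1 / p : ℝ) : ℝ)| * ‖x‖ + |((μ : ℝ) ^ (1 - 1 / p : ℝ) : ℝ)| * ‖y‖ := by
          rw [norm_smul, norm_smul, Real.norm_eq_abs, Real.norm_eq_abs]
      _ ≤ 1 * max RA 0 + 1 * max RB 0 := by
          refine add_le_add (mul_le_mul hc1 ?_ (norm_nonneg _) zero_le_one)
            (mul_le_mul hc2 ?_ (norm_nonneg _) zero_le_one)
          · exact le_trans (hRA x hx) (le_max_left _ _)
          · exact le_trans (hRB y hy) (le_max_left _ _)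
      _ = max RA 0 + max RB 0 := by ring

end BMaux


/-- Discrete `L_p` Brunn–Minkowski inequality for the lattice point enumerator. -/
theorem discrete_Lp_BrunnMinkowski (n : ℕ) (hn : 1 ≤ n) (lam p : ℝ)
    (hlam : lam ∈ Set.Ioo (0 : ℝ) 1) (hp : 1 ≤ p)
    (K L : Set (Fin n → ℝ)) (hKb : Bornology.IsBounded K) (hLb : Bornology.IsBounded L)
    (hG : 0 < latG K * latG L) :
    (1 - lam) * (latG K : ℝ) ^ (p / (n : ℝ)) + lam * (latG L : ℝ) ^ (p / (n : ℝ)) ≤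
      (latG (pSum p (pSmul p (1 - lam) K) (pSmul p lam L) + cube n (-1) 1) : ℝ) ^ (p / (n : ℝ)) := by
  classical
  have hn0 : 0 < n := hn
  obtain ⟨hl0, hl1⟩ := hlam
  have hapos : 0 < latG K := by
    rcases Nat.eq_zero_or_pos (latG K) with h | h
    · rw [h] at hG; simp at hG
    · exact h
  have hbpos : 0 < latG L := by
    rcases Nat.eq_zero_or_pos (latG L) with h | h
    · rw [h] at hG; simp at hG
    · exact h
  have hKne : (K ∩ intPts n).Nonempty := Set.nonempty_of_ncard_ne_zero hapos.ne'
  have hLne : (L ∩ intPts n).Nonempty := Set.nonempty_of_ncard_ne_zero hbpos.ne'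
  have haR : (0 : ℝ) < (latG K : ℝ) := by exact_mod_cast hapos
  have hbR : (0 : ℝ) < (latG L : ℝ) := by exact_mod_cast hbpos
  set M := pSum p (pSmul p (1 - lam) K) (pSmul p lam L) + cube n (-1) 1 with hM
  have hMb : Bornology.IsBounded M := by
    rw [hM]
    refine Bornology.IsBounded.add (BMaux.pSum_bounded hp ?_ ?_) BMaux.cube_bounded
    · rw [pSmul]; exact hKb.smul₀ _
    · rw [pSmul]; exact hLb.smul₀ _
  have main : ∀ c₁ c₂ : ℝ, 0 < c₁ → 0 < c₂ → c₁ + c₂ ≤ 1 →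
      (∀ x ∈ K, ∀ y ∈ L, ∀ r : Fin n → ℝ, (∀ i, r i ∈ Set.Ioo (-1 : ℝ) 1) →
        c₁ • x + c₂ • y + r ∈ M) →
      (c₁ * (latG K : ℝ) ^ ((n : ℝ))⁻¹ + c₂ * (latG L : ℝ) ^ ((n : ℝ))⁻¹) ^ n ≤
        (latG M : ℝ) :=
    fun c₁ c₂ h1 h2 h3 h4 => BMaux.core hn0 h1 h2 h3 hKb hLb hKne hLne hMb h4
  by_cases hp1 : p = 1
  · subst hp1
    have hMeq : M = (1 - lam) • K + lam • L + cube n (-1) 1 := by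
      rw [hM, pSum, if_pos rfl, pSmul, pSmul]
      norm_num
    have h := main (1 - lam) lam (by linarith) hl0 (by linarith) ?memb
    case memb =>
      intro x hx y hy r hr
      rw [hMeq]
      exact Set.add_mem_add (Set.add_mem_add (Set.smul_mem_smul_set hx)
        (Set.smul_mem_smul_set hy)) hr
    have hone : (1 : ℝ) / (n : ℝ) = ((n : ℝ))⁻¹ := one_div _
    rw [hone]
    set S := (1 - lam) * (latG K : ℝ) ^ ((n : ℝ))⁻¹ + lam * (latG L : ℝ) ^ ((n : ℝ))⁻¹ with hS
    have hSnn : 0 ≤ S :=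
      add_nonneg (mul_nonneg (by linarith) (Real.rpow_nonneg haR.le _))
        (mul_nonneg hl0.le (Real.rpow_nonneg hbR.le _))
    have h2 := Real.rpow_le_rpow (pow_nonneg hSnn n) h (inv_nonneg.2 (Nat.cast_nonneg n))
    rwa [Real.pow_rpow_inv_natCast hSnn hn0.ne'] at h2
  · have hp2 : 1 < p := lt_of_le_of_ne hp (Ne.symm hp1)
    have hp0 : (0 : ℝ) < p := by linarith
    set X := (1 - lam) * (latG K : ℝ) ^ (p / (n : ℝ)) with hXdef
    set Y := lam * (latG L : ℝ) ^ (p / (n : ℝ)) with hYdef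
    have hX : 0 < X := mul_pos (by linarith) (Real.rpow_pos_of_pos haR _)
    have hY : 0 < Y := mul_pos hl0 (Real.rpow_pos_of_pos hbR _)
    set D := X + Y with hDdef
    have hD : 0 < D := by positivity
    have hXYD : X / D + Y / D = 1 := by field_simp; linarith [hDdef]
    have he0 : (0 : ℝ) ≤ 1 - 1 / p := by
      have : 1 / p ≤ 1 := by rw [div_le_one hp0]; exact hp
      linarith
    have h1p : (0 : ℝ) ≤ 1 / p := by positivity
    have hew : (1 - 1 / p) + 1 / p = 1 := by ring
    set c₁ := (X / D) ^ (1 - 1 / p : ℝ) * (1 - lam) ^ (1 / p : ℝ) with hc₁def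
    set c₂ := (Y / D) ^ (1 - 1 / p : ℝ) * lam ^ (1 / p : ℝ) with hc₂def
    have hc₁ : 0 < c₁ :=
      mul_pos (Real.rpow_pos_of_pos (div_pos hX hD) _) (Real.rpow_pos_of_pos (by linarith) _)
    have hc₂ : 0 < c₂ :=
      mul_pos (Real.rpow_pos_of_pos (div_pos hY hD) _) (Real.rpow_pos_of_pos hl0 _)
    have hsum : c₁ + c₂ ≤ 1 := by
      have hy1 := BMaux.young2 he0 h1p (div_pos hX hD).le (by linarith : (0:ℝ) ≤ 1 - lam) hew
      have hy2 := BMaux.young2 he0 h1p (div_pos hY hD).le hl0.le hew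
      calc c₁ + c₂ ≤ ((1 - 1/p) * (X/D) + (1/p) * (1 - lam))
            + ((1 - 1/p) * (Y/D) + (1/p) * lam) := add_le_add hy1 hy2
        _ = (1 - 1/p) * (X/D + Y/D) + 1/p := by ring
        _ = 1 := by rw [hXYD, mul_one, hew]
    have h1μ : 1 - Y / D = X / D := by
      field_simp
      linarith [hDdef]
    have hmemb : ∀ x ∈ K, ∀ y ∈ L, ∀ r : Fin n → ℝ, (∀ i, r i ∈ Set.Ioo (-1 : ℝ) 1) →
        c₁ • x + c₂ • y + r ∈ M := by
      intro x hx y hy r hr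
      rw [hM]
      refine Set.add_mem_add ?_ hr
      rw [pSum, if_neg hp1]
      refine ⟨((1 - lam) ^ (1/p : ℝ)) • x, ?_, (lam ^ (1/p : ℝ)) • y, ?_, Y / D,
        ⟨by positivity, by rw [div_le_one hD]; linarith⟩, ?_⟩
      · rw [pSmul]; exact Set.smul_mem_smul_set hx
      · rw [pSmul]; exact Set.smul_mem_smul_set hy
      · rw [smul_smul, smul_smul, h1μ, hc₁def, hc₂def]
    have h := main c₁ c₂ hc₁ hc₂ hsum hmemb
    -- compute the left-hand side of `h`
    have haRp : (latG K : ℝ) ^ ((n : ℝ))⁻¹ = ((latG K : ℝ) ^ (p / (n : ℝ))) ^ (1/p : ℝ) := by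
      rw [← Real.rpow_mul haR.le]
      congr 1
      field_simp
    have hbRp : (latG L : ℝ) ^ ((n : ℝ))⁻¹ = ((latG L : ℝ) ^ (p / (n : ℝ))) ^ (1/p : ℝ) := by
      rw [← Real.rpow_mul hbR.le]
      congr 1
      field_simp
    have hXc : c₁ * (latG K : ℝ) ^ ((n : ℝ))⁻¹ = X / D ^ (1 - 1/p : ℝ) := by
      rw [hc₁def, haRp, mul_assoc,
        ← Real.mul_rpow (by linarith : (0:ℝ) ≤ 1 - lam) (Real.rpow_nonneg haR.le _), ← hXdef,
        Real.div_rpow hX.le hD.le, div_mul_eq_mul_div, ← Real.rpow_add hX, hew, Real.rpow_one]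
    have hYc : c₂ * (latG L : ℝ) ^ ((n : ℝ))⁻¹ = Y / D ^ (1 - 1/p : ℝ) := by
      rw [hc₂def, hbRp, mul_assoc,
        ← Real.mul_rpow hl0.le (Real.rpow_nonneg hbR.le _), ← hYdef,
        Real.div_rpow hY.le hD.le, div_mul_eq_mul_div, ← Real.rpow_add hY, hew, Real.rpow_one]
    have hkey : c₁ * (latG K : ℝ) ^ ((n : ℝ))⁻¹ + c₂ * (latG L : ℝ) ^ ((n : ℝ))⁻¹ =
        D ^ (1/p : ℝ) := by
      rw [hXc, hYc, ← add_div, ← hDdef,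
        div_eq_iff (Real.rpow_pos_of_pos hD _).ne', ← Real.rpow_add hD]
      norm_num
    rw [hkey] at h
    have h2 : (D ^ (1/p : ℝ)) ^ n = D ^ ((1/p) * (n : ℝ)) := by
      rw [← Real.rpow_natCast (D ^ (1/p : ℝ)) n, ← Real.rpow_mul hD.le]
    rw [h2] at h
    have h3 := Real.rpow_le_rpow (Real.rpow_nonneg hD.le _) h
      (by positivity : (0:ℝ) ≤ p / (n : ℝ))
    rw [← Real.rpow_mul hD.le] at h3
    have h4 : (1/p) * (n : ℝ) * (p / (n : ℝ)) = 1 := by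
      field_simp
    rw [h4, Real.rpow_one] at h3
    exact h3
end

section
/- Let n ≥ 1, λ ∈ (0,1), p ≥ 1 a real number, and m ∈ ℕ. For K = L = [0,m]ⁿ one has G((1-λ)·K +_p λ·L + (-1,1)ⁿ) = (m+1)ⁿ = G(K) = G(L); in particular, equality holds in the discrete L_p Brunn–Minkowski inequality G((1-λ)·K +_p λ·L + (-1,1)ⁿ)^{p/n} ≥ (1-λ)G(K)^{p/n} + λG(L)^{p/n}. -/
open scoped Pointwise

/-- The natural-number points with coordinates at most `m`, as a subset of `ℝⁿ`. -/
def natPts (n m : ℕ) : Set (Fin n → ℝ) :=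
  (fun f : Fin n → Fin (m + 1) => fun i => ((f i : ℕ) : ℝ)) '' Set.univ

lemma mem_natPts_iff {n m : ℕ} (x : Fin n → ℝ) :
    x ∈ natPts n m ↔ ∀ i, ∃ k : ℕ, k ≤ m ∧ x i = k := by
  constructor
  · rintro ⟨f, -, rfl⟩ i
    exact ⟨f i, Nat.lt_succ_iff.mp (f i).isLt, rfl⟩
  · intro h
    choose k hk hx using h
    exact ⟨fun i => ⟨k i, Nat.lt_succ_of_le (hk i)⟩, trivial, by funext i; exact (hx i).symm⟩

lemma ncard_natPts (n m : ℕ) : (natPts n m).ncard = (m + 1) ^ n := by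
  have hinj : Function.Injective (fun f : Fin n → Fin (m + 1) => fun i => ((f i : ℕ) : ℝ)) := by
    intro f g h
    funext i
    have hfi := congrFun h i
    simp only at hfi
    exact Fin.ext (by exact_mod_cast hfi)
  rw [natPts, Set.ncard_image_of_injective _ hinj, Set.ncard_univ, Nat.card_eq_fintype_card]
  simp

lemma young_key {p q : ℝ} (hpq : p.HolderConjugate q) {s t : ℝ} (hs : 0 ≤ s) (ht : 0 ≤ t) :
    t ^ (1 / q : ℝ) * s ^ (1 / p : ℝ) ≤ s / p + t / q := by
  have h1 := Real.young_inequality_of_nonneg (Real.rpow_nonneg hs (1 / p))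
    (Real.rpow_nonneg ht (1 / q)) hpq
  have hsp : ((s ^ (1 / p : ℝ)) ^ p : ℝ) = s := by
    rw [← Real.rpow_mul hs, one_div, inv_mul_cancel₀ hpq.ne_zero, Real.rpow_one]
  have htq : ((t ^ (1 / q : ℝ)) ^ q : ℝ) = t := by
    rw [← Real.rpow_mul ht, one_div, inv_mul_cancel₀ hpq.symm.ne_zero, Real.rpow_one]
  rw [hsp, htq] at h1
  linarith [h1]

lemma young_sum_le_one {p q lam mu : ℝ} (hpq : p.HolderConjugate q)
    (hlam0 : 0 ≤ lam) (hlam1 : lam ≤ 1) (hmu0 : 0 ≤ mu) (hmu1 : mu ≤ 1) :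
    (1 - mu) ^ (1 - 1 / p : ℝ) * (1 - lam) ^ (1 / p : ℝ) +
      mu ^ (1 - 1 / p : ℝ) * lam ^ (1 / p : ℝ) ≤ 1 := by
  have hq : (1 : ℝ) - 1 / p = 1 / q := by
    have := hpq.inv_add_inv_eq_one
    rw [one_div, one_div]; linarith
  rw [hq]
  have k1 := young_key hpq (by linarith : (0:ℝ) ≤ 1 - lam) (by linarith : (0:ℝ) ≤ 1 - mu)
  have k2 := young_key hpq hlam0 hmu0
  have e1 : (1 - lam) / p + lam / p = 1 / p := by rw [← add_div]; norm_num
  have e2 : (1 - mu) / q + mu / q = 1 / q := by rw [← add_div]; norm_num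
  have e3 : 1 / p + 1 / q = 1 := by rw [one_div, one_div]; exact hpq.inv_add_inv_eq_one
  linarith

lemma pSum_box (n : ℕ) (lam p : ℝ) (hlam : lam ∈ Set.Ioo (0 : ℝ) 1) (hp : 1 ≤ p) (m : ℕ) :
    pSum p (pSmul p (1 - lam) (Set.univ.pi fun _ : Fin n => Set.Icc (0 : ℝ) (m : ℝ)))
      (pSmul p lam (Set.univ.pi fun _ : Fin n => Set.Icc (0 : ℝ) (m : ℝ)))
    = Set.univ.pi fun _ : Fin n => Set.Icc (0 : ℝ) (m : ℝ) := by
  obtain ⟨hl0, hl1⟩ := hlam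
  set B : Set (Fin n → ℝ) := Set.univ.pi fun _ : Fin n => Set.Icc (0 : ℝ) (m : ℝ) with hB
  have hmemB : ∀ x : Fin n → ℝ, x ∈ B ↔ ∀ i, 0 ≤ x i ∧ x i ≤ m := by
    intro x
    simp [hB, Set.mem_pi, Set.mem_Icc, Pi.le_def, forall_and]
  rcases eq_or_lt_of_le hp with hp1 | hp1
  · -- p = 1
    subst hp1
    rw [pSum, if_pos rfl]
    have hsm : ∀ t : ℝ, pSmul 1 t B = t • B := by
      intro t; rw [pSmul]; norm_num
    rw [hsm, hsm]
    ext w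
    rw [Set.mem_add]
    constructor
    · rintro ⟨x, hx, y, hy, rfl⟩
      obtain ⟨a, ha, rfl⟩ := hx
      obtain ⟨b, hb, rfl⟩ := hy
      rw [hmemB] at ha hb ⊢
      intro i
      obtain ⟨ha0, ham⟩ := ha i
      obtain ⟨hb0, hbm⟩ := hb i
      have hco : ((1 - lam) • a + lam • b) i = (1 - lam) * a i + lam * b i := by simp
      rw [hco]
      constructor
      · nlinarith
      · nlinarith
    · intro hw
      exact ⟨(1 - lam) • w, Set.smul_mem_smul_set hw, lam • w, Set.smul_mem_smul_set hw, by
        rw [← add_smul]; norm_num⟩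
  · -- 1 < p
    have hp0 : (0:ℝ) < p := by linarith
    have hne : p ≠ 1 := ne_of_gt hp1
    have hpq : p.HolderConjugate (Real.conjExponent p) := Real.HolderConjugate.conjExponent hp1
    rw [pSum, if_neg hne]
    ext w
    constructor
    · rintro ⟨x, hx, y, hy, μ, ⟨hμ0, hμ1⟩, rfl⟩
      rw [pSmul] at hx hy
      obtain ⟨a, ha, rfl⟩ := hx
      obtain ⟨b, hb, rfl⟩ := hy
      rw [hmemB] at ha hb ⊢
      intro i
      obtain ⟨ha0, ham⟩ := ha i
      obtain ⟨hb0, hbm⟩ := hb i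
      have hA : (0:ℝ) ≤ (1 - μ) ^ (1 - 1/p : ℝ) * (1 - lam) ^ (1/p : ℝ) :=
        mul_nonneg (Real.rpow_nonneg (by linarith) _) (Real.rpow_nonneg (by linarith) _)
      have hBc : (0:ℝ) ≤ μ ^ (1 - 1/p : ℝ) * lam ^ (1/p : ℝ) :=
        mul_nonneg (Real.rpow_nonneg hμ0 _) (Real.rpow_nonneg (le_of_lt hl0) _)
      have hAB := young_sum_le_one hpq (le_of_lt hl0) (le_of_lt hl1) hμ0 hμ1
      have hwi : (((1 - μ) ^ (1 - 1/p : ℝ)) • ((1 - lam) ^ (1/p : ℝ) • a)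
          + (μ ^ (1 - 1/p : ℝ)) • (lam ^ (1/p : ℝ) • b)) i
          = ((1 - μ) ^ (1 - 1/p : ℝ) * (1 - lam) ^ (1/p : ℝ)) * a i
            + (μ ^ (1 - 1/p : ℝ) * lam ^ (1/p : ℝ)) * b i := by
        simp [mul_assoc]
      rw [hwi]
      constructor
      · positivity
      · nlinarith [Nat.cast_nonneg (α := ℝ) m]
    · intro hw
      refine ⟨((1 - lam) ^ (1/p : ℝ)) • w, ?_, (lam ^ (1/p : ℝ)) • w, ?_, lam,
        ⟨le_of_lt hl0, le_of_lt hl1⟩, ?_⟩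
      · exact Set.smul_mem_smul_set hw
      · exact Set.smul_mem_smul_set hw
      · rw [smul_smul, smul_smul, ← Real.rpow_add (by linarith : (0:ℝ) < 1 - lam),
          ← Real.rpow_add hl0]
        norm_num
        rw [← add_smul]
        norm_num


lemma box_inter_intPts (n m : ℕ) :
    (Set.univ.pi fun _ : Fin n => Set.Icc (0 : ℝ) (m : ℝ)) ∩ intPts n = natPts n m := by
  ext x
  rw [mem_natPts_iff]
  constructor
  · rintro ⟨hxB, hxI⟩ i
    obtain ⟨k, hk⟩ := hxI i
    have hbd := hxB i (Set.mem_univ i)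
    rw [hk] at hbd
    obtain ⟨h0, h1⟩ := hbd
    have h0' : (0 : ℤ) ≤ k := by exact_mod_cast h0
    have h1' : k ≤ (m : ℤ) := by exact_mod_cast h1
    refine ⟨k.toNat, by omega, ?_⟩
    rw [hk]
    norm_cast
    omega
  · intro h
    constructor
    · intro i _
      obtain ⟨k, hkm, hx⟩ := h i
      rw [hx]
      exact ⟨by positivity, by exact_mod_cast hkm⟩
    · intro i
      obtain ⟨k, _, hx⟩ := h i
      exact ⟨(k : ℤ), by exact_mod_cast hx⟩

lemma sum_cube_inter_intPts (n m : ℕ) :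
    ((Set.univ.pi fun _ : Fin n => Set.Icc (0 : ℝ) (m : ℝ)) + cube n (-1) 1) ∩ intPts n
      = natPts n m := by
  ext x
  rw [mem_natPts_iff]
  constructor
  · rintro ⟨hxS, hxI⟩ i
    rw [Set.mem_add] at hxS
    obtain ⟨a, ha, b, hb, hab⟩ := hxS
    obtain ⟨k, hk⟩ := hxI i
    have hai := ha i (Set.mem_univ i)
    have hbi := hb i
    have hxi : a i + b i = x i := congrFun hab i
    have hlo : (-1 : ℝ) < (k : ℝ) := by rw [← hk, ← hxi]; nlinarith [hai.1, hbi.1]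
    have hhi : (k : ℝ) < (m : ℝ) + 1 := by rw [← hk, ← hxi]; nlinarith [hai.2, hbi.2]
    have hlo' : (-1 : ℤ) < k := by exact_mod_cast hlo
    have hhi' : k < (m : ℤ) + 1 := by exact_mod_cast hhi
    refine ⟨k.toNat, by omega, ?_⟩
    rw [hk]
    norm_cast
    omega
  · intro h
    have hxB : x ∈ Set.univ.pi fun _ : Fin n => Set.Icc (0 : ℝ) (m : ℝ) := by
      intro i _
      obtain ⟨k, hkm, hx⟩ := h i
      rw [hx]
      exact ⟨by positivity, by exact_mod_cast hkm⟩
    refine ⟨Set.mem_add.mpr ⟨x, hxB, 0, fun i => by norm_num, add_zero x⟩, ?_⟩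
    intro i
    obtain ⟨k, _, hx⟩ := h i
    exact ⟨(k : ℤ), by exact_mod_cast hx⟩

/-- Equality holds in the discrete `L_p` Brunn–Minkowski inequality for `K = L = [0,m]ⁿ`. -/
theorem discrete_Lp_BM_equality_case (n : ℕ) (hn : 1 ≤ n) (lam p : ℝ)
    (hlam : lam ∈ Set.Ioo (0 : ℝ) 1) (hp : 1 ≤ p) (m : ℕ) :
    latG (pSum p (pSmul p (1 - lam) (Set.univ.pi fun _ : Fin n => Set.Icc (0 : ℝ) (m : ℝ)))
          (pSmul p lam (Set.univ.pi fun _ : Fin n => Set.Icc (0 : ℝ) (m : ℝ)))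
        + cube n (-1) 1) = (m + 1) ^ n ∧
      latG (Set.univ.pi fun _ : Fin n => Set.Icc (0 : ℝ) (m : ℝ)) = (m + 1) ^ n := by
  rw [pSum_box n lam p hlam hp m]
  constructor
  · rw [latG, sum_cube_inter_intPts, ncard_natPts]
  · rw [latG, box_inter_intPts, ncard_natPts]
end

section
/- Let n ≥ 1, t, s ≥ 0 and let K, L ⊆ ℝⁿ be bounded sets such that G(K)·G(L) > 0. Then G(tK + sL + (-1, ⌈t+s⌉)ⁿ)^{1/n} ≥ t·G(K)^{1/n} + s·G(L)^{1/n}, where tK + sL denotes the Minkowski linear combination {tx + sy : x ∈ K, y ∈ L}. -/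
set_option maxHeartbeats 1000000

open scoped Pointwise

open MeasureTheory Set Finset
open scoped Pointwise
noncomputable section
namespace HOBM
variable {n : ℕ}

def box (l u : Fin n → ℝ) : Set (Fin n → ℝ) := Set.univ.pi fun i => Set.Ico (l i) (u i)

lemma mem_box {l u x : Fin n → ℝ} : x ∈ box l u ↔ ∀ i, l i ≤ x i ∧ x i < u i := by
  simp [box, Set.mem_pi, Set.mem_Ico]

lemma box_measurable (l u : Fin n → ℝ) : MeasurableSet (box l u) :=
  MeasurableSet.univ_pi fun _ => measurableSet_Ico

lemma box_volume (l u : Fin n → ℝ) :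
    volume (box l u) = ∏ i, ENNReal.ofReal (u i - l i) := by
  rw [box, volume_pi_pi]; simp [Real.volume_Ico]

lemma box_volume_lt_top (l u : Fin n → ℝ) : volume (box l u) < ⊤ := by
  rw [box_volume]; exact ENNReal.prod_lt_top (fun i _ => ENNReal.ofReal_lt_top)

lemma Ico_add_Ico {l u l' u' : ℝ} (h : l < u) (h' : l' < u') :
    ∀ x, l + l' ≤ x → x < u + u' → ∃ a b, (l ≤ a ∧ a < u) ∧ (l' ≤ b ∧ b < u') ∧ a + b = x := by
  intro x hx1 hx2
  by_cases hc : x - u' < l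
  · exact ⟨l, x - l, ⟨le_rfl, h⟩, ⟨by linarith, by linarith⟩, by ring⟩
  · push_neg at hc
    refine ⟨min ((x - u' + u)/2) (x - l'), x - min ((x - u' + u)/2) (x - l'), ⟨?_, ?_⟩, ⟨?_, ?_⟩, by ring⟩
    · exact le_min (by linarith) (by linarith)
    · exact lt_of_le_of_lt (min_le_left _ _) (by linarith)
    · have := min_le_right ((x - u' + u)/2) (x - l'); linarith
    · have h1 : x - u' < (x - u' + u)/2 := by linarith
      have := lt_min h1 (show x - u' < x - l' by linarith)
      linarith

lemma box_add_box (l u l' u' : Fin n → ℝ) (h : ∀ i, l i < u i) (h' : ∀ i, l' i < u' i) :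
    box l u + box l' u' = box (l + l') (u + u') := by
  ext x
  constructor
  · rintro ⟨a, ha, b, hb, rfl⟩
    rw [mem_box] at ha hb ⊢
    intro i
    exact ⟨add_le_add (ha i).1 (hb i).1, add_lt_add (ha i).2 (hb i).2⟩
  · intro hx
    rw [mem_box] at hx
    have h1 : ∀ i, ∃ ab : ℝ × ℝ, (l i ≤ ab.1 ∧ ab.1 < u i) ∧ (l' i ≤ ab.2 ∧ ab.2 < u' i)
        ∧ ab.1 + ab.2 = x i := by
      intro i
      obtain ⟨a, b, h1, h2, h3⟩ := Ico_add_Ico (h i) (h' i) (x i) (hx i).1 (hx i).2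
      exact ⟨(a, b), h1, h2, h3⟩
    choose f hf1 hf2 hf3 using h1
    refine ⟨fun i => (f i).1, mem_box.2 hf1, fun i => (f i).2, mem_box.2 hf2, ?_⟩
    funext i; exact hf3 i

abbrev Pr (n : ℕ) := ((Fin n → ℝ) × (Fin n → ℝ))

def U (F : Finset (Pr n)) : Set (Fin n → ℝ) := ⋃ p ∈ F, box p.1 p.2

def good (F : Finset (Pr n)) : Prop := ∀ p ∈ F, ∀ i, p.1 i < p.2 i

def pd (F : Finset (Pr n)) : Prop :=
  (F : Set (Pr n)).Pairwise fun p q => Disjoint (box p.1 p.2) (box q.1 q.2)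

lemma U_measurable (F : Finset (Pr n)) : MeasurableSet (U F) :=
  F.measurableSet_biUnion fun p _ => box_measurable p.1 p.2

lemma volume_U (F : Finset (Pr n)) (hpd : pd F) :
    volume (U F) = ∑ p ∈ F, volume (box p.1 p.2) :=
  measure_biUnion_finset hpd fun p _ => box_measurable p.1 p.2

lemma volume_U_lt_top (F : Finset (Pr n)) : volume (U F) < ⊤ := by
  refine lt_of_le_of_lt (measure_biUnion_finset_le F _) ?_
  exact ENNReal.sum_lt_top.2 fun p _ => box_volume_lt_top p.1 p.2

lemma U_add_U (F G : Finset (Pr n)) (hF : good F) (hG : good G) :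
    U F + U G = ⋃ p ∈ F, ⋃ q ∈ G, box (p.1 + q.1) (p.2 + q.2) := by
  ext x
  rw [Set.mem_add]
  simp only [U, Set.mem_iUnion]
  constructor
  · rintro ⟨a, ha, b, hb, rfl⟩
    obtain ⟨p, hp, hap⟩ := ha
    obtain ⟨q, hq, hbq⟩ := hb
    refine ⟨p, hp, q, hq, ?_⟩
    rw [← box_add_box _ _ _ _ (hF p hp) (hG q hq)]
    exact ⟨a, hap, b, hbq, rfl⟩
  · rintro ⟨p, hp, q, hq, hx⟩
    rw [← box_add_box _ _ _ _ (hF p hp) (hG q hq)] at hx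
    obtain ⟨a, hap, b, hbq, rfl⟩ := hx
    exact ⟨a, ⟨p, hp, hap⟩, b, ⟨q, hq, hbq⟩, rfl⟩

lemma U_add_U_measurable (F G : Finset (Pr n)) (hF : good F) (hG : good G) :
    MeasurableSet (U F + U G) := by
  rw [U_add_U F G hF hG]
  exact F.measurableSet_biUnion fun p _ =>
    G.measurableSet_biUnion fun q _ => box_measurable _ _

lemma U_add_U_lt_top (F G : Finset (Pr n)) (hF : good F) (hG : good G) :
    volume (U F + U G) < ⊤ := by
  rw [U_add_U F G hF hG]
  refine lt_of_le_of_lt (measure_biUnion_finset_le F _) (ENNReal.sum_lt_top.2 fun p _ => ?_)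
  refine lt_of_le_of_lt (measure_biUnion_finset_le G _) (ENNReal.sum_lt_top.2 fun q _ => ?_)
  exact box_volume_lt_top _ _


/-! ### Cutting by a hyperplane -/

def cutLo (i : Fin n) (c : ℝ) (F : Finset (Pr n)) : Finset (Pr n) :=
  (F.filter fun r => r.1 i < c).image fun r => (r.1, Function.update r.2 i (min (r.2 i) c))

def cutHi (i : Fin n) (c : ℝ) (F : Finset (Pr n)) : Finset (Pr n) :=
  (F.filter fun r => c < r.2 i).image fun r => (Function.update r.1 i (max (r.1 i) c), r.2)

lemma box_empty {l u : Fin n → ℝ} {i : Fin n} (h : u i ≤ l i) : box l u = ∅ := by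
  ext x
  simp only [mem_box, Set.mem_empty_iff_false, iff_false, not_forall]
  exact ⟨i, fun hx => absurd (lt_of_lt_of_le hx.2 h) (not_lt.2 hx.1)⟩

lemma box_inter_lo (l u : Fin n → ℝ) (i : Fin n) (c : ℝ) :
    box l u ∩ {x | x i < c} = box l (Function.update u i (min (u i) c)) := by
  ext x
  simp only [Set.mem_inter_iff, mem_box, Set.mem_setOf_eq]
  constructor
  · rintro ⟨h1, h2⟩ j
    rcases eq_or_ne j i with rfl | hj
    · simp only [Function.update_self]
      exact ⟨(h1 j).1, lt_min (h1 j).2 h2⟩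
    · rw [Function.update_of_ne hj]; exact h1 j
  · intro h
    have hi := h i
    rw [Function.update_self] at hi
    refine ⟨fun j => ?_, lt_of_lt_of_le hi.2 (min_le_right _ _)⟩
    rcases eq_or_ne j i with rfl | hj
    · exact ⟨hi.1, lt_of_lt_of_le hi.2 (min_le_left _ _)⟩
    · have := h j; rwa [Function.update_of_ne hj] at this

lemma box_inter_hi (l u : Fin n → ℝ) (i : Fin n) (c : ℝ) :
    box l u ∩ {x | c ≤ x i} = box (Function.update l i (max (l i) c)) u := by
  ext x
  simp only [Set.mem_inter_iff, mem_box, Set.mem_setOf_eq]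
  constructor
  · rintro ⟨h1, h2⟩ j
    rcases eq_or_ne j i with rfl | hj
    · simp only [Function.update_self]
      exact ⟨max_le (h1 j).1 h2, (h1 j).2⟩
    · rw [Function.update_of_ne hj]; exact h1 j
  · intro h
    have hi := h i
    rw [Function.update_self] at hi
    refine ⟨fun j => ?_, le_trans (le_max_right _ _) hi.1⟩
    rcases eq_or_ne j i with rfl | hj
    · exact ⟨le_trans (le_max_left _ _) hi.1, hi.2⟩
    · have := h j; rwa [Function.update_of_ne hj] at this

lemma U_image (s : Finset (Pr n)) (f : Pr n → Pr n) :
    U (s.image f) = ⋃ r ∈ s, box (f r).1 (f r).2 := by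
  ext x
  simp only [U, Set.mem_iUnion, Finset.mem_image]
  constructor
  · rintro ⟨p, ⟨r, hr, rfl⟩, hx⟩
    exact ⟨r, hr, hx⟩
  · rintro ⟨r, hr, hx⟩
    exact ⟨f r, ⟨r, hr, rfl⟩, hx⟩

lemma U_cutLo (i : Fin n) (c : ℝ) (F : Finset (Pr n)) :
    U (cutLo i c F) = U F ∩ {x | x i < c} := by
  rw [cutLo, U_image]
  have h2 : U F ∩ {x | x i < c} = ⋃ r ∈ F, (box r.1 r.2 ∩ {x | x i < c}) := by
    rw [U, Set.iUnion₂_inter]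
  rw [h2]
  ext x
  simp only [Set.mem_iUnion, Finset.mem_filter]
  constructor
  · rintro ⟨r, ⟨hr, _⟩, hx⟩
    exact ⟨r, hr, by rwa [box_inter_lo]⟩
  · rintro ⟨r, hr, hx⟩
    rw [box_inter_lo] at hx
    refine ⟨r, ⟨hr, ?_⟩, hx⟩
    by_contra hc
    push_neg at hc
    have : Function.update r.2 i (min (r.2 i) c) i ≤ r.1 i := by
      rw [Function.update_self]; exact le_trans (min_le_right _ _) hc
    rw [box_empty this] at hx
    exact hx

lemma U_cutHi (i : Fin n) (c : ℝ) (F : Finset (Pr n)) :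
    U (cutHi i c F) = U F ∩ {x | c ≤ x i} := by
  rw [cutHi, U_image]
  have h2 : U F ∩ {x | c ≤ x i} = ⋃ r ∈ F, (box r.1 r.2 ∩ {x | c ≤ x i}) := by
    rw [U, Set.iUnion₂_inter]
  rw [h2]
  ext x
  simp only [Set.mem_iUnion, Finset.mem_filter]
  constructor
  · rintro ⟨r, ⟨hr, _⟩, hx⟩
    exact ⟨r, hr, by rwa [box_inter_hi]⟩
  · rintro ⟨r, hr, hx⟩
    rw [box_inter_hi] at hx
    refine ⟨r, ⟨hr, ?_⟩, hx⟩
    by_contra hc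
    push_neg at hc
    have : r.2 i ≤ Function.update r.1 i (max (r.1 i) c) i := by
      rw [Function.update_self]; exact le_trans hc (le_max_right _ _)
    rw [box_empty this] at hx
    exact hx

lemma good_cutLo {i : Fin n} {c : ℝ} {F : Finset (Pr n)} (hF : good F) :
    good (cutLo i c F) := by
  rintro p hp j
  simp only [cutLo, Finset.mem_image, Finset.mem_filter] at hp
  obtain ⟨r, ⟨hr, hric⟩, rfl⟩ := hp
  dsimp only
  rcases eq_or_ne j i with rfl | hj
  · simp only [Function.update_self]
    exact lt_min (hF r hr j) hric
  · rw [Function.update_of_ne hj]; exact hF r hr j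

lemma good_cutHi {i : Fin n} {c : ℝ} {F : Finset (Pr n)} (hF : good F) :
    good (cutHi i c F) := by
  rintro p hp j
  simp only [cutHi, Finset.mem_image, Finset.mem_filter] at hp
  obtain ⟨r, ⟨hr, hric⟩, rfl⟩ := hp
  dsimp only
  rcases eq_or_ne j i with rfl | hj
  · simp only [Function.update_self]
    exact max_lt (hF r hr j) hric
  · rw [Function.update_of_ne hj]; exact hF r hr j

lemma box_cutLo_subset {r : Pr n} {i : Fin n} {c : ℝ} :
    box r.1 (Function.update r.2 i (min (r.2 i) c)) ⊆ box r.1 r.2 := by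
  rw [← box_inter_lo]; exact Set.inter_subset_left

lemma box_cutHi_subset {r : Pr n} {i : Fin n} {c : ℝ} :
    box (Function.update r.1 i (max (r.1 i) c)) r.2 ⊆ box r.1 r.2 := by
  rw [← box_inter_hi]; exact Set.inter_subset_left

lemma pd_image_aux {F : Finset (Pr n)} (hF : pd F) (f : Pr n → Pr n)
    (hsub : ∀ r, box (f r).1 (f r).2 ⊆ box r.1 r.2) :
    pd (F.image f) := by
  intro p hp q hq hpq
  simp only [Finset.coe_image, Set.mem_image, Finset.mem_coe] at hp hq
  obtain ⟨r, hr, rfl⟩ := hp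
  obtain ⟨r', hr', rfl⟩ := hq
  have hrr' : r ≠ r' := fun h => hpq (by rw [h])
  exact Set.disjoint_of_subset (hsub r) (hsub r') (hF hr hr' hrr')

lemma pd_cutLo {i : Fin n} {c : ℝ} {F : Finset (Pr n)} (hF : pd F) :
    pd (cutLo i c F) :=
  pd_image_aux (hF.mono (by exact_mod_cast Finset.filter_subset _ F)) _
    fun r => box_cutLo_subset (r := r)

lemma pd_cutHi {i : Fin n} {c : ℝ} {F : Finset (Pr n)} (hF : pd F) :
    pd (cutHi i c F) :=
  pd_image_aux (hF.mono (by exact_mod_cast Finset.filter_subset _ F)) _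
    fun r => box_cutHi_subset (r := r)

lemma volume_split (F : Finset (Pr n)) (i : Fin n) (c : ℝ) :
    volume (U F) = volume (U (cutLo i c F)) + volume (U (cutHi i c F)) := by
  rw [U_cutLo, U_cutHi]
  have hm : MeasurableSet {x : Fin n → ℝ | x i < c} :=
    measurableSet_lt (measurable_pi_apply i) measurable_const
  have hdiff : U F \ {x | x i < c} = U F ∩ {x | c ≤ x i} := by
    ext x; simp [not_lt]
  rw [← measure_inter_add_diff (U F) hm, hdiff]


lemma box_nonempty {l u : Fin n → ℝ} (h : ∀ i, l i < u i) : (box l u).Nonempty :=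
  ⟨l, mem_box.2 fun i => ⟨le_rfl, h i⟩⟩

lemma box_subset_U {F : Finset (Pr n)} {r : Pr n} (hr : r ∈ F) : box r.1 r.2 ⊆ U F :=
  fun x hx => Set.mem_biUnion hr hx

lemma box_volume_pos {l u : Fin n → ℝ} (h : ∀ i, l i < u i) : 0 < volume (box l u) := by
  rw [box_volume]
  refine CanonicallyOrderedAdd.prod_pos.2 fun i _ => ?_
  rw [ENNReal.ofReal_pos]
  linarith [h i]

lemma card_cutLo_le (i : Fin n) (c : ℝ) (F : Finset (Pr n)) :
    (cutLo i c F).card ≤ F.card :=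
  le_trans Finset.card_image_le (Finset.card_filter_le _ _)

lemma card_cutHi_le (i : Fin n) (c : ℝ) (F : Finset (Pr n)) :
    (cutHi i c F).card ≤ F.card :=
  le_trans Finset.card_image_le (Finset.card_filter_le _ _)

lemma card_cutLo_lt {i : Fin n} {c : ℝ} {F : Finset (Pr n)} {q : Pr n}
    (hq : q ∈ F) (h : c ≤ q.1 i) : (cutLo i c F).card < F.card := by
  refine lt_of_le_of_lt (le_trans Finset.card_image_le (Finset.card_le_card ?_))
    (Finset.card_erase_lt_of_mem hq)
  intro r hr
  rw [Finset.mem_filter] at hr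
  rw [Finset.mem_erase]
  refine ⟨fun hrq => ?_, hr.1⟩
  rw [hrq] at hr
  exact absurd hr.2 (not_lt.2 h)

lemma card_cutHi_lt {i : Fin n} {c : ℝ} {F : Finset (Pr n)} {p : Pr n}
    (hp : p ∈ F) (h : p.2 i ≤ c) : (cutHi i c F).card < F.card := by
  refine lt_of_le_of_lt (le_trans Finset.card_image_le (Finset.card_le_card ?_))
    (Finset.card_erase_lt_of_mem hp)
  intro r hr
  rw [Finset.mem_filter] at hr
  rw [Finset.mem_erase]
  refine ⟨fun hrp => ?_, hr.1⟩
  rw [hrp] at hr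
  exact absurd hr.2 (not_lt.2 h)

lemma cutLo_nonempty {i : Fin n} {c : ℝ} {F : Finset (Pr n)} {p : Pr n}
    (hp : p ∈ F) (h : p.1 i < c) : (cutLo i c F).Nonempty :=
  Finset.Nonempty.image ⟨p, Finset.mem_filter.2 ⟨hp, h⟩⟩ _

lemma cutHi_nonempty {i : Fin n} {c : ℝ} {F : Finset (Pr n)} {q : Pr n}
    (hq : q ∈ F) (h : c < q.2 i) : (cutHi i c F).Nonempty :=
  Finset.Nonempty.image ⟨q, Finset.mem_filter.2 ⟨hq, h⟩⟩ _

lemma exists_sep {F : Finset (Pr n)} (hpd : pd F) (hg : good F) {p q : Pr n}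
    (hp : p ∈ F) (hq : q ∈ F) (hpq : p ≠ q) :
    ∃ i, p.2 i ≤ q.1 i ∨ q.2 i ≤ p.1 i := by
  by_contra hc
  push_neg at hc
  have hx : (fun j => max (p.1 j) (q.1 j)) ∈ box p.1 p.2 ∩ box q.1 q.2 := by
    constructor
    · rw [mem_box]
      intro j
      exact ⟨le_max_left _ _, max_lt (hg p hp j) (hc j).1⟩
    · rw [mem_box]
      intro j
      exact ⟨le_max_right _ _, max_lt (hc j).2 (hg q hq j)⟩
  exact Set.disjoint_iff.1 (hpd hp hq hpq) hx

/-! ### volume of the lower cut as a function of `c` -/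

lemma cutLo_box_eq {r : Pr n} {i : Fin n} {c : ℝ} (h : r.2 i ≤ c) :
    (r.1, Function.update r.2 i (min (r.2 i) c)) = r := by
  rw [min_eq_left h, Function.update_eq_self]

lemma cutLo_top {i : Fin n} {c : ℝ} {F : Finset (Pr n)} (hg : good F)
    (h : ∀ r ∈ F, r.2 i ≤ c) : cutLo i c F = F := by
  have h1 : F.filter (fun r => r.1 i < c) = F := by
    refine Finset.filter_true_of_mem fun r hr => lt_of_lt_of_le (hg r hr i) (h r hr)
  rw [cutLo, h1]
  have : ∀ r ∈ F, (r.1, Function.update r.2 i (min (r.2 i) c)) = r :=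
    fun r hr => cutLo_box_eq (h r hr)
  calc F.image _ = F.image id := Finset.image_congr fun r hr => this r hr
  _ = F := Finset.image_id

lemma cutLo_bot {i : Fin n} {c : ℝ} {F : Finset (Pr n)}
    (h : ∀ r ∈ F, c ≤ r.1 i) : cutLo i c F = ∅ := by
  rw [cutLo, Finset.filter_false_of_mem, Finset.image_empty]
  intro r hr
  exact not_lt.2 (h r hr)

lemma volume_U_cutLo (i : Fin n) (c : ℝ) (F : Finset (Pr n)) (hg : good F) (hpd : pd F) :
    volume (U (cutLo i c F)) =
      ∑ r ∈ F, ∏ j, ENNReal.ofReal (Function.update r.2 i (min (r.2 i) c) j - r.1 j) := by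
  rw [volume_U _ (pd_cutLo hpd), cutLo]
  rw [Finset.sum_image]
  · rw [← Finset.sum_filter_add_sum_filter_not F (fun r => r.1 i < c)]
    have h0 : ∑ r ∈ F.filter (fun r => ¬ r.1 i < c), ∏ j,
        ENNReal.ofReal (Function.update r.2 i (min (r.2 i) c) j - r.1 j) = 0 := by
      refine Finset.sum_eq_zero fun r hr => ?_
      rw [Finset.mem_filter] at hr
      refine Finset.prod_eq_zero (Finset.mem_univ i) ?_
      rw [Function.update_self, ENNReal.ofReal_eq_zero]
      have := not_lt.1 hr.2
      have := min_le_right (r.2 i) c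
      linarith
    rw [h0, add_zero]
    refine Finset.sum_congr rfl fun r _ => ?_
    rw [box_volume]
  · intro r hr r' hr' heq
    rw [Finset.mem_coe, Finset.mem_filter] at hr hr'
    by_contra hne
    have hgood : ∀ j, r.1 j < Function.update r.2 i (min (r.2 i) c) j := by
      intro j
      rcases eq_or_ne j i with rfl | hj
      · rw [Function.update_self]; exact lt_min (hg r hr.1 j) hr.2
      · rw [Function.update_of_ne hj]; exact hg r hr.1 j
    have hne' : (box r.1 (Function.update r.2 i (min (r.2 i) c))).Nonempty :=
      box_nonempty hgood
    have hdisj : Disjoint (box r.1 r.2) (box r'.1 r'.2) := hpd hr.1 hr'.1 hne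
    have hsub1 : box r.1 (Function.update r.2 i (min (r.2 i) c)) ⊆ box r.1 r.2 :=
      box_cutLo_subset (r := r)
    have hsub2 : box r'.1 (Function.update r'.2 i (min (r'.2 i) c)) ⊆ box r'.1 r'.2 :=
      box_cutLo_subset (r := r')
    have heq' : box r.1 (Function.update r.2 i (min (r.2 i) c)) =
        box r'.1 (Function.update r'.2 i (min (r'.2 i) c)) := by
      have h1 : (r.1, Function.update r.2 i (min (r.2 i) c)).1 = r.1 := rfl
      have e1 := congrArg Prod.fst heq
      have e2 := congrArg Prod.snd heq
      simp only at e1 e2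
      rw [e1, e2]
    obtain ⟨x, hx⟩ := hne'
    exact Set.disjoint_iff.1 (Set.disjoint_of_subset hsub1 hsub2 hdisj)
      ⟨hx, heq' ▸ hx⟩

def gfun (i : Fin n) (F : Finset (Pr n)) (c : ℝ) : ℝ :=
  ∑ r ∈ F, ∏ j, max (Function.update r.2 i (min (r.2 i) c) j - r.1 j) 0

lemma gfun_eq (i : Fin n) (F : Finset (Pr n)) (hg : good F) (hpd : pd F) (c : ℝ) :
    gfun i F c = (volume (U (cutLo i c F))).toReal := by
  rw [volume_U_cutLo i c F hg hpd, ENNReal.toReal_sum]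
  · refine Finset.sum_congr rfl fun r _ => ?_
    rw [ENNReal.toReal_prod]
    exact Finset.prod_congr rfl fun j _ => ENNReal.toReal_ofReal'.symm
  · intro r _
    exact (ENNReal.prod_lt_top fun j _ => ENNReal.ofReal_lt_top).ne

lemma gfun_continuous (i : Fin n) (F : Finset (Pr n)) : Continuous (gfun i F) := by
  refine continuous_finset_sum _ fun r _ => continuous_finset_prod _ fun j _ => ?_
  rcases eq_or_ne j i with rfl | hj
  · simp only [Function.update_self]
    exact ((continuous_const.min continuous_id).sub continuous_const).max continuous_const
  · simp only [Function.update_of_ne hj]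
    exact continuous_const


lemma prodBM (hn : 0 < n) (x y : Fin n → ℝ) (hx : ∀ i, 0 < x i) (hy : ∀ i, 0 < y i) :
    (∏ i, x i) ^ (1/(n:ℝ)) + (∏ i, y i) ^ (1/(n:ℝ)) ≤ (∏ i, (x i + y i)) ^ (1/(n:ℝ)) := by
  have hz : ∀ i, 0 < x i + y i := fun i => add_pos (hx i) (hy i)
  have hn' : (0:ℝ) < n := Nat.cast_pos.2 hn
  have hw : ∑ _i : Fin n, (1/(n:ℝ)) = 1 := by
    rw [Finset.sum_const, Finset.card_univ, Fintype.card_fin, nsmul_eq_mul]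
    field_simp
  have hPz : 0 < ∏ i, (x i + y i) := Finset.prod_pos fun i _ => hz i
  have hPx : 0 < ∏ i, x i := Finset.prod_pos fun i _ => hx i
  have hPy : 0 < ∏ i, y i := Finset.prod_pos fun i _ => hy i
  have A := Real.geom_mean_le_arith_mean_weighted Finset.univ (fun _ => 1/(n:ℝ))
    (fun i => x i / (x i + y i)) (fun i _ => by positivity) hw
    (fun i _ => le_of_lt (div_pos (hx i) (hz i)))
  have B := Real.geom_mean_le_arith_mean_weighted Finset.univ (fun _ => 1/(n:ℝ))
    (fun i => y i / (x i + y i)) (fun i _ => by positivity) hw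
    (fun i _ => le_of_lt (div_pos (hy i) (hz i)))
  have hsum : (∑ i, (1/(n:ℝ)) * (x i / (x i + y i))) + (∑ i, (1/(n:ℝ)) * (y i / (x i + y i)))
      = 1 := by
    rw [← Finset.sum_add_distrib]
    calc ∑ i, ((1/(n:ℝ)) * (x i / (x i + y i)) + (1/(n:ℝ)) * (y i / (x i + y i)))
        = ∑ _i : Fin n, (1/(n:ℝ)) := Finset.sum_congr rfl fun i _ => by
          rw [← mul_add, ← add_div, div_self (ne_of_gt (hz i)), mul_one]
    _ = 1 := hw
  have hxr : ∏ i, (x i / (x i + y i)) ^ (1/(n:ℝ))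
      = (∏ i, x i) ^ (1/(n:ℝ)) / (∏ i, (x i + y i)) ^ (1/(n:ℝ)) := by
    rw [Real.finset_prod_rpow Finset.univ _ (fun i _ => le_of_lt (div_pos (hx i) (hz i))),
      Finset.prod_div_distrib, Real.div_rpow hPx.le hPz.le]
  have hyr : ∏ i, (y i / (x i + y i)) ^ (1/(n:ℝ))
      = (∏ i, y i) ^ (1/(n:ℝ)) / (∏ i, (x i + y i)) ^ (1/(n:ℝ)) := by
    rw [Real.finset_prod_rpow Finset.univ _ (fun i _ => le_of_lt (div_pos (hy i) (hz i))),
      Finset.prod_div_distrib, Real.div_rpow hPy.le hPz.le]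
  have key : (∏ i, x i) ^ (1/(n:ℝ)) / (∏ i, (x i + y i)) ^ (1/(n:ℝ))
      + (∏ i, y i) ^ (1/(n:ℝ)) / (∏ i, (x i + y i)) ^ (1/(n:ℝ)) ≤ 1 := by
    rw [← hxr, ← hyr]
    calc _ ≤ (∑ i, (1/(n:ℝ)) * (x i / (x i + y i)))
        + (∑ i, (1/(n:ℝ)) * (y i / (x i + y i))) := add_le_add A B
    _ = 1 := hsum
  have hc : 0 < (∏ i, (x i + y i)) ^ (1/(n:ℝ)) := Real.rpow_pos_of_pos hPz _
  rw [← add_div, div_le_one hc] at key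
  exact key


lemma rvol_U_pos {F : Finset (Pr n)} (hne : F.Nonempty) (hg : good F) :
    0 < (volume (U F)).toReal := by
  obtain ⟨r, hr⟩ := hne
  refine ENNReal.toReal_pos (ne_of_gt ?_) (volume_U_lt_top F).ne
  exact lt_of_lt_of_le (box_volume_pos (hg r hr)) (measure_mono (box_subset_U hr))

lemma rpow_cancel (hn : 0 < n) {a : ℝ} (ha : 0 ≤ a) : (a ^ (1/(n:ℝ))) ^ (n:ℝ) = a := by
  have hne : (n:ℝ) ≠ 0 := Nat.cast_ne_zero.2 hn.ne'
  rw [← Real.rpow_mul ha, one_div, inv_mul_cancel₀ hne, Real.rpow_one]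

lemma rpow_cancel' (hn : 0 < n) {a : ℝ} (ha : 0 ≤ a) : (a ^ (n:ℝ)) ^ (1/(n:ℝ)) = a := by
  have hne : (n:ℝ) ≠ 0 := Nat.cast_ne_zero.2 hn.ne'
  rw [← Real.rpow_mul ha, one_div, mul_inv_cancel₀ hne, Real.rpow_one]

theorem HO_induct (hn : 0 < n) (k : ℕ) : ∀ (F G : Finset (Pr n)), F.card + G.card ≤ k →
    F.Nonempty → G.Nonempty → good F → good G → pd F → pd G →
    (volume (U F)).toReal ^ (1/(n:ℝ)) + (volume (U G)).toReal ^ (1/(n:ℝ)) ≤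
      (volume (U F + U G)).toReal ^ (1/(n:ℝ)) := by
  induction k with
  | zero =>
    intro F G hk hFne _ _ _ _ _
    exfalso
    have := Finset.card_pos.2 hFne
    omega
  | succ k IH =>
    intro F G hk hFne hGne hgF hgG hpF hpG
    -- the asymmetric splitting step, assuming `2 ≤ F.card`
    have step : ∀ (F G : Finset (Pr n)), F.card + G.card ≤ k + 1 →
        F.Nonempty → G.Nonempty → good F → good G → pd F → pd G → 2 ≤ F.card →
        (volume (U F)).toReal ^ (1/(n:ℝ)) + (volume (U G)).toReal ^ (1/(n:ℝ)) ≤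
          (volume (U F + U G)).toReal ^ (1/(n:ℝ)) := by
      clear hk hFne hGne hgF hgG hpF hpG F G
      intro F G hk hFne hGne hgF hgG hpF hpG hF2
      obtain ⟨p, hp, q, hq, hpq⟩ := Finset.one_lt_card.1 hF2
      have key : ∀ (p q : Pr n), p ∈ F → q ∈ F → p ≠ q → ∀ i, p.2 i ≤ q.1 i →
          (volume (U F)).toReal ^ (1/(n:ℝ)) + (volume (U G)).toReal ^ (1/(n:ℝ)) ≤
            (volume (U F + U G)).toReal ^ (1/(n:ℝ)) := by
        clear hpq hp hq p q
        intro p q hp hq hpq i hsep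
        set c := p.2 i with hc
        set Flo := cutLo i c F with hFlo
        set Fhi := cutHi i c F with hFhi
        have hFlo_ne : Flo.Nonempty := cutLo_nonempty hp (hgF p hp i)
        have hFhi_ne : Fhi.Nonempty := cutHi_nonempty hq (lt_of_le_of_lt hsep (hgF q hq i))
        have hgFlo : good Flo := good_cutLo hgF
        have hgFhi : good Fhi := good_cutHi hgF
        have hpFlo : pd Flo := pd_cutLo hpF
        have hpFhi : pd Fhi := pd_cutHi hpF
        set vF := (volume (U F)).toReal with hvF
        set vFlo := (volume (U Flo)).toReal with hvFlo
        set vFhi := (volume (U Fhi)).toReal with hvFhi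
        have hvsplitF : vF = vFlo + vFhi := by
          rw [hvF, hvFlo, hvFhi, hFlo, hFhi, volume_split F i c,
            ENNReal.toReal_add (volume_U_lt_top _).ne (volume_U_lt_top _).ne]
        have hvFlo_pos : 0 < vFlo := rvol_U_pos hFlo_ne hgFlo
        have hvFhi_pos : 0 < vFhi := rvol_U_pos hFhi_ne hgFhi
        have hvF_pos : 0 < vF := by rw [hvsplitF]; linarith
        set θ := vFlo / vF with hθ
        have hθ_pos : 0 < θ := div_pos hvFlo_pos hvF_pos
        have hθ_lt1 : θ < 1 := by
          rw [hθ, div_lt_one hvF_pos]; linarith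
        have hθF : vFlo = θ * vF := by
          rw [hθ]; field_simp
        have hθF' : vFhi = (1 - θ) * vF := by
          rw [sub_mul, one_mul, ← hθF]; linarith
        -- IVT on G
        set vG := (volume (U G)).toReal with hvG
        have hvG_pos : 0 < vG := rvol_U_pos hGne hgG
        set m := G.inf' hGne (fun r => r.1 i) with hm
        set M := G.sup' hGne (fun r => r.2 i) with hM
        have hmM : m ≤ M := by
          obtain ⟨r, hr⟩ := hGne
          calc m ≤ r.1 i := Finset.inf'_le _ hr
          _ ≤ r.2 i := (hgG r hr i).le
          _ ≤ M := Finset.le_sup' (fun r => r.2 i) hr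
        have hgm : gfun i G m = 0 := by
          rw [gfun_eq i G hgG hpG, cutLo_bot (fun r hr => Finset.inf'_le _ hr)]
          simp [U]
        have hgM : gfun i G M = vG := by
          rw [gfun_eq i G hgG hpG, cutLo_top hgG (fun r hr => Finset.le_sup' (fun r => r.2 i) hr), hvG]
        have hmem : θ * vG ∈ Set.Icc (gfun i G m) (gfun i G M) := by
          rw [hgm, hgM]
          constructor
          · positivity
          · nlinarith
        obtain ⟨c', _, hc'⟩ := intermediate_value_Icc hmM (gfun_continuous i G).continuousOn hmem
        set Glo := cutLo i c' G with hGlo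
        set Ghi := cutHi i c' G with hGhi
        have hvGlo : (volume (U Glo)).toReal = θ * vG := by
          rw [hGlo, ← gfun_eq i G hgG hpG, hc']
        have hvGhi : (volume (U Ghi)).toReal = (1 - θ) * vG := by
          have h3 : (volume (U G)).toReal
              = (volume (U Glo)).toReal + (volume (U Ghi)).toReal := by
            rw [hGlo, hGhi, volume_split G i c',
              ENNReal.toReal_add (volume_U_lt_top _).ne (volume_U_lt_top _).ne]
          rw [← hvG] at h3
          rw [hvGlo] at h3
          linarith
        have hGlo_ne : Glo.Nonempty := by
          rw [Finset.nonempty_iff_ne_empty]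
          intro h
          rw [h] at hvGlo
          simp [U] at hvGlo
          rcases hvGlo with h' | h' <;> linarith
        have hGhi_ne : Ghi.Nonempty := by
          rw [Finset.nonempty_iff_ne_empty]
          intro h
          rw [h] at hvGhi
          simp [U] at hvGhi
          rcases hvGhi with h' | h' <;> linarith
        have hgGlo : good Glo := good_cutLo hgG
        have hgGhi : good Ghi := good_cutHi hgG
        have hpGlo : pd Glo := pd_cutLo hpG
        have hpGhi : pd Ghi := pd_cutHi hpG
        -- cardinalities
        have hcard_lo : Flo.card + Glo.card ≤ k := by
          have h1 : Flo.card < F.card := card_cutLo_lt hq hsep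
          have h2 : Glo.card ≤ G.card := card_cutLo_le _ _ _
          omega
        have hcard_hi : Fhi.card + Ghi.card ≤ k := by
          have h1 : Fhi.card < F.card := card_cutHi_lt hp le_rfl
          have h2 : Ghi.card ≤ G.card := card_cutHi_le _ _ _
          omega
        -- apply induction hypothesis
        have IHlo := IH Flo Glo hcard_lo hFlo_ne hGlo_ne hgFlo hgGlo hpFlo hpGlo
        have IHhi := IH Fhi Ghi hcard_hi hFhi_ne hGhi_ne hgFhi hgGhi hpFhi hpGhi
        -- the sums are disjoint pieces of U F + U G
        have hlo_sub : U Flo + U Glo ⊆ (U F + U G) ∩ {x | x i < c + c'} := by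
          intro x hx
          rw [Set.mem_add] at hx
          obtain ⟨a, ha, b, hb, rfl⟩ := hx
          rw [hFlo, U_cutLo] at ha
          rw [hGlo, U_cutLo] at hb
          rw [Set.mem_inter_iff, Set.mem_add]
          refine ⟨⟨a, ha.1, b, hb.1, rfl⟩, ?_⟩
          have h1 := ha.2
          have h2 := hb.2
          simp only [Set.mem_setOf_eq] at h1 h2 ⊢
          exact add_lt_add h1 h2
        have hhi_sub : U Fhi + U Ghi ⊆ (U F + U G) ∩ {x | c + c' ≤ x i} := by
          intro x hx
          rw [Set.mem_add] at hx
          obtain ⟨a, ha, b, hb, rfl⟩ := hx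
          rw [hFhi, U_cutHi] at ha
          rw [hGhi, U_cutHi] at hb
          rw [Set.mem_inter_iff, Set.mem_add]
          refine ⟨⟨a, ha.1, b, hb.1, rfl⟩, ?_⟩
          have h1 := ha.2
          have h2 := hb.2
          simp only [Set.mem_setOf_eq] at h1 h2 ⊢
          exact add_le_add h1 h2
        have hdisj : Disjoint (U Flo + U Glo) (U Fhi + U Ghi) := by
          refine Set.disjoint_of_subset hlo_sub hhi_sub ?_
          refine Set.disjoint_of_subset Set.inter_subset_right Set.inter_subset_right ?_
          rw [Set.disjoint_iff]
          rintro x ⟨h1, h2⟩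
          simp only [Set.mem_setOf_eq] at h1 h2
          exact absurd h1 (not_lt.2 h2)
        have hmeas : volume (U Flo + U Glo) + volume (U Fhi + U Ghi) ≤ volume (U F + U G) := by
          rw [← measure_union hdisj (U_add_U_measurable Fhi Ghi hgFhi hgGhi)]
          refine measure_mono ?_
          refine Set.union_subset (le_trans hlo_sub Set.inter_subset_left)
            (le_trans hhi_sub Set.inter_subset_left)
        set T := (volume (U F + U G)).toReal with hT
        set Llo := (volume (U Flo + U Glo)).toReal with hLlo
        set Lhi := (volume (U Fhi + U Ghi)).toReal with hLhi
        have hsum_real : Llo + Lhi ≤ T := by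
          rw [hLlo, hLhi, hT, ← ENNReal.toReal_add (U_add_U_lt_top _ _ hgFlo hgGlo).ne
            (U_add_U_lt_top _ _ hgFhi hgGhi).ne]
          exact ENNReal.toReal_mono (U_add_U_lt_top _ _ hgF hgG).ne hmeas
        set S := vF ^ (1/(n:ℝ)) + vG ^ (1/(n:ℝ)) with hS
        have hS_pos : 0 < S := by
          have := Real.rpow_pos_of_pos hvF_pos (1/(n:ℝ))
          have := Real.rpow_pos_of_pos hvG_pos (1/(n:ℝ))
          rw [hS]; linarith
        -- lower bounds
        have hLlo_ge : θ * S ^ (n:ℝ) ≤ Llo := by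
          have h1 : θ ^ (1/(n:ℝ)) * S ≤ Llo ^ (1/(n:ℝ)) := by
            calc θ ^ (1/(n:ℝ)) * S
                = (θ * vF) ^ (1/(n:ℝ)) + (θ * vG) ^ (1/(n:ℝ)) := by
                  rw [hS, mul_add, ← Real.mul_rpow hθ_pos.le hvF_pos.le,
                    ← Real.mul_rpow hθ_pos.le hvG_pos.le]
            _ ≤ Llo ^ (1/(n:ℝ)) := by rw [← hθF, ← hvGlo]; exact IHlo
          have h2 := Real.rpow_le_rpow
            (mul_nonneg (Real.rpow_nonneg hθ_pos.le _) hS_pos.le) h1 (Nat.cast_nonneg n)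
          rw [rpow_cancel hn ENNReal.toReal_nonneg] at h2
          calc θ * S ^ (n:ℝ) = (θ ^ (1/(n:ℝ)) * S) ^ (n:ℝ) := by
                rw [Real.mul_rpow (Real.rpow_nonneg hθ_pos.le _) hS_pos.le,
                  rpow_cancel hn hθ_pos.le]
          _ ≤ Llo := h2
        have hLhi_ge : (1 - θ) * S ^ (n:ℝ) ≤ Lhi := by
          have h1 : (1 - θ) ^ (1/(n:ℝ)) * S ≤ Lhi ^ (1/(n:ℝ)) := by
            calc (1 - θ) ^ (1/(n:ℝ)) * S
                = ((1 - θ) * vF) ^ (1/(n:ℝ)) + ((1 - θ) * vG) ^ (1/(n:ℝ)) := by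
                  rw [hS, mul_add, ← Real.mul_rpow (by linarith) hvF_pos.le,
                    ← Real.mul_rpow (by linarith) hvG_pos.le]
            _ ≤ Lhi ^ (1/(n:ℝ)) := by rw [← hθF', ← hvGhi]; exact IHhi
          have h2 := Real.rpow_le_rpow
            (mul_nonneg (Real.rpow_nonneg (by linarith) _) hS_pos.le) h1 (Nat.cast_nonneg n)
          rw [rpow_cancel hn ENNReal.toReal_nonneg] at h2
          calc (1 - θ) * S ^ (n:ℝ) = ((1 - θ) ^ (1/(n:ℝ)) * S) ^ (n:ℝ) := by
                rw [Real.mul_rpow (Real.rpow_nonneg (by linarith) _) hS_pos.le,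
                  rpow_cancel hn (by linarith)]
          _ ≤ Lhi := h2
        have hTS : S ^ (n:ℝ) ≤ T := by nlinarith
        calc S = (S ^ (n:ℝ)) ^ (1/(n:ℝ)) := (rpow_cancel' hn hS_pos.le).symm
        _ ≤ T ^ (1/(n:ℝ)) := Real.rpow_le_rpow (by positivity) hTS (by positivity)
      obtain ⟨i, hi⟩ := exists_sep hpF hgF hp hq hpq
      rcases hi with h | h
      · exact key p q hp hq hpq i h
      · exact key q p hq hp hpq.symm i h
    by_cases hF2 : 2 ≤ F.card
    · exact step F G hk hFne hGne hgF hgG hpF hpG hF2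
    by_cases hG2 : 2 ≤ G.card
    · have := step G F (by omega) hGne hFne hgG hgF hpG hpF hG2
      rw [add_comm (U G) (U F)] at this
      linarith
    -- base case : both singletons
    · have hF1 : F.card = 1 := by
        have := Finset.card_pos.2 hFne; omega
      have hG1 : G.card = 1 := by
        have := Finset.card_pos.2 hGne; omega
      obtain ⟨p, hp⟩ := Finset.card_eq_one.1 hF1
      obtain ⟨q, hq⟩ := Finset.card_eq_one.1 hG1
      subst hp hq
      have hUp : U {p} = box p.1 p.2 := by simp [U]
      have hUq : U {q} = box q.1 q.2 := by simp [U]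
      have hgp : ∀ i, p.1 i < p.2 i := hgF p (Finset.mem_singleton_self p)
      have hgq : ∀ i, q.1 i < q.2 i := hgG q (Finset.mem_singleton_self q)
      rw [hUp, hUq, box_add_box _ _ _ _ hgp hgq]
      have hvol : ∀ (l u : Fin n → ℝ), (∀ i, l i < u i) →
          (volume (box l u)).toReal = ∏ i, (u i - l i) := by
        intro l u hlu
        rw [box_volume, ENNReal.toReal_prod]
        exact Finset.prod_congr rfl fun i _ =>
          ENNReal.toReal_ofReal (by linarith [hlu i])
      rw [hvol _ _ hgp, hvol _ _ hgq, hvol _ _ (fun i => by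
        have := hgp i; have := hgq i
        show (p.1 + q.1) i < (p.2 + q.2) i
        simp only [Pi.add_apply]; linarith)]
      have := prodBM hn (fun i => p.2 i - p.1 i) (fun i => q.2 i - q.1 i)
        (fun i => sub_pos.2 (hgp i)) (fun i => sub_pos.2 (hgq i))
      convert this using 3 with i
      · simp only [Pi.add_apply]; ring
      

theorem HO_final (hn : 0 < n) (F G : Finset (Pr n)) (hFne : F.Nonempty) (hGne : G.Nonempty)
    (hgF : good F) (hgG : good G) (hpF : pd F) (hpG : pd G) :
    (volume (U F)).toReal ^ (1/(n:ℝ)) + (volume (U G)).toReal ^ (1/(n:ℝ)) ≤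
      (volume (U F + U G)).toReal ^ (1/(n:ℝ)) :=
  HO_induct hn (F.card + G.card) F G le_rfl hFne hGne hgF hgG hpF hpG

/-! ### Families of lattice cubes -/

def scaleFam (t : ℝ) (S : Finset (Fin n → ℝ)) : Finset (Pr n) :=
  S.image fun a => (fun i => t * a i, fun i => t * a i + t)

lemma good_scaleFam {t : ℝ} (ht : 0 < t) (S : Finset (Fin n → ℝ)) :
    good (scaleFam t S) := by
  intro p hp i
  simp only [scaleFam, Finset.mem_image] at hp
  obtain ⟨a, _, rfl⟩ := hp
  dsimp only
  linarith

lemma int_gap {a b : Fin n → ℝ} (hia : ∀ i, ∃ m : ℤ, a i = (m:ℝ))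
    (hib : ∀ i, ∃ m : ℤ, b i = (m:ℝ)) (hab : a ≠ b) :
    ∃ i, a i + 1 ≤ b i ∨ b i + 1 ≤ a i := by
  have hex : ∃ i, a i ≠ b i := by
    by_contra h
    push_neg at h
    exact hab (funext h)
  obtain ⟨i, hi⟩ := hex
  obtain ⟨m, hm⟩ := hia i
  obtain ⟨m', hm'⟩ := hib i
  refine ⟨i, ?_⟩
  rw [hm, hm'] at hi ⊢
  have hmm : m ≠ m' := fun h => hi (by rw [h])
  rcases lt_or_gt_of_ne hmm with h | h
  · left; exact_mod_cast Int.lt_iff_add_one_le.1 h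
  · right; exact_mod_cast Int.lt_iff_add_one_le.1 h

lemma pd_scaleFam {t : ℝ} (ht : 0 < t) {S : Finset (Fin n → ℝ)}
    (hint : ∀ a ∈ S, ∀ i, ∃ m : ℤ, a i = (m:ℝ)) : pd (scaleFam t S) := by
  intro p hp q hq hpq
  simp only [scaleFam, Finset.coe_image, Set.mem_image, Finset.mem_coe] at hp hq
  obtain ⟨a, ha, rfl⟩ := hp
  obtain ⟨b, hb, rfl⟩ := hq
  have hab : a ≠ b := fun h => hpq (by rw [h])
  obtain ⟨i, hgap⟩ := int_gap (hint a ha) (hint b hb) hab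
  rw [Set.disjoint_left]
  intro x hxa hxb
  rw [mem_box] at hxa hxb
  have h1 := (hxa i).1
  have h2 := (hxa i).2
  have h3 := (hxb i).1
  have h4 := (hxb i).2
  dsimp only at h1 h2 h3 h4
  rcases hgap with h | h
  · have := mul_le_mul_of_nonneg_left h ht.le
    nlinarith
  · have := mul_le_mul_of_nonneg_left h ht.le
    nlinarith

lemma card_scaleFam {t : ℝ} (ht : t ≠ 0) (S : Finset (Fin n → ℝ)) :
    (scaleFam t S).card = S.card := by
  refine Finset.card_image_of_injective _ fun a b h => ?_
  funext i
  have := congrFun (congrArg Prod.fst h) i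
  dsimp only at this
  exact mul_left_cancel₀ ht this

lemma vol_scaleFam {t : ℝ} (ht : 0 < t) {S : Finset (Fin n → ℝ)}
    (hint : ∀ a ∈ S, ∀ i, ∃ m : ℤ, a i = (m:ℝ)) :
    (volume (U (scaleFam t S))).toReal = S.card * t ^ n := by
  rw [volume_U _ (pd_scaleFam ht hint)]
  have hconst : ∀ p ∈ scaleFam t S, volume (box p.1 p.2) = ENNReal.ofReal t ^ n := by
    intro p hp
    simp only [scaleFam, Finset.mem_image] at hp
    obtain ⟨a, _, rfl⟩ := hp
    rw [box_volume]
    have : ∀ i : Fin n, ENNReal.ofReal ((fun i => t * a i + t) i - (fun i => t * a i) i)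
        = ENNReal.ofReal t := by
      intro i; dsimp only; ring_nf
    rw [Finset.prod_congr rfl fun i _ => this i, Finset.prod_const, Finset.card_univ,
      Fintype.card_fin]
  rw [Finset.sum_congr rfl hconst, Finset.sum_const, card_scaleFam ht.ne' S, nsmul_eq_mul,
    ENNReal.toReal_mul, ENNReal.toReal_pow, ENNReal.toReal_ofReal ht.le, ENNReal.toReal_natCast]

lemma rpow_card_mul {t : ℝ} (hn : 0 < n) (ht : 0 ≤ t) {c : ℝ} (hc : 0 ≤ c) :
    (c * t ^ n) ^ (1/(n:ℝ)) = t * c ^ (1/(n:ℝ)) := by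
  rw [Real.mul_rpow hc (pow_nonneg ht n), ← Real.rpow_natCast t n, rpow_cancel' hn ht,
    mul_comm]

lemma measure_le_ncard {Z X : Set (Fin n → ℝ)} (hZ : Z.Finite)
    (hX : ∀ x ∈ X, (fun i => (⌊x i⌋ : ℝ)) ∈ Z) : volume X ≤ (Z.ncard : ENNReal) := by
  have hsub : X ⊆ ⋃ z ∈ hZ.toFinset, box z (fun i => z i + 1) := by
    intro x hx
    refine Set.mem_biUnion (hZ.mem_toFinset.2 (hX x hx)) ?_
    rw [mem_box]
    intro i
    exact ⟨Int.floor_le _, by dsimp only; linarith [Int.lt_floor_add_one (x i)]⟩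
  calc volume X ≤ ∑ z ∈ hZ.toFinset, volume (box z (fun i => z i + 1)) :=
        le_trans (measure_mono hsub) (measure_biUnion_finset_le _ _)
  _ = ∑ _z ∈ hZ.toFinset, 1 := by
        refine Finset.sum_congr rfl fun z _ => ?_
        rw [box_volume]
        have : ∀ i : Fin n, ENNReal.ofReal ((fun i => z i + 1) i - z i) = 1 := by
          intro i; dsimp only; rw [add_sub_cancel_left, ENNReal.ofReal_one]
        rw [Finset.prod_congr rfl fun i _ => this i, Finset.prod_const_one]
  _ = (Z.ncard : ENNReal) := by
        rw [Finset.sum_const, nsmul_eq_mul, mul_one, Set.ncard_eq_toFinset_card Z hZ]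

lemma finite_of_bounded_int {S : Set (Fin n → ℝ)} (hS : Bornology.IsBounded S)
    (hint : ∀ x ∈ S, ∀ i, ∃ m : ℤ, x i = (m:ℝ)) : S.Finite := by
  obtain ⟨R, hR⟩ := hS.exists_norm_le
  have hsub : S ⊆ (fun z : Fin n → ℤ => fun i => ((z i : ℤ) : ℝ)) ''
      Set.Icc (fun _ => -⌈R⌉) (fun _ => ⌈R⌉) := by
    intro x hx
    choose m hm using hint x hx
    refine ⟨m, ⟨fun i => ?_, fun i => ?_⟩, funext fun i => (hm i).symm⟩
    · have h1 : |x i| ≤ R := by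
        rw [← Real.norm_eq_abs]
        exact le_trans (norm_le_pi_norm x i) (hR x hx)
      rw [hm i] at h1
      have h2 : -(⌈R⌉:ℝ) ≤ ((m i : ℤ) : ℝ) := by
        have := (abs_le.1 h1).1
        have := Int.le_ceil R
        linarith
      exact_mod_cast h2
    · have h1 : |x i| ≤ R := by
        rw [← Real.norm_eq_abs]
        exact le_trans (norm_le_pi_norm x i) (hR x hx)
      rw [hm i] at h1
      have h2 : ((m i : ℤ) : ℝ) ≤ (⌈R⌉:ℝ) := by
        have := (abs_le.1 h1).2
        have := Int.le_ceil R
        linarith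
      exact_mod_cast h2
  exact Set.Finite.subset (Set.Finite.image _ (Set.finite_Icc _ _)) hsub

end HOBM

open MeasureTheory HOBM

/-- Brunn–Minkowski type inequality for the lattice point enumerator and
arbitrary non-negative linear combinations. -/
theorem discrete_BrunnMinkowski_linear (n : ℕ) (hn : 1 ≤ n) (t s : ℝ)
    (ht : 0 ≤ t) (hs : 0 ≤ s)
    (K L : Set (Fin n → ℝ)) (hKb : Bornology.IsBounded K) (hLb : Bornology.IsBounded L)
    (hG : 0 < latG K * latG L) :
    t * (latG K : ℝ) ^ (1 / (n : ℝ)) + s * (latG L : ℝ) ^ (1 / (n : ℝ)) ≤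
      (latG (t • K + s • L + cube n (-1) ((⌈t + s⌉ : ℤ) : ℝ)) : ℝ) ^ (1 / (n : ℝ)) := by
  classical
  have hn0 : 0 < n := hn
  have hK0 : 0 < latG K := by
    rcases Nat.eq_zero_or_pos (latG K) with h | h
    · rw [h, zero_mul] at hG; exact absurd hG (lt_irrefl 0)
    · exact h
  have hL0 : 0 < latG L := by
    rcases Nat.eq_zero_or_pos (latG L) with h | h
    · rw [h, mul_zero] at hG; exact absurd hG (lt_irrefl 0)
    · exact h
  have hAfin : (K ∩ intPts n).Finite :=
    finite_of_bounded_int (hKb.subset Set.inter_subset_left) (fun x hx => hx.2)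
  have hBfin : (L ∩ intPts n).Finite :=
    finite_of_bounded_int (hLb.subset Set.inter_subset_left) (fun x hx => hx.2)
  have hAne : (K ∩ intPts n).Nonempty := Set.nonempty_of_ncard_ne_zero hK0.ne'
  have hBne : (L ∩ intPts n).Nonempty := Set.nonempty_of_ncard_ne_zero hL0.ne'
  by_cases hts0 : t + s ≤ 0
  · have ht0 : t = 0 := le_antisymm (by linarith) ht
    have hs0 : s = 0 := le_antisymm (by linarith) hs
    rw [ht0, hs0, zero_mul, zero_mul, add_zero]
    exact Real.rpow_nonneg (Nat.cast_nonneg _) _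
  push_neg at hts0
  set Mc : ℝ := ((⌈t + s⌉ : ℤ) : ℝ) with hMc
  have hMle : t + s ≤ Mc := Int.le_ceil _
  have hcube : Bornology.IsBounded (cube n (-1) Mc) := by
    rw [isBounded_iff_forall_norm_le]
    refine ⟨max 1 |Mc|, fun x hx => ?_⟩
    refine (pi_norm_le_iff_of_nonneg (by positivity)).2 fun i => ?_
    have h1 := (hx i).1
    have h2 := (hx i).2
    rw [Real.norm_eq_abs, abs_le]
    constructor
    · have := le_max_left 1 |Mc|; linarith
    · have := le_abs_self Mc; have := le_max_right 1 |Mc|; linarith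
  have hTb : Bornology.IsBounded (t • K + s • L + cube n (-1) Mc) :=
    ((hKb.smul₀ t).add (hLb.smul₀ s)).add hcube
  have hZfin : ((t • K + s • L + cube n (-1) Mc) ∩ intPts n).Finite :=
    finite_of_bounded_int (hTb.subset Set.inter_subset_left) (fun x hx => hx.2)
  have floor_mem : ∀ a b : Fin n → ℝ, a ∈ K → b ∈ L →
      ∀ x : Fin n → ℝ, (∀ i, t * a i + s * b i ≤ x i ∧ x i < t * a i + s * b i + (t + s)) →
      (fun i => (⌊x i⌋ : ℝ)) ∈ (t • K + s • L + cube n (-1) Mc) ∩ intPts n := by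
    intro a b haK hbL x hx
    constructor
    · have hrep : (fun i => (⌊x i⌋ : ℝ)) =
          (t • a + s • b) + (fun i => (⌊x i⌋ : ℝ) - (t * a i + s * b i)) := by
        funext i
        simp only [Pi.add_apply, Pi.smul_apply, smul_eq_mul]
        ring
      rw [hrep]
      refine Set.add_mem_add (Set.add_mem_add (Set.smul_mem_smul_set haK)
        (Set.smul_mem_smul_set hbL)) ?_
      intro i
      have h1 := (hx i).1
      have h2 := (hx i).2
      have h3 := Int.sub_one_lt_floor (x i)
      have h4 := Int.floor_le (x i)
      constructor
      · dsimp only; linarith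
      · dsimp only; linarith
    · intro i
      exact ⟨⌊x i⌋, rfl⟩
  have count : ∀ X : Set (Fin n → ℝ),
      (∀ x ∈ X, (fun i => (⌊x i⌋ : ℝ)) ∈ (t • K + s • L + cube n (-1) Mc) ∩ intPts n) →
      (volume X).toReal ≤ (latG (t • K + s • L + cube n (-1) Mc) : ℝ) := by
    intro X hX
    have h1 := measure_le_ncard hZfin hX
    have h2 := ENNReal.toReal_mono (ENNReal.natCast_ne_top _) h1
    rwa [ENNReal.toReal_natCast] at h2
  have hintA : ∀ a ∈ hAfin.toFinset, ∀ i, ∃ m : ℤ, a i = (m : ℝ) :=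
    fun a ha i => (hAfin.mem_toFinset.1 ha).2 i
  have hintB : ∀ a ∈ hBfin.toFinset, ∀ i, ∃ m : ℤ, a i = (m : ℝ) :=
    fun a ha i => (hBfin.mem_toFinset.1 ha).2 i
  have hcardA : (hAfin.toFinset.card : ℝ) = (latG K : ℝ) := by
    rw [show latG K = (K ∩ intPts n).ncard from rfl, Set.ncard_eq_toFinset_card _ hAfin]
  have hcardB : (hBfin.toFinset.card : ℝ) = (latG L : ℝ) := by
    rw [show latG L = (L ∩ intPts n).ncard from rfl, Set.ncard_eq_toFinset_card _ hBfin]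
  rcases eq_or_lt_of_le ht with ht0 | htpos
  · -- t = 0, s > 0
    have hs' : 0 < s := by rw [← ht0, zero_add] at hts0; exact hts0
    obtain ⟨a0, ha0⟩ := hAne
    set Fs := scaleFam s hBfin.toFinset with hFs
    have hXfloor : ∀ x ∈ U Fs, (fun i => (⌊x i⌋ : ℝ)) ∈
        (t • K + s • L + cube n (-1) Mc) ∩ intPts n := by
      intro x hx
      simp only [U, Set.mem_iUnion] at hx
      obtain ⟨p, hp, hxp⟩ := hx
      simp only [hFs, scaleFam, Finset.mem_image] at hp
      obtain ⟨b, hb, rfl⟩ := hp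
      have hbL : b ∈ L := (hBfin.mem_toFinset.1 hb).1
      refine floor_mem a0 b ha0.1 hbL x fun i => ?_
      have h1 := (mem_box.1 hxp i).1
      have h2 := (mem_box.1 hxp i).2
      dsimp only at h1 h2
      rw [← ht0]
      constructor
      · linarith
      · linarith
    have hvol : (volume (U Fs)).toReal = (latG L : ℝ) * s ^ n := by
      rw [vol_scaleFam hs' hintB, hcardB]
    have hle := count (U Fs) hXfloor
    rw [hvol] at hle
    have hfirst : t * (latG K : ℝ) ^ (1 / (n:ℝ)) = 0 := by rw [← ht0, zero_mul]
    rw [hfirst, zero_add]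
    calc s * (latG L : ℝ) ^ (1 / (n:ℝ))
        = ((latG L : ℝ) * s ^ n) ^ (1 / (n:ℝ)) :=
          (rpow_card_mul hn0 hs'.le (Nat.cast_nonneg _)).symm
    _ ≤ (latG (t • K + s • L + cube n (-1) Mc) : ℝ) ^ (1 / (n:ℝ)) :=
          Real.rpow_le_rpow (by positivity) hle (by positivity)
  rcases eq_or_lt_of_le hs with hs0 | hspos
  · -- s = 0, t > 0
    have ht' : 0 < t := by rw [← hs0, add_zero] at hts0; exact hts0
    obtain ⟨b0, hb0⟩ := hBne
    set Ft := scaleFam t hAfin.toFinset with hFt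
    have hXfloor : ∀ x ∈ U Ft, (fun i => (⌊x i⌋ : ℝ)) ∈
        (t • K + s • L + cube n (-1) Mc) ∩ intPts n := by
      intro x hx
      simp only [U, Set.mem_iUnion] at hx
      obtain ⟨p, hp, hxp⟩ := hx
      simp only [hFt, scaleFam, Finset.mem_image] at hp
      obtain ⟨a, ha, rfl⟩ := hp
      have haK : a ∈ K := (hAfin.mem_toFinset.1 ha).1
      refine floor_mem a b0 haK hb0.1 x fun i => ?_
      have h1 := (mem_box.1 hxp i).1
      have h2 := (mem_box.1 hxp i).2
      dsimp only at h1 h2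
      rw [← hs0]
      constructor
      · linarith
      · linarith
    have hvol : (volume (U Ft)).toReal = (latG K : ℝ) * t ^ n := by
      rw [vol_scaleFam ht' hintA, hcardA]
    have hle := count (U Ft) hXfloor
    rw [hvol] at hle
    have hsecond : s * (latG L : ℝ) ^ (1 / (n:ℝ)) = 0 := by rw [← hs0, zero_mul]
    rw [hsecond, add_zero]
    calc t * (latG K : ℝ) ^ (1 / (n:ℝ))
        = ((latG K : ℝ) * t ^ n) ^ (1 / (n:ℝ)) :=
          (rpow_card_mul hn0 ht'.le (Nat.cast_nonneg _)).symm
    _ ≤ (latG (t • K + s • L + cube n (-1) Mc) : ℝ) ^ (1 / (n:ℝ)) :=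
          Real.rpow_le_rpow (by positivity) hle (by positivity)
  · -- t > 0 and s > 0
    set Ft := scaleFam t hAfin.toFinset with hFt
    set Fs := scaleFam s hBfin.toFinset with hFs
    have hFtne : Ft.Nonempty :=
      Finset.Nonempty.image (hAfin.toFinset_nonempty.2 hAne) _
    have hFsne : Fs.Nonempty :=
      Finset.Nonempty.image (hBfin.toFinset_nonempty.2 hBne) _
    have hgFt : good Ft := good_scaleFam htpos _
    have hgFs : good Fs := good_scaleFam hspos _
    have hpFt : pd Ft := pd_scaleFam htpos hintA
    have hpFs : pd Fs := pd_scaleFam hspos hintB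
    have HO := HO_final hn0 Ft Fs hFtne hFsne hgFt hgFs hpFt hpFs
    have hXfloor : ∀ x ∈ U Ft + U Fs, (fun i => (⌊x i⌋ : ℝ)) ∈
        (t • K + s • L + cube n (-1) Mc) ∩ intPts n := by
      intro x hx
      rw [U_add_U Ft Fs hgFt hgFs] at hx
      simp only [Set.mem_iUnion] at hx
      obtain ⟨p, hp, q, hq, hxpq⟩ := hx
      simp only [hFt, hFs, scaleFam, Finset.mem_image] at hp hq
      obtain ⟨a, ha, rfl⟩ := hp
      obtain ⟨b, hb, rfl⟩ := hq
      have haK : a ∈ K := (hAfin.mem_toFinset.1 ha).1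
      have hbL : b ∈ L := (hBfin.mem_toFinset.1 hb).1
      refine floor_mem a b haK hbL x fun i => ?_
      have h1 := (mem_box.1 hxpq i).1
      have h2 := (mem_box.1 hxpq i).2
      simp only [Pi.add_apply] at h1 h2
      constructor
      · linarith
      · linarith
    have hvolt : (volume (U Ft)).toReal = (latG K : ℝ) * t ^ n := by
      rw [vol_scaleFam htpos hintA, hcardA]
    have hvols : (volume (U Fs)).toReal = (latG L : ℝ) * s ^ n := by
      rw [vol_scaleFam hspos hintB, hcardB]
    have hle := count (U Ft + U Fs) hXfloor
    calc t * (latG K : ℝ) ^ (1 / (n:ℝ)) + s * (latG L : ℝ) ^ (1 / (n:ℝ))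
        = (volume (U Ft)).toReal ^ (1 / (n:ℝ)) + (volume (U Fs)).toReal ^ (1 / (n:ℝ)) := by
          rw [hvolt, hvols, rpow_card_mul hn0 htpos.le (Nat.cast_nonneg _),
            rpow_card_mul hn0 hspos.le (Nat.cast_nonneg _)]
    _ ≤ (volume (U Ft + U Fs)).toReal ^ (1 / (n:ℝ)) := HO
    _ ≤ (latG (t • K + s • L + cube n (-1) Mc) : ℝ) ^ (1 / (n:ℝ)) :=
          Real.rpow_le_rpow ENNReal.toReal_nonneg hle (by positivity)
end
end

section
/- Let n ≥ 1, t, s ≥ 0 and p ≥ 1 a real number, and let K, L ⊆ ℝⁿ be bounded sets such that G(K)·G(L) > 0. Then G(t·K +_p s·L + (-1, ⌈(t+s)^{1/p}⌉)ⁿ)^{p/n} ≥ t·G(K)^{p/n} + s·G(L)^{p/n}. -/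
open scoped Pointwise

section hidden
open MeasureTheory
open scoped ENNReal

namespace DBM
variable {n : ℕ}

abbrev Pt (n : ℕ) := Fin n → ℝ
abbrev Box (n : ℕ) := Pt n × Pt n

def bset (b : Box n) : Set (Pt n) := Set.univ.pi fun i => Set.Ico (b.1 i) (b.2 i)
def rvol (b : Box n) : ℝ := ∏ i, (b.2 i - b.1 i)
def nondeg (b : Box n) : Prop := ∀ i, b.1 i < b.2 i

noncomputable instance : DecidablePred (nondeg (n := n)) := fun _ => Classical.dec _

lemma bset_nonempty {b : Box n} (h : nondeg b) : (bset b).Nonempty :=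
  ⟨b.1, fun i _ => ⟨le_refl _, h i⟩⟩

lemma measurableSet_bset (b : Box n) : MeasurableSet (bset b) :=
  MeasurableSet.univ_pi fun i => measurableSet_Ico

lemma volume_bset {b : Box n} (h : ∀ i, b.1 i ≤ b.2 i) :
    volume (bset b) = ENNReal.ofReal (rvol b) := by
  rw [bset, volume_pi_pi, rvol,
    ENNReal.ofReal_prod_of_nonneg (fun i _ => sub_nonneg.2 (h i))]
  simp [Real.volume_Ico]

lemma rvol_nonneg {b : Box n} (h : ∀ i, b.1 i ≤ b.2 i) : 0 ≤ rvol b :=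
  Finset.prod_nonneg fun i _ => sub_nonneg.2 (h i)

lemma rvol_pos {b : Box n} (h : nondeg b) : 0 < rvol b :=
  Finset.prod_pos fun i _ => sub_pos.2 (h i)

/-- 1D: if `w ∈ [a+c, b+d)` then `w = x + y` with `x ∈ [a,b)`, `y ∈ [c,d)`. -/
lemma Ico_add_Ico_mem {a b c d w : ℝ} (hab : a < b) (hcd : c < d)
    (h1 : a + c ≤ w) (h2 : w < b + d) :
    ∃ x, (a ≤ x ∧ x < b) ∧ c ≤ w - x ∧ w - x < d := by
  by_cases h : w - c < b
  · refine ⟨max a (w - c), ⟨le_max_left _ _, ?_⟩, ?_, ?_⟩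
    · exact max_lt hab h
    · have : max a (w - c) ≤ w - c := max_le (by linarith) le_rfl
      linarith
    · have : w - c ≤ max a (w - c) := le_max_right _ _
      linarith
  · push_neg at h
    refine ⟨max a ((w - d + b) / 2), ⟨le_max_left _ _, ?_⟩, ?_, ?_⟩
    · exact max_lt hab (by linarith)
    · have : (w - d + b) / 2 ≤ max a ((w - d + b) / 2) := le_max_right _ _
      -- need w - x < d i.e. x > w - d ; also c ≤ w - x i.e. x ≤ w - c
      -- here: c ≤ w - x ⇔ x ≤ w - c ; x < b ≤ w - c
      have hx : max a ((w - d + b) / 2) < b := max_lt hab (by linarith)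
      linarith
    · have : (w - d + b) / 2 ≤ max a ((w - d + b) / 2) := le_max_right _ _
      linarith

lemma bset_add_bset {b1 b2 : Box n} (h1 : nondeg b1) (h2 : nondeg b2) :
    bset b1 + bset b2 = bset (b1.1 + b2.1, b1.2 + b2.2) := by
  ext w
  constructor
  · rintro ⟨x, hx, y, hy, rfl⟩
    intro i _
    have hxi := hx i (Set.mem_univ i)
    have hyi := hy i (Set.mem_univ i)
    exact ⟨add_le_add hxi.1 hyi.1, add_lt_add hxi.2 hyi.2⟩
  · intro hw
    have key : ∀ i, ∃ x, (b1.1 i ≤ x ∧ x < b1.2 i) ∧ b2.1 i ≤ w i - x ∧ w i - x < b2.2 i := by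
      intro i
      have := hw i (Set.mem_univ i)
      exact Ico_add_Ico_mem (h1 i) (h2 i) this.1 this.2
    choose x hx1 hx2 using key
    exact ⟨x, fun i _ => hx1 i, w - x, fun i _ => hx2 i, by simp⟩



def rv (C : Finset (Box n)) : ℝ := ∑ b ∈ C, rvol b
def uset (C : Finset (Box n)) : Set (Pt n) := ⋃ b ∈ C, bset b

def good (C : Finset (Box n)) : Prop :=
  (∀ b ∈ C, nondeg b) ∧ (C : Set (Box n)).PairwiseDisjoint bset

lemma measurableSet_uset (C : Finset (Box n)) : MeasurableSet (uset C) :=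
  C.measurableSet_biUnion fun b _ => measurableSet_bset b

lemma volume_uset {C : Finset (Box n)} (hC : good C) :
    volume (uset C) = ENNReal.ofReal (rv C) := by
  rw [uset, measure_biUnion_finset hC.2 fun b _ => measurableSet_bset b]
  rw [rv, ENNReal.ofReal_sum_of_nonneg fun b hb => rvol_nonneg fun i => (hC.1 b hb i).le]
  exact Finset.sum_congr rfl fun b hb => volume_bset fun i => (hC.1 b hb i).le

lemma rv_nonneg {C : Finset (Box n)} (hC : good C) : 0 ≤ rv C :=
  Finset.sum_nonneg fun b hb => rvol_nonneg fun i => (hC.1 b hb i).le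

lemma rv_pos {C : Finset (Box n)} (hC : good C) (hne : C.Nonempty) : 0 < rv C := by
  obtain ⟨b, hb⟩ := hne
  calc (0:ℝ) < rvol b := rvol_pos (hC.1 b hb)
  _ ≤ rv C := Finset.single_le_sum (fun b hb => rvol_nonneg fun i => (hC.1 b hb i).le) hb

/-! ### Cuts -/

def clamp (l u c : ℝ) : ℝ := min u (max l c)

def cutL (i : Fin n) (c : ℝ) (b : Box n) : Box n :=
  (b.1, Function.update b.2 i (clamp (b.1 i) (b.2 i) c))
def cutR (i : Fin n) (c : ℝ) (b : Box n) : Box n :=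
  (Function.update b.1 i (clamp (b.1 i) (b.2 i) c), b.2)

lemma clamp_mem {l u c : ℝ} (h : l ≤ u) : l ≤ clamp l u c ∧ clamp l u c ≤ u :=
  ⟨le_min h (le_max_left _ _), min_le_left _ _⟩

lemma cutL_le {b : Box n} (i : Fin n) (c : ℝ) (h : ∀ j, b.1 j ≤ b.2 j) :
    ∀ j, (cutL i c b).1 j ≤ (cutL i c b).2 j := by
  intro j
  rcases eq_or_ne j i with rfl | hj
  · simpa [cutL] using (clamp_mem (h j)).1
  · simpa [cutL, Function.update_of_ne hj] using h j

lemma cutR_le {b : Box n} (i : Fin n) (c : ℝ) (h : ∀ j, b.1 j ≤ b.2 j) :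
    ∀ j, (cutR i c b).1 j ≤ (cutR i c b).2 j := by
  intro j
  rcases eq_or_ne j i with rfl | hj
  · simpa [cutR] using (clamp_mem (h j)).2
  · simpa [cutR, Function.update_of_ne hj] using h j

lemma bset_cutL {b : Box n} (i : Fin n) (c : ℝ) (h : nondeg b) :
    bset (cutL i c b) = bset b ∩ {x | x i < c} := by
  ext x
  simp only [bset, cutL, Set.mem_inter_iff, Set.mem_pi, Set.mem_univ, forall_true_left,
    Set.mem_setOf_eq, Set.mem_Ico]
  constructor
  · intro hx
    have hxi := hx i
    rw [Function.update_self] at hxi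
    refine ⟨fun j => ?_, ?_⟩
    · rcases eq_or_ne j i with rfl | hj
      · exact ⟨hxi.1, lt_of_lt_of_le hxi.2 (clamp_mem (h j).le).2⟩
      · have := hx j; rwa [Function.update_of_ne hj] at this
    · rcases le_total c (b.1 i) with hc | hc
      · exfalso
        have hcl : clamp (b.1 i) (b.2 i) c ≤ b.1 i := by
          rw [clamp, max_eq_left hc]; exact min_le_right _ _
        linarith [hxi.1, hxi.2]
      · have hcl : clamp (b.1 i) (b.2 i) c ≤ c := by
          rw [clamp, max_eq_right hc]; exact min_le_right _ _
        linarith [hxi.2]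
  · rintro ⟨hx, hxi⟩
    intro j
    rcases eq_or_ne j i with rfl | hj
    · rw [Function.update_self]
      exact ⟨(hx j).1, lt_min (hx j).2 (lt_max_iff.2 (Or.inr hxi))⟩
    · rw [Function.update_of_ne hj]; exact hx j

lemma bset_cutR {b : Box n} (i : Fin n) (c : ℝ) (h : nondeg b) :
    bset (cutR i c b) = bset b ∩ {x | c ≤ x i} := by
  ext x
  simp only [bset, cutR, Set.mem_inter_iff, Set.mem_pi, Set.mem_univ, forall_true_left,
    Set.mem_setOf_eq, Set.mem_Ico]
  constructor
  · intro hx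
    have hxi := hx i
    rw [Function.update_self] at hxi
    refine ⟨fun j => ?_, ?_⟩
    · rcases eq_or_ne j i with rfl | hj
      · exact ⟨(clamp_mem (h j).le).1.trans hxi.1, hxi.2⟩
      · have := hx j; rwa [Function.update_of_ne hj] at this
    · rcases le_total c (b.2 i) with hc | hc
      · have : c ≤ clamp (b.1 i) (b.2 i) c := le_min hc (le_max_right _ _)
        exact this.trans hxi.1
      · exfalso
        have : b.2 i ≤ clamp (b.1 i) (b.2 i) c :=
          le_min le_rfl (le_max_iff.2 (Or.inr hc))
        linarith [hxi.1, hxi.2]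
  · rintro ⟨hx, hxi⟩
    intro j
    rcases eq_or_ne j i with rfl | hj
    · rw [Function.update_self]
      exact ⟨min_le_of_right_le (max_le (hx j).1 hxi), (hx j).2⟩
    · rw [Function.update_of_ne hj]; exact hx j

lemma rvol_cut_add {b : Box n} (i : Fin n) (c : ℝ) (h : ∀ j, b.1 j ≤ b.2 j) :
    rvol (cutL i c b) + rvol (cutR i c b) = rvol b := by
  unfold rvol cutL cutR
  simp only
  rw [← Finset.mul_prod_erase Finset.univ _ (Finset.mem_univ i),
      ← Finset.mul_prod_erase Finset.univ _ (Finset.mem_univ i),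
      ← Finset.mul_prod_erase Finset.univ (fun j => b.2 j - b.1 j) (Finset.mem_univ i)]
  have e1 : ∀ j ∈ Finset.univ.erase i,
      Function.update b.2 i (clamp (b.1 i) (b.2 i) c) j - b.1 j = b.2 j - b.1 j := by
    intro j hj
    rw [Function.update_of_ne (Finset.mem_erase.1 hj).1]
  have e2 : ∀ j ∈ Finset.univ.erase i,
      b.2 j - Function.update b.1 i (clamp (b.1 i) (b.2 i) c) j = b.2 j - b.1 j := by
    intro j hj
    rw [Function.update_of_ne (Finset.mem_erase.1 hj).1]
  rw [Finset.prod_congr rfl e1, Finset.prod_congr rfl e2, Function.update_self,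
    Function.update_self, ← add_mul]
  ring_nf



lemma nondeg_of_mem {b : Box n} {x : Pt n} (hx : x ∈ bset b) : nondeg b := by
  intro j
  have := hx j (Set.mem_univ j)
  exact lt_of_le_of_lt this.1 this.2

lemma rvol_eq_zero {b : Box n} (hle : ∀ j, b.1 j ≤ b.2 j) (h : ¬ nondeg b) : rvol b = 0 := by
  unfold nondeg at h
  push_neg at h
  obtain ⟨j, hj⟩ := h
  exact Finset.prod_eq_zero (Finset.mem_univ j) (by linarith [hle j])

/-- Cut a collection of boxes by a function such as `cutL i c`. -/
noncomputable def cutC (f : Box n → Box n) (C : Finset (Box n)) : Finset (Box n) :=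
  (C.filter fun b => nondeg (f b)).image f

lemma cutC_card_le (f : Box n → Box n) (C : Finset (Box n)) : (cutC f C).card ≤ C.card :=
  le_trans (Finset.card_image_le) (Finset.card_filter_le _ _)

section cutf
variable {C : Finset (Box n)} {f : Box n → Box n} (hC : good C)
  (hf : ∀ b ∈ C, bset (f b) ⊆ bset b)

include hC hf in
lemma cut_inj : ∀ b ∈ C.filter fun b => nondeg (f b), ∀ b' ∈ C.filter fun b => nondeg (f b),
    f b = f b' → b = b' := by
  intro b hb b' hb' hbb
  rw [Finset.mem_filter] at hb hb'
  by_contra hne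
  obtain ⟨x, hx⟩ := bset_nonempty hb.2
  have h1 : x ∈ bset b := hf b hb.1 hx
  have h2 : x ∈ bset b' := hf b' hb'.1 (hbb ▸ hx)
  exact (hC.2 hb.1 hb'.1 hne).le_bot ⟨h1, h2⟩ |>.elim

include hC hf in
lemma good_cutC : good (cutC f C) := by
  constructor
  · intro b'' hb''
    obtain ⟨b, hb, rfl⟩ := Finset.mem_image.1 hb''
    exact (Finset.mem_filter.1 hb).2
  · intro x hx y hy hxy
    obtain ⟨b, hb, rfl⟩ := Finset.mem_image.1 hx
    obtain ⟨b', hb', rfl⟩ := Finset.mem_image.1 hy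
    have hbb : b ≠ b' := fun h => hxy (by rw [h])
    have hdisj := hC.2 (Finset.mem_filter.1 hb).1 (Finset.mem_filter.1 hb').1 hbb
    exact hdisj.mono (hf b (Finset.mem_filter.1 hb).1) (hf b' (Finset.mem_filter.1 hb').1)

include hC hf in
lemma rv_cutC (hf2 : ∀ b ∈ C, ∀ j, (f b).1 j ≤ (f b).2 j) :
    rv (cutC f C) = ∑ b ∈ C, rvol (f b) := by
  rw [rv, cutC, Finset.sum_image (cut_inj hC hf)]
  rw [← Finset.sum_filter_add_sum_filter_not C (fun b => nondeg (f b)) (fun b => rvol (f b))]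
  have hz : ∀ b ∈ C.filter (fun b => ¬ nondeg (f b)), rvol (f b) = 0 := fun b hb => by
    rw [Finset.mem_filter] at hb
    exact rvol_eq_zero (hf2 b hb.1) hb.2
  rw [Finset.sum_congr rfl hz, Finset.sum_const_zero, add_zero]

end cutf



lemma bset_cutL_subset {b : Box n} {i : Fin n} {c : ℝ} : bset (cutL i c b) ⊆ bset b := by
  intro x hx
  have hnd := nondeg_of_mem hx
  intro j _
  have := hx j (Set.mem_univ j)
  rcases eq_or_ne j i with rfl | hj
  · simp only [cutL, Function.update_self] at this
    exact ⟨this.1, lt_of_lt_of_le this.2 (min_le_left _ _)⟩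
  · simpa [cutL, Function.update_of_ne hj] using this

lemma bset_cutR_subset {b : Box n} {i : Fin n} {c : ℝ} (hb : ∀ j, b.1 j ≤ b.2 j) :
    bset (cutR i c b) ⊆ bset b := by
  intro x hx
  intro j _
  have := hx j (Set.mem_univ j)
  rcases eq_or_ne j i with rfl | hj
  · simp only [cutR, Function.update_self] at this
    exact ⟨le_trans (clamp_mem (hb j)).1 this.1, this.2⟩
  · simpa [cutR, Function.update_of_ne hj] using this

lemma uset_cutL {C : Finset (Box n)} (hC : good C) (i : Fin n) (c : ℝ) :
    uset (cutC (cutL i c) C) = uset C ∩ {x | x i < c} := by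
  apply Set.Subset.antisymm
  · intro x hx
    obtain ⟨b'', hb'', hxb⟩ := Set.mem_iUnion₂.1 hx
    obtain ⟨b, hb, rfl⟩ := Finset.mem_image.1 hb''
    rw [Finset.mem_filter] at hb
    rw [bset_cutL i c (hC.1 b hb.1)] at hxb
    exact ⟨Set.mem_iUnion₂.2 ⟨b, hb.1, hxb.1⟩, hxb.2⟩
  · rintro x ⟨hx, hxi⟩
    obtain ⟨b, hb, hxb⟩ := Set.mem_iUnion₂.1 hx
    have hmem : x ∈ bset (cutL i c b) := by
      rw [bset_cutL i c (hC.1 b hb)]; exact ⟨hxb, hxi⟩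
    exact Set.mem_iUnion₂.2 ⟨cutL i c b,
      Finset.mem_image.2 ⟨b, Finset.mem_filter.2 ⟨hb, nondeg_of_mem hmem⟩, rfl⟩, hmem⟩

lemma uset_cutR {C : Finset (Box n)} (hC : good C) (i : Fin n) (c : ℝ) :
    uset (cutC (cutR i c) C) = uset C ∩ {x | c ≤ x i} := by
  apply Set.Subset.antisymm
  · intro x hx
    obtain ⟨b'', hb'', hxb⟩ := Set.mem_iUnion₂.1 hx
    obtain ⟨b, hb, rfl⟩ := Finset.mem_image.1 hb''
    rw [Finset.mem_filter] at hb
    rw [bset_cutR i c (hC.1 b hb.1)] at hxb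
    exact ⟨Set.mem_iUnion₂.2 ⟨b, hb.1, hxb.1⟩, hxb.2⟩
  · rintro x ⟨hx, hxi⟩
    obtain ⟨b, hb, hxb⟩ := Set.mem_iUnion₂.1 hx
    have hmem : x ∈ bset (cutR i c b) := by
      rw [bset_cutR i c (hC.1 b hb)]; exact ⟨hxb, hxi⟩
    exact Set.mem_iUnion₂.2 ⟨cutR i c b,
      Finset.mem_image.2 ⟨b, Finset.mem_filter.2 ⟨hb, nondeg_of_mem hmem⟩, rfl⟩, hmem⟩

lemma rvol_cutL_formula (b : Box n) (i : Fin n) (c : ℝ) :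
    rvol (cutL i c b) =
      (clamp (b.1 i) (b.2 i) c - b.1 i) * ∏ j ∈ Finset.univ.erase i, (b.2 j - b.1 j) := by
  rw [rvol, ← Finset.mul_prod_erase Finset.univ _ (Finset.mem_univ i)]
  simp only [cutL, Function.update_self]
  congr 1
  refine Finset.prod_congr rfl fun j hj => ?_
  rw [Function.update_of_ne (Finset.mem_erase.1 hj).1]

/-- Intermediate value theorem for cut volumes. -/
lemma exists_cut {C : Finset (Box n)} (hC : good C) (hne : C.Nonempty) (i : Fin n)
    {θ : ℝ} (h0 : 0 ≤ θ) (h1 : θ ≤ 1) :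
    ∃ d, ∑ b ∈ C, rvol (cutL i d b) = θ * rv C := by
  set g : ℝ → ℝ := fun d => ∑ b ∈ C, rvol (cutL i d b) with hg
  have hcont : Continuous g := by
    refine continuous_finset_sum _ fun b _ => ?_
    have : (fun d => rvol (cutL i d b)) =
        fun d => (clamp (b.1 i) (b.2 i) d - b.1 i) * ∏ j ∈ Finset.univ.erase i, (b.2 j - b.1 j) := by
      funext d; exact rvol_cutL_formula b i d
    rw [this]
    unfold clamp
    exact ((continuous_const.min (continuous_const.max continuous_id)).sub continuous_const).mul
      continuous_const
  obtain ⟨b0, hb0⟩ := id hne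
  set lo : ℝ := C.inf' hne fun b => b.1 i with hlo
  set hi : ℝ := C.sup' hne fun b => b.2 i with hhi
  have hlohi : lo ≤ hi :=
    le_trans (Finset.inf'_le (fun b => b.1 i) hb0) (le_trans (hC.1 b0 hb0 i).le (Finset.le_sup' (fun b => b.2 i) hb0))
  have hglo : g lo = 0 := by
    refine Finset.sum_eq_zero fun b hb => ?_
    rw [rvol_cutL_formula]
    have h1 : lo ≤ b.1 i := Finset.inf'_le (fun b => b.1 i) hb
    have : clamp (b.1 i) (b.2 i) lo = b.1 i := by
      rw [clamp, max_eq_left h1, min_eq_right (hC.1 b hb i).le]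
    rw [this, sub_self, zero_mul]
  have hghi : g hi = rv C := by
    refine Finset.sum_congr rfl fun b hb => ?_
    rw [rvol_cutL_formula]
    have h1 : b.2 i ≤ hi := Finset.le_sup' (fun b => b.2 i) hb
    have : clamp (b.1 i) (b.2 i) hi = b.2 i := by
      rw [clamp, max_eq_right (le_trans (hC.1 b hb i).le h1), min_eq_left h1]
    rw [this, rvol, ← Finset.mul_prod_erase Finset.univ _ (Finset.mem_univ i)]
  have hmem : θ * rv C ∈ Set.Icc (g lo) (g hi) := by
    rw [hglo, hghi]
    constructor
    · exact mul_nonneg h0 (rv_nonneg hC)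
    · calc θ * rv C ≤ 1 * rv C := mul_le_mul_of_nonneg_right h1 (rv_nonneg hC)
      _ = rv C := one_mul _
  obtain ⟨d, _, hd⟩ := intermediate_value_Icc hlohi hcont.continuousOn hmem
  exact ⟨d, hd⟩



lemma amgm_aux (hn : 0 < n) {f c d : Fin n → ℝ} (hf : ∀ i, 0 ≤ f i)
    (hc : ∀ i, 0 < c i) (hd : ∀ i, 0 < d i) (hfs : ∀ i, f i = c i ∨ f i = d i) :
    (∏ i, f i) ^ (n:ℝ)⁻¹ ≤
      (∑ i, (n:ℝ)⁻¹ * (f i / (c i + d i))) * (∏ i, (c i + d i)) ^ (n:ℝ)⁻¹ := by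
  have hcd : ∀ i, 0 < c i + d i := fun i => add_pos (hc i) (hd i)
  have h1 : (∏ i, f i) ^ (n:ℝ)⁻¹ = ∏ i, (f i) ^ (n:ℝ)⁻¹ :=
    (Real.finset_prod_rpow Finset.univ f (fun i _ => hf i) _).symm
  have h2 : ∀ i, (f i) ^ (n:ℝ)⁻¹ = (f i / (c i + d i)) ^ (n:ℝ)⁻¹ * (c i + d i) ^ (n:ℝ)⁻¹ := by
    intro i
    rw [← Real.mul_rpow (div_nonneg (hf i) (hcd i).le) (hcd i).le,
      div_mul_cancel₀ _ (hcd i).ne']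
  rw [h1, Finset.prod_congr rfl fun i _ => h2 i, Finset.prod_mul_distrib]
  have h3 : ∏ i, (c i + d i) ^ (n:ℝ)⁻¹ = (∏ i, (c i + d i)) ^ (n:ℝ)⁻¹ :=
    Real.finset_prod_rpow Finset.univ _ (fun i _ => (hcd i).le) _
  rw [h3]
  refine mul_le_mul_of_nonneg_right ?_ (Real.rpow_nonneg (Finset.prod_nonneg fun i _ => (hcd i).le) _)
  refine Real.geom_mean_le_arith_mean_weighted Finset.univ _ _ (fun i _ => by positivity) ?_
    (fun i _ => div_nonneg (hf i) (hcd i).le)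
  rw [Finset.sum_const, Finset.card_univ, Fintype.card_fin, nsmul_eq_mul]
  field_simp

lemma amgm (hn : 0 < n) {c d : Fin n → ℝ} (hc : ∀ i, 0 < c i) (hd : ∀ i, 0 < d i) :
    (∏ i, c i) ^ (n:ℝ)⁻¹ + (∏ i, d i) ^ (n:ℝ)⁻¹ ≤ (∏ i, (c i + d i)) ^ (n:ℝ)⁻¹ := by
  have hA := amgm_aux hn (f := c) (fun i => (hc i).le) hc hd (fun i => Or.inl rfl)
  have hB := amgm_aux hn (f := d) (fun i => (hd i).le) hc hd (fun i => Or.inr rfl)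
  have hsum : (∑ i, (n:ℝ)⁻¹ * (c i / (c i + d i))) + (∑ i, (n:ℝ)⁻¹ * (d i / (c i + d i))) = 1 := by
    rw [← Finset.sum_add_distrib]
    have : ∀ i ∈ Finset.univ, (n:ℝ)⁻¹ * (c i / (c i + d i)) + (n:ℝ)⁻¹ * (d i / (c i + d i))
        = (n:ℝ)⁻¹ := by
      intro i _
      have hcd : c i + d i ≠ 0 := (add_pos (hc i) (hd i)).ne'
      field_simp
    rw [Finset.sum_congr rfl this, Finset.sum_const, Finset.card_univ, Fintype.card_fin,
      nsmul_eq_mul]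
    field_simp
  calc (∏ i, c i) ^ (n:ℝ)⁻¹ + (∏ i, d i) ^ (n:ℝ)⁻¹
      ≤ ((∑ i, (n:ℝ)⁻¹ * (c i / (c i + d i))) + (∑ i, (n:ℝ)⁻¹ * (d i / (c i + d i))))
        * (∏ i, (c i + d i)) ^ (n:ℝ)⁻¹ := by rw [add_mul]; exact add_le_add hA hB
  _ = (∏ i, (c i + d i)) ^ (n:ℝ)⁻¹ := by rw [hsum, one_mul]

lemma uset_singleton (b : Box n) : uset ({b} : Finset (Box n)) = bset b := by
  simp [uset]

lemma rv_singleton (b : Box n) : rv ({b} : Finset (Box n)) = rvol b := by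
  simp [rv]

lemma boxBM_base (hn : 0 < n) {b1 b2 : Box n} (h1 : nondeg b1) (h2 : nondeg b2) :
    ENNReal.ofReal ((rvol b1 ^ (n:ℝ)⁻¹ + rvol b2 ^ (n:ℝ)⁻¹) ^ (n:ℕ)) ≤
      volume (bset b1 + bset b2) := by
  rw [bset_add_bset h1 h2]
  have hnd : ∀ i, (b1.1 + b2.1) i ≤ (b1.2 + b2.2) i := fun i => by
    have := (h1 i).le; have := (h2 i).le
    simp only [Pi.add_apply]; linarith [(h1 i).le, (h2 i).le]
  rw [volume_bset hnd]
  refine ENNReal.ofReal_le_ofReal ?_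
  have key : rvol b1 ^ (n:ℝ)⁻¹ + rvol b2 ^ (n:ℝ)⁻¹
      ≤ (rvol (b1.1 + b2.1, b1.2 + b2.2)) ^ (n:ℝ)⁻¹ := by
    have := amgm hn (c := fun i => b1.2 i - b1.1 i) (d := fun i => b2.2 i - b2.1 i)
      (fun i => sub_pos.2 (h1 i)) (fun i => sub_pos.2 (h2 i))
    have e : rvol (b1.1 + b2.1, b1.2 + b2.2) = ∏ i, ((b1.2 i - b1.1 i) + (b2.2 i - b2.1 i)) := by
      unfold rvol
      exact Finset.prod_congr rfl fun i _ => by simp only [Pi.add_apply]; ring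
    rw [e]
    exact this
  calc (rvol b1 ^ (n:ℝ)⁻¹ + rvol b2 ^ (n:ℝ)⁻¹) ^ (n:ℕ)
      ≤ ((rvol (b1.1 + b2.1, b1.2 + b2.2)) ^ (n:ℝ)⁻¹) ^ (n:ℕ) := by
        refine pow_le_pow_left₀ ?_ key _
        have g1 : (0:ℝ) ≤ rvol b1 := (rvol_pos h1).le
        have g2 : (0:ℝ) ≤ rvol b2 := (rvol_pos h2).le
        positivity
  _ = rvol (b1.1 + b2.1, b1.2 + b2.2) := by
        rw [← Real.rpow_natCast (_ ^ (n:ℝ)⁻¹) n, ← Real.rpow_mul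
          (rvol_nonneg hnd), inv_mul_cancel₀ (by exact_mod_cast hn.ne'), Real.rpow_one]



/-- target quantity -/
noncomputable def tgt (n : ℕ) (x y : ℝ) : ℝ := (x ^ (n:ℝ)⁻¹ + y ^ (n:ℝ)⁻¹) ^ (n:ℕ)

lemma tgt_nonneg {x y : ℝ} (hx : 0 ≤ x) (hy : 0 ≤ y) : 0 ≤ tgt n x y := by
  unfold tgt
  positivity

lemma tgt_scale (hn : 0 < n) {θ x y : ℝ} (hθ : 0 ≤ θ) (hx : 0 ≤ x) (hy : 0 ≤ y) :
    tgt n (θ * x) (θ * y) = θ * tgt n x y := by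
  unfold tgt
  rw [Real.mul_rpow hθ hx, Real.mul_rpow hθ hy, ← mul_add, mul_pow,
    ← Real.rpow_natCast (θ ^ (n:ℝ)⁻¹) n, ← Real.rpow_mul hθ,
    inv_mul_cancel₀ (by exact_mod_cast hn.ne' : (n:ℝ) ≠ 0), Real.rpow_one]

lemma measurableSet_usum {C D : Finset (Box n)} (hC : good C) (hD : good D) :
    MeasurableSet (uset C + uset D) := by
  have : uset C + uset D = ⋃ b ∈ C, ⋃ b' ∈ D, (bset b + bset b') := by
    ext w
    simp only [Set.mem_add, Set.mem_iUnion, uset]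
    constructor
    · rintro ⟨x, hx, y, hy, rfl⟩
      obtain ⟨b, hb, hxb⟩ := hx
      obtain ⟨b', hb', hyb⟩ := hy
      exact ⟨b, hb, b', hb', x, hxb, y, hyb, rfl⟩
    · rintro ⟨b, hb, b', hb', x, hxb, y, hyb, rfl⟩
      exact ⟨x, ⟨b, hb, hxb⟩, y, ⟨b', hb', hyb⟩, rfl⟩
  rw [this]
  refine C.measurableSet_biUnion fun b hb => D.measurableSet_biUnion fun b' hb' => ?_
  rw [bset_add_bset (hC.1 b hb) (hD.1 b' hb')]
  exact measurableSet_bset _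

lemma boxBM_cut (hn : 0 < n) (N : ℕ)
    (IH : ∀ CX CY : Finset (Box n), good CX → good CY → CX.Nonempty → CY.Nonempty →
      CX.card + CY.card ≤ N →
      ENNReal.ofReal (tgt n (rv CX) (rv CY)) ≤ volume (uset CX + uset CY))
    (CX CY : Finset (Box n)) (hgX : good CX) (hgY : good CY) (hneY : CY.Nonempty)
    (hcard : CX.card + CY.card ≤ N + 1)
    {b1 b2 : Box n} (hb1 : b1 ∈ CX) (hb2 : b2 ∈ CX) (hbne : b1 ≠ b2)
    {i : Fin n} (hsep : b1.2 i ≤ b2.1 i) :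
    ENNReal.ofReal (tgt n (rv CX) (rv CY)) ≤ volume (uset CX + uset CY) := by
  classical
  set c := b1.2 i with hc
  have hfL : ∀ b ∈ CX, bset (cutL i c b) ⊆ bset b := fun b _ => bset_cutL_subset
  have hfR : ∀ b ∈ CX, bset (cutR i c b) ⊆ bset b :=
    fun b hb => bset_cutR_subset fun j => (hgX.1 b hb j).le
  set CXp := cutC (cutL i c) CX with hCXp
  set CXm := cutC (cutR i c) CX with hCXm
  have goodXp : good CXp := good_cutC hgX hfL
  have goodXm : good CXm := good_cutC hgX hfR
  -- b1 survives in CXp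
  have hcut1 : cutL i c b1 = b1 := by
    unfold cutL
    have : clamp (b1.1 i) (b1.2 i) c = b1.2 i := by
      rw [clamp, max_eq_right (hgX.1 b1 hb1 i).le, min_self]
    rw [this, Function.update_eq_self]
  have hb1p : b1 ∈ CXp := by
    rw [hCXp, cutC]
    exact Finset.mem_image.2 ⟨b1, Finset.mem_filter.2 ⟨hb1, by rw [hcut1]; exact hgX.1 b1 hb1⟩, hcut1⟩
  -- b2 survives in CXm
  have hcl2 : clamp (b2.1 i) (b2.2 i) c = b2.1 i := by
    rw [clamp, max_eq_left hsep, min_eq_right (hgX.1 b2 hb2 i).le]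
  have hcut2 : cutR i c b2 = b2 := by
    unfold cutR
    rw [hcl2, Function.update_eq_self]
  have hb2m : b2 ∈ CXm := by
    rw [hCXm, cutC]
    exact Finset.mem_image.2 ⟨b2, Finset.mem_filter.2 ⟨hb2, by rw [hcut2]; exact hgX.1 b2 hb2⟩, hcut2⟩
  -- cards decrease
  have hdeg2 : ¬ nondeg (cutL i c b2) := by
    intro h
    have := h i
    simp only [cutL, Function.update_self] at this
    rw [hcl2] at this
    exact lt_irrefl _ this
  have hdeg1 : ¬ nondeg (cutR i c b1) := by
    intro h
    have := h i
    have hcl1 : clamp (b1.1 i) (b1.2 i) c = b1.2 i := by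
      rw [clamp, max_eq_right (hgX.1 b1 hb1 i).le, min_self]
    simp only [cutR, Function.update_self] at this
    rw [hcl1] at this
    exact lt_irrefl _ this
  have hcardXp : CXp.card < CX.card := by
    have hsub : CX.filter (fun b => nondeg (cutL i c b)) ⊆ CX.erase b2 := by
      intro b hb
      rw [Finset.mem_filter] at hb
      refine Finset.mem_erase.2 ⟨?_, hb.1⟩
      rintro rfl
      exact hdeg2 hb.2
    calc CXp.card ≤ (CX.filter fun b => nondeg (cutL i c b)).card := Finset.card_image_le
      _ ≤ (CX.erase b2).card := Finset.card_le_card hsub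
      _ < CX.card := by
          rw [Finset.card_erase_of_mem hb2]
          have := Finset.card_pos.2 ⟨b1, hb1⟩
          omega
  have hcardXm : CXm.card < CX.card := by
    have hsub : CX.filter (fun b => nondeg (cutR i c b)) ⊆ CX.erase b1 := by
      intro b hb
      rw [Finset.mem_filter] at hb
      refine Finset.mem_erase.2 ⟨?_, hb.1⟩
      rintro rfl
      exact hdeg1 hb.2
    calc CXm.card ≤ (CX.filter fun b => nondeg (cutR i c b)).card := Finset.card_image_le
      _ ≤ (CX.erase b1).card := Finset.card_le_card hsub
      _ < CX.card := by
          rw [Finset.card_erase_of_mem hb1]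
          have := Finset.card_pos.2 ⟨b1, hb1⟩
          omega
  -- volumes
  have hrvX : rv CXp + rv CXm = rv CX := by
    rw [rv_cutC hgX hfL (fun b hb => cutL_le i c fun j => (hgX.1 b hb j).le),
        rv_cutC hgX hfR (fun b hb => cutR_le i c fun j => (hgX.1 b hb j).le),
        ← Finset.sum_add_distrib]
    exact Finset.sum_congr rfl fun b hb => rvol_cut_add i c fun j => (hgX.1 b hb j).le
  have hvXp : 0 < rv CXp := rv_pos goodXp ⟨b1, hb1p⟩
  have hvXm : 0 < rv CXm := rv_pos goodXm ⟨b2, hb2m⟩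
  have hvX : 0 < rv CX := by linarith
  set θ := rv CXp / rv CX with hθ
  have hθ0 : 0 < θ := div_pos hvXp hvX
  have hθ1 : θ < 1 := (div_lt_one hvX).2 (by linarith)
  -- cut Y
  obtain ⟨d, hd⟩ := exists_cut hgY hneY i hθ0.le hθ1.le
  set CYp := cutC (cutL i d) CY with hCYp
  set CYm := cutC (cutR i d) CY with hCYm
  have hfLY : ∀ b ∈ CY, bset (cutL i d b) ⊆ bset b := fun b _ => bset_cutL_subset
  have hfRY : ∀ b ∈ CY, bset (cutR i d b) ⊆ bset b :=
    fun b hb => bset_cutR_subset fun j => (hgY.1 b hb j).le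
  have goodYp : good CYp := good_cutC hgY hfLY
  have goodYm : good CYm := good_cutC hgY hfRY
  have hvY : 0 < rv CY := rv_pos hgY hneY
  have hrvYp : rv CYp = θ * rv CY := by
    rw [hCYp, rv_cutC hgY hfLY (fun b hb => cutL_le i d fun j => (hgY.1 b hb j).le)]
    exact hd
  have hrvY : rv CYp + rv CYm = rv CY := by
    rw [hCYp, hCYm, rv_cutC hgY hfLY (fun b hb => cutL_le i d fun j => (hgY.1 b hb j).le),
        rv_cutC hgY hfRY (fun b hb => cutR_le i d fun j => (hgY.1 b hb j).le),
        ← Finset.sum_add_distrib]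
    exact Finset.sum_congr rfl fun b hb => rvol_cut_add i d fun j => (hgY.1 b hb j).le
  have hrvYm : rv CYm = (1 - θ) * rv CY := by linarith [hrvYp, hrvY]
  have hvYp : 0 < rv CYp := by rw [hrvYp]; exact mul_pos hθ0 hvY
  have hvYm : 0 < rv CYm := by rw [hrvYm]; exact mul_pos (by linarith) hvY
  have hneYp : CYp.Nonempty := by
    rw [Finset.nonempty_iff_ne_empty]
    rintro h
    rw [h] at hvYp
    simp [rv] at hvYp
  have hneYm : CYm.Nonempty := by
    rw [Finset.nonempty_iff_ne_empty]
    rintro h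
    rw [h] at hvYm
    simp [rv] at hvYm
  -- IH applications
  have hcYp : CYp.card ≤ CY.card := by rw [hCYp]; exact cutC_card_le _ _
  have hcYm : CYm.card ≤ CY.card := by rw [hCYm]; exact cutC_card_le _ _
  have hIH1 := IH CXp CYp goodXp goodYp ⟨b1, hb1p⟩ hneYp (by omega)
  have hIH2 := IH CXm CYm goodXm goodYm ⟨b2, hb2m⟩ hneYm (by omega)
  -- halfspace split
  have hsplit : volume (uset CXp + uset CYp) + volume (uset CXm + uset CYm)
      ≤ volume (uset CX + uset CY) := by
    have hmeasH : MeasurableSet {x : Pt n | x i < c + d} := by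
      have : {x : Pt n | x i < c + d} = (fun x : Pt n => x i) ⁻¹' Set.Iio (c + d) := rfl
      rw [this]
      exact (measurable_pi_apply i) measurableSet_Iio
    have e := measure_inter_add_diff (μ := volume) (uset CX + uset CY) hmeasH
    have h1 : uset CXp + uset CYp ⊆ (uset CX + uset CY) ∩ {x : Pt n | x i < c + d} := by
      rintro w ⟨x, hx, y, hy, rfl⟩
      rw [hCXp, uset_cutL hgX] at hx
      rw [hCYp, uset_cutL hgY] at hy
      exact ⟨⟨x, hx.1, y, hy.1, rfl⟩, by
        have := hx.2; have := hy.2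
        simp only [Set.mem_setOf_eq, Pi.add_apply]
        exact add_lt_add hx.2 hy.2⟩
    have h2 : uset CXm + uset CYm ⊆ (uset CX + uset CY) \ {x : Pt n | x i < c + d} := by
      rintro w ⟨x, hx, y, hy, rfl⟩
      rw [hCXm, uset_cutR hgX] at hx
      rw [hCYm, uset_cutR hgY] at hy
      refine ⟨⟨x, hx.1, y, hy.1, rfl⟩, ?_⟩
      simp only [Set.mem_setOf_eq, Pi.add_apply, not_lt]
      exact add_le_add hx.2 hy.2
    calc volume (uset CXp + uset CYp) + volume (uset CXm + uset CYm)
        ≤ volume ((uset CX + uset CY) ∩ {x : Pt n | x i < c + d})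
          + volume ((uset CX + uset CY) \ {x : Pt n | x i < c + d}) :=
          add_le_add (measure_mono h1) (measure_mono h2)
      _ = volume (uset CX + uset CY) := e
  -- real algebra
  have hXp : rv CXp = θ * rv CX := by
    rw [hθ]
    field_simp
  have hXm : rv CXm = (1 - θ) * rv CX := by
    have : rv CXm = rv CX - rv CXp := by linarith
    rw [this, hXp]; ring
  have htgt : tgt n (rv CX) (rv CY) = tgt n (rv CXp) (rv CYp) + tgt n (rv CXm) (rv CYm) := by
    rw [hXp, hXm, hrvYp, hrvYm, tgt_scale hn hθ0.le hvX.le hvY.le,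
      tgt_scale hn (by linarith) hvX.le hvY.le]
    ring
  calc ENNReal.ofReal (tgt n (rv CX) (rv CY))
      = ENNReal.ofReal (tgt n (rv CXp) (rv CYp)) + ENNReal.ofReal (tgt n (rv CXm) (rv CYm)) := by
        rw [htgt, ENNReal.ofReal_add (tgt_nonneg hvXp.le hvYp.le) (tgt_nonneg hvXm.le hvYm.le)]
    _ ≤ volume (uset CXp + uset CYp) + volume (uset CXm + uset CYm) := add_le_add hIH1 hIH2
    _ ≤ volume (uset CX + uset CY) := hsplit



lemma exists_sep {b1 b2 : Box n} (h1 : nondeg b1) (h2 : nondeg b2)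
    (hd : Disjoint (bset b1) (bset b2)) :
    ∃ i, b1.2 i ≤ b2.1 i ∨ b2.2 i ≤ b1.1 i := by
  by_contra hcon
  push_neg at hcon
  have hx : (fun i => max (b1.1 i) (b2.1 i)) ∈ bset b1 ∩ bset b2 := by
    constructor
    · intro j _
      exact ⟨le_max_left _ _, max_lt (h1 j) (hcon j).1⟩
    · intro j _
      exact ⟨le_max_right _ _, max_lt (hcon j).2 (h2 j)⟩
  exact (hd.le_bot hx).elim

lemma tgt_comm (x y : ℝ) : tgt n x y = tgt n y x := by
  unfold tgt; rw [add_comm]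

theorem boxBM (hn : 0 < n) (N : ℕ) :
    ∀ CX CY : Finset (Box n), good CX → good CY → CX.Nonempty → CY.Nonempty →
      CX.card + CY.card ≤ N →
      ENNReal.ofReal (tgt n (rv CX) (rv CY)) ≤ volume (uset CX + uset CY) := by
  induction N with
  | zero =>
    intro CX CY _ _ hneX hneY hcard
    have := Finset.card_pos.2 hneX
    have := Finset.card_pos.2 hneY
    omega
  | succ N IH =>
    intro CX CY hgX hgY hneX hneY hcard
    rcases le_or_gt 2 CX.card with hX2 | hX1
    · have h1c : 1 < CX.card := by omega
      obtain ⟨b1, hb1, b2, hb2, hbne⟩ := Finset.one_lt_card.1 h1c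
      obtain ⟨i, hsep | hsep⟩ :=
        exists_sep (hgX.1 b1 hb1) (hgX.1 b2 hb2) (hgX.2 hb1 hb2 hbne)
      · exact boxBM_cut hn N IH CX CY hgX hgY hneY hcard hb1 hb2 hbne hsep
      · exact boxBM_cut hn N IH CX CY hgX hgY hneY hcard hb2 hb1 hbne.symm hsep
    · rcases le_or_gt 2 CY.card with hY2 | hY1
      · have IH' : ∀ CA CB : Finset (Box n), good CA → good CB → CA.Nonempty → CB.Nonempty →
            CA.card + CB.card ≤ N →
            ENNReal.ofReal (tgt n (rv CA) (rv CB)) ≤ volume (uset CA + uset CB) := IH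
        have key : ENNReal.ofReal (tgt n (rv CY) (rv CX)) ≤ volume (uset CY + uset CX) := by
          have h1c : 1 < CY.card := by omega
          obtain ⟨b1, hb1, b2, hb2, hbne⟩ := Finset.one_lt_card.1 h1c
          obtain ⟨i, hsep | hsep⟩ :=
            exists_sep (hgY.1 b1 hb1) (hgY.1 b2 hb2) (hgY.2 hb1 hb2 hbne)
          · exact boxBM_cut hn N IH' CY CX hgY hgX hneX
              (show CY.card + CX.card ≤ N + 1 by omega) hb1 hb2 hbne hsep
          · exact boxBM_cut hn N IH' CY CX hgY hgX hneX
              (show CY.card + CX.card ≤ N + 1 by omega) hb2 hb1 hbne.symm hsep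
        rw [tgt_comm, add_comm (uset CX) (uset CY)]
        exact key
      · -- base case : both singletons
        have hX1' : CX.card = 1 := by have := Finset.card_pos.2 hneX; omega
        have hY1' : CY.card = 1 := by have := Finset.card_pos.2 hneY; omega
        obtain ⟨b1, rfl⟩ := Finset.card_eq_one.1 hX1'
        obtain ⟨b2, rfl⟩ := Finset.card_eq_one.1 hY1'
        rw [uset_singleton, uset_singleton, rv_singleton, rv_singleton]
        exact boxBM_base hn (hgX.1 b1 (Finset.mem_singleton_self b1))
          (hgY.1 b2 (Finset.mem_singleton_self b2))



/-! ### Lattice cube collections and the counting core -/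

noncomputable def cubes (α : ℝ) (A : Finset (Pt n)) : Finset (Box n) :=
  A.image fun z => ((α • z, α • z + fun _ => α) : Box n)

lemma cubes_inj {α : ℝ} (hα : α ≠ 0) (A : Finset (Pt n)) :
    ∀ z ∈ A, ∀ z' ∈ A, (((α • z, α • z + fun _ => α) : Box n) = (α • z', α • z' + fun _ => α))
      → z = z' := by
  intro z _ z' _ h
  have h1 : α • z = α • z' := congrArg Prod.fst h
  funext i
  have := congrFun h1 i
  simp only [Pi.smul_apply, smul_eq_mul] at this
  exact mul_left_cancel₀ hα this

lemma good_cubes {α : ℝ} (hα : 0 < α) {A : Finset (Pt n)}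
    (hAint : ∀ z ∈ A, ∀ i, ∃ m : ℤ, z i = (m : ℝ)) :
    good (cubes α A) := by
  constructor
  · intro b hb
    obtain ⟨z, hz, rfl⟩ := Finset.mem_image.1 hb
    intro i
    simp only [Pi.add_apply, Pi.smul_apply, smul_eq_mul]
    linarith
  · intro b hb b' hb' hne
    obtain ⟨z, hz, rfl⟩ := Finset.mem_image.1 hb
    obtain ⟨z', hz', rfl⟩ := Finset.mem_image.1 hb'
    simp only [Function.onFun]
    rw [Set.disjoint_left]
    intro x hx hx'
    apply hne
    have hzz : z = z' := by
      funext i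
      have h1 := hx i (Set.mem_univ i)
      have h2 := hx' i (Set.mem_univ i)
      simp only [Pi.add_apply, Pi.smul_apply, smul_eq_mul] at h1 h2
      obtain ⟨m, hm⟩ := hAint z hz i
      obtain ⟨m', hm'⟩ := hAint z' hz' i
      rw [hm] at h1 ⊢
      rw [hm'] at h2 ⊢
      have hlt1 : (m : ℝ) < m' + 1 := by
        have := lt_of_le_of_lt h1.1 h2.2
        nlinarith
      have hlt2 : (m' : ℝ) < m + 1 := by
        have := lt_of_le_of_lt h2.1 h1.2
        nlinarith
      have e1 : m < m' + 1 := by exact_mod_cast hlt1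
      have e2 : m' < m + 1 := by exact_mod_cast hlt2
      have : m = m' := by omega
      rw [this]
    rw [hzz]

lemma rv_cubes {α : ℝ} (hα : 0 < α) (A : Finset (Pt n)) :
    rv (cubes α A) = (A.card : ℝ) * α ^ (n : ℕ) := by
  rw [cubes, rv, Finset.sum_image (cubes_inj hα.ne' A)]
  have : ∀ z ∈ A, rvol ((α • z, α • z + fun _ => α) : Box n) = α ^ (n:ℕ) := by
    intro z _
    unfold rvol
    have : ∀ i : Fin n, (((α • z, α • z + fun _ => α) : Box n).2 i
        - ((α • z, α • z + fun _ => α) : Box n).1 i) = α := by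
      intro i; simp only [Pi.add_apply, Pi.smul_apply, smul_eq_mul]; ring
    rw [Finset.prod_congr rfl fun i _ => this i, Finset.prod_const, Finset.card_univ,
      Fintype.card_fin]
  rw [Finset.sum_congr rfl this, Finset.sum_const, nsmul_eq_mul]

lemma vol_le_card (F : Finset (Pt n)) (V : Set (Pt n))
    (hV : ∀ w ∈ V, (fun i => (⌊w i⌋ : ℝ)) ∈ F) :
    volume V ≤ (F.card : ℝ≥0∞) := by
  have hsub : V ⊆ ⋃ z ∈ F, bset ((z, z + fun _ => (1:ℝ)) : Box n) := by
    intro w hw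
    refine Set.mem_iUnion₂.2 ⟨_, hV w hw, ?_⟩
    intro i _
    simp only [Pi.add_apply]
    exact ⟨Int.floor_le _, by linarith [Int.lt_floor_add_one (w i)]⟩
  calc volume V ≤ volume (⋃ z ∈ F, bset ((z, z + fun _ => (1:ℝ)) : Box n)) := measure_mono hsub
    _ ≤ ∑ z ∈ F, volume (bset ((z, z + fun _ => (1:ℝ)) : Box n)) := measure_biUnion_finset_le _ _
    _ = ∑ _z ∈ F, 1 := by
        refine Finset.sum_congr rfl fun z _ => ?_
        rw [volume_bset fun i => by simp]
        simp [rvol]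
    _ = (F.card : ℝ≥0∞) := by simp



lemma core_one (hn : 0 < n) (A F : Finset (Pt n)) {α : ℝ} (hαp : 0 < α)
    (hAint : ∀ z ∈ A, ∀ i, ∃ m : ℤ, z i = (m : ℝ))
    (hF : ∀ x ∈ A, ∀ r : Pt n, (∀ i, 0 ≤ r i ∧ r i < α) →
      (fun i => (⌊(α • x + r) i⌋ : ℝ)) ∈ F) :
    (A.card : ℝ) * α ^ (n:ℕ) ≤ (F.card : ℝ) := by
  have hg := good_cubes hαp hAint
  have hvol : volume (uset (cubes α A)) = ENNReal.ofReal ((A.card:ℝ) * α ^ (n:ℕ)) := by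
    rw [volume_uset hg, rv_cubes hαp]
  have hcov : volume (uset (cubes α A)) ≤ (F.card : ℝ≥0∞) := by
    apply vol_le_card
    intro w hw
    obtain ⟨b, hb, hwb⟩ := Set.mem_iUnion₂.1 hw
    obtain ⟨z, hz, rfl⟩ := Finset.mem_image.1 hb
    have hr : ∀ i, 0 ≤ (w - α • z) i ∧ (w - α • z) i < α := by
      intro i
      have := hwb i (Set.mem_univ i)
      simp only [Pi.add_apply, Pi.smul_apply, smul_eq_mul, Set.mem_Ico] at this
      simp only [Pi.sub_apply, Pi.smul_apply, smul_eq_mul]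
      constructor <;> linarith [this.1, this.2]
    have hmem := hF z hz (w - α • z) hr
    have hww : α • z + (w - α • z) = w := by funext i; simp
    rwa [hww] at hmem
  rw [hvol, ← ENNReal.ofReal_natCast] at hcov
  exact (ENNReal.ofReal_le_ofReal_iff (Nat.cast_nonneg _)).1 hcov

lemma core_main (hn : 0 < n) (A B F : Finset (Pt n)) (hAne : A.Nonempty) (hBne : B.Nonempty)
    (hAint : ∀ z ∈ A, ∀ i, ∃ m : ℤ, z i = (m : ℝ))
    (hBint : ∀ z ∈ B, ∀ i, ∃ m : ℤ, z i = (m : ℝ))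
    {α β : ℝ} (hα : 0 ≤ α) (hβ : 0 ≤ β)
    (hF : ∀ x ∈ A, ∀ y ∈ B, ∀ r : Pt n, (∀ i, 0 ≤ r i ∧ r i < α + β) →
        (fun i => (⌊(α • x + β • y + r) i⌋ : ℝ)) ∈ F) :
    (α * (A.card : ℝ) ^ (n:ℝ)⁻¹ + β * (B.card : ℝ) ^ (n:ℝ)⁻¹) ^ (n:ℕ) ≤ (F.card : ℝ) := by
  rcases eq_or_lt_of_le hα with hα0 | hαp
  · rcases eq_or_lt_of_le hβ with hβ0 | hβp
    · -- both zero
      rw [← hα0, ← hβ0]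
      simp only [zero_mul, add_zero, zero_add]
      rw [zero_pow hn.ne']
      exact Nat.cast_nonneg _
    · -- α = 0, β > 0
      obtain ⟨x0, hx0⟩ := hAne
      have key := core_one hn B F hβp hBint (fun y hy r hr => by
        have := hF x0 hx0 y hy r (fun i => ⟨(hr i).1, by
          rw [← hα0]; linarith [(hr i).2]⟩)
        have e : α • x0 + β • y + r = β • y + r := by
          rw [← hα0, zero_smul, zero_add]
        rwa [e] at this)
      rw [← hα0]
      simp only [zero_mul, zero_add]
      calc (β * (B.card : ℝ) ^ (n:ℝ)⁻¹) ^ (n:ℕ)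
          = (B.card : ℝ) * β ^ (n:ℕ) := by
            rw [mul_pow, ← Real.rpow_natCast ((B.card:ℝ) ^ (n:ℝ)⁻¹) n, ← Real.rpow_mul
              (Nat.cast_nonneg _), inv_mul_cancel₀ (by exact_mod_cast hn.ne' : (n:ℝ) ≠ 0),
              Real.rpow_one]
            ring
        _ ≤ (F.card : ℝ) := key
  · rcases eq_or_lt_of_le hβ with hβ0 | hβp
    · -- β = 0, α > 0
      obtain ⟨y0, hy0⟩ := hBne
      have key := core_one hn A F hαp hAint (fun x hx r hr => by
        have := hF x hx y0 hy0 r (fun i => ⟨(hr i).1, by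
          rw [← hβ0]; linarith [(hr i).2]⟩)
        have e : α • x + β • y0 + r = α • x + r := by
          rw [← hβ0, zero_smul, add_zero]
        rwa [e] at this)
      rw [← hβ0]
      simp only [zero_mul, add_zero]
      calc (α * (A.card : ℝ) ^ (n:ℝ)⁻¹) ^ (n:ℕ)
          = (A.card : ℝ) * α ^ (n:ℕ) := by
            rw [mul_pow, ← Real.rpow_natCast ((A.card:ℝ) ^ (n:ℝ)⁻¹) n, ← Real.rpow_mul
              (Nat.cast_nonneg _), inv_mul_cancel₀ (by exact_mod_cast hn.ne' : (n:ℝ) ≠ 0),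
              Real.rpow_one]
            ring
        _ ≤ (F.card : ℝ) := key
    · -- both positive : Brunn-Minkowski
      set CX := cubes α A with hCX
      set CY := cubes β B with hCY
      have hgX := good_cubes hαp hAint
      have hgY := good_cubes hβp hBint
      have hneX : CX.Nonempty := hAne.image _
      have hneY : CY.Nonempty := hBne.image _
      have hbm := boxBM hn (CX.card + CY.card) CX CY hgX hgY hneX hneY le_rfl
      have hcov : volume (uset CX + uset CY) ≤ (F.card : ℝ≥0∞) := by
        apply vol_le_card
        rintro w ⟨wx, hwx, wy, hwy, rfl⟩
        obtain ⟨b, hb, hwb⟩ := Set.mem_iUnion₂.1 hwx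
        obtain ⟨z, hz, rfl⟩ := Finset.mem_image.1 hb
        obtain ⟨b', hb', hwb'⟩ := Set.mem_iUnion₂.1 hwy
        obtain ⟨z', hz', rfl⟩ := Finset.mem_image.1 hb'
        set r : Pt n := (wx - α • z) + (wy - β • z') with hrdef
        have hr : ∀ i, 0 ≤ r i ∧ r i < α + β := by
          intro i
          have h1 := hwb i (Set.mem_univ i)
          have h2 := hwb' i (Set.mem_univ i)
          simp only [Pi.add_apply, Pi.smul_apply, smul_eq_mul, Set.mem_Ico] at h1 h2
          simp only [hrdef, Pi.add_apply, Pi.sub_apply, Pi.smul_apply, smul_eq_mul]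
          constructor <;> linarith [h1.1, h1.2, h2.1, h2.2]
        have hmem := hF z hz z' hz' r hr
        have e : α • z + β • z' + r = wx + wy := by
          funext i
          simp only [hrdef, Pi.add_apply, Pi.sub_apply, Pi.smul_apply, smul_eq_mul]
          ring
        rwa [e] at hmem
      have h1 : (rv CX) ^ (n:ℝ)⁻¹ = α * (A.card : ℝ) ^ (n:ℝ)⁻¹ := by
        rw [hCX, rv_cubes hαp, Real.mul_rpow (Nat.cast_nonneg _) (pow_nonneg hαp.le _),
          Real.pow_rpow_inv_natCast hαp.le hn.ne']
        ring
      have h2 : (rv CY) ^ (n:ℝ)⁻¹ = β * (B.card : ℝ) ^ (n:ℝ)⁻¹ := by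
        rw [hCY, rv_cubes hβp, Real.mul_rpow (Nat.cast_nonneg _) (pow_nonneg hβp.le _),
          Real.pow_rpow_inv_natCast hβp.le hn.ne']
        ring
      have := le_trans hbm hcov
      rw [← ENNReal.ofReal_natCast] at this
      have := (ENNReal.ofReal_le_ofReal_iff (Nat.cast_nonneg _)).1 this
      unfold tgt at this
      rwa [h1, h2] at this

end DBM

end hidden
-- assembly part, to be appended after defs + DBM
namespace DBM
open Bornology MeasureTheory
open scoped Pointwise

lemma finite_inter_intPts {n : ℕ} {S : Set (Fin n → ℝ)} (hS : IsBounded S) :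
    (S ∩ intPts n).Finite := by
  obtain ⟨R, hR⟩ := hS.subset_closedBall 0
  have hfin : ({v : Fin n → ℤ | ∀ i, v i ∈ Set.Icc (-⌈R⌉) ⌈R⌉}).Finite := by
    have he : {v : Fin n → ℤ | ∀ i, v i ∈ Set.Icc (-⌈R⌉) ⌈R⌉}
        = Set.pi Set.univ (fun _ => Set.Icc (-⌈R⌉) ⌈R⌉) := by
      ext v
      constructor
      · intro h i _; exact h i
      · intro h i; exact h i (Set.mem_univ i)
    rw [he]
    exact Set.Finite.pi fun _ => Set.finite_Icc _ _
  refine (hfin.image (fun v : Fin n → ℤ => fun i => (v i : ℝ))).subset ?_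
  rintro x ⟨hxS, hxI⟩
  choose m hm using hxI
  refine ⟨m, fun i => ?_, by funext i; exact (hm i).symm⟩
  have hx : ‖x‖ ≤ R := by
    have := hR hxS
    rwa [Metric.mem_closedBall, dist_zero_right] at this
  have hxi : |x i| ≤ R := by
    rw [← Real.norm_eq_abs]
    exact (norm_le_pi_norm x i).trans hx
  rw [hm i] at hxi
  have h1 : (m i : ℝ) ≤ (⌈R⌉ : ℝ) :=
    le_trans (le_abs_self _) (hxi.trans (Int.le_ceil R))
  have h2 : -(⌈R⌉ : ℝ) ≤ (m i : ℝ) := by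
    have hn := neg_abs_le ((m i : ℝ))
    have := Int.le_ceil R
    linarith
  exact Set.mem_Icc.2 ⟨by exact_mod_cast h2, by exact_mod_cast h1⟩

lemma norm_le_of_closedBall {n : ℕ} {S : Set (Fin n → ℝ)} {R : ℝ}
    (hR : S ⊆ Metric.closedBall 0 R) : ∀ x ∈ S, ‖x‖ ≤ max R 0 := by
  intro x hx
  have := hR hx
  rw [Metric.mem_closedBall, dist_zero_right] at this
  exact this.trans (le_max_left _ _)

lemma isBounded_smulSet {n : ℕ} (c : ℝ) {K : Set (Fin n → ℝ)} (hK : IsBounded K) :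
    IsBounded (c • K) := by
  obtain ⟨R, hR⟩ := hK.subset_closedBall 0
  refine (Metric.isBounded_closedBall (x := (0 : Fin n → ℝ)) (r := |c| * max R 0)).subset ?_
  rintro _ ⟨x, hx, rfl⟩
  rw [Metric.mem_closedBall, dist_zero_right, norm_smul, Real.norm_eq_abs]
  exact mul_le_mul_of_nonneg_left (norm_le_of_closedBall hR x hx) (abs_nonneg c)

lemma isBounded_pSum {n : ℕ} {p : ℝ} (hp : 1 ≤ p) {X Y : Set (Fin n → ℝ)}
    (hX : IsBounded X) (hY : IsBounded Y) : IsBounded (pSum p X Y) := by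
  have hp0 : (0:ℝ) < p := lt_of_lt_of_le one_pos hp
  obtain ⟨R1, hR1⟩ := hX.subset_closedBall 0
  obtain ⟨R2, hR2⟩ := hY.subset_closedBall 0
  refine (Metric.isBounded_closedBall (x := (0 : Fin n → ℝ))
    (r := max R1 0 + max R2 0)).subset ?_
  intro w hw
  rw [Metric.mem_closedBall, dist_zero_right]
  unfold pSum at hw
  split_ifs at hw with h1
  · obtain ⟨x, hx, y, hy, rfl⟩ := hw
    calc ‖x + y‖ ≤ ‖x‖ + ‖y‖ := norm_add_le _ _
      _ ≤ max R1 0 + max R2 0 :=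
        add_le_add (norm_le_of_closedBall hR1 x hx) (norm_le_of_closedBall hR2 y hy)
  · obtain ⟨x, hx, y, hy, μ, hμ, rfl⟩ := hw
    obtain ⟨hμ0, hμ1⟩ := hμ
    have hexp : (0:ℝ) ≤ 1 - 1/p := by
      have : 1/p ≤ 1 := by
        rw [div_le_one hp0]; exact hp
      linarith
    have e1 : |((1 - μ) ^ (1 - 1/p) : ℝ)| ≤ 1 := by
      rw [abs_of_nonneg (Real.rpow_nonneg (by linarith) _)]
      exact Real.rpow_le_one (by linarith) (by linarith) hexp
    have e2 : |(μ ^ (1 - 1/p) : ℝ)| ≤ 1 := by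
      rw [abs_of_nonneg (Real.rpow_nonneg (by linarith) _)]
      exact Real.rpow_le_one (by linarith) (by linarith) hexp
    calc ‖((1 - μ) ^ (1 - 1/p) : ℝ) • x + ((μ : ℝ) ^ (1 - 1/p) : ℝ) • y‖
        ≤ ‖((1 - μ) ^ (1 - 1/p) : ℝ) • x‖ + ‖((μ : ℝ) ^ (1 - 1/p) : ℝ) • y‖ := norm_add_le _ _
      _ = |((1 - μ) ^ (1 - 1/p) : ℝ)| * ‖x‖ + |(μ ^ (1 - 1/p) : ℝ)| * ‖y‖ := by
          rw [norm_smul, norm_smul, Real.norm_eq_abs, Real.norm_eq_abs]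
      _ ≤ 1 * max R1 0 + 1 * max R2 0 := by
          refine add_le_add (mul_le_mul e1 (norm_le_of_closedBall hR1 x hx) (norm_nonneg _)
            zero_le_one) (mul_le_mul e2 (norm_le_of_closedBall hR2 y hy) (norm_nonneg _)
            zero_le_one)
      _ = max R1 0 + max R2 0 := by ring

lemma isBounded_addSet {n : ℕ} {X Y : Set (Fin n → ℝ)}
    (hX : IsBounded X) (hY : IsBounded Y) : IsBounded (X + Y) := by
  obtain ⟨R1, hR1⟩ := hX.subset_closedBall 0
  obtain ⟨R2, hR2⟩ := hY.subset_closedBall 0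
  refine (Metric.isBounded_closedBall (x := (0 : Fin n → ℝ))
    (r := max R1 0 + max R2 0)).subset ?_
  rintro _ ⟨x, hx, y, hy, rfl⟩
  rw [Metric.mem_closedBall, dist_zero_right]
  calc ‖x + y‖ ≤ ‖x‖ + ‖y‖ := norm_add_le _ _
    _ ≤ max R1 0 + max R2 0 :=
      add_le_add (norm_le_of_closedBall hR1 x hx) (norm_le_of_closedBall hR2 y hy)

lemma isBounded_cube (n : ℕ) (aR bR : ℝ) : IsBounded (cube n aR bR) := by
  refine (Metric.isBounded_closedBall (x := (0 : Fin n → ℝ))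
    (r := max |aR| |bR|)).subset ?_
  intro x hx
  rw [Metric.mem_closedBall, dist_zero_right]
  refine (pi_norm_le_iff_of_nonneg (le_trans (abs_nonneg aR) (le_max_left _ _))).2 fun i => ?_
  have := hx i
  rw [Real.norm_eq_abs, abs_le]
  constructor
  · have h1 := neg_abs_le aR
    have h2 := le_max_left |aR| |bR|
    have := this.1
    simp only [Set.mem_Ioo] at *
    linarith
  · have h1 := le_abs_self bR
    have h2 := le_max_right |aR| |bR|
    have := this.2
    simp only [Set.mem_Ioo] at *
    linarith

end DBM
namespace DBM
open Bornology MeasureTheory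
open scoped Pointwise

lemma exists_alpha_beta {n : ℕ} (t s p : ℝ) (ht : 0 ≤ t) (hs : 0 ≤ s) (hp : 1 ≤ p)
    (hts : 0 < t + s) (a b : ℕ) (ha : 0 < a) (hb : 0 < b)
    (K L : Set (Fin n → ℝ)) :
    ∃ α β : ℝ, 0 ≤ α ∧ 0 ≤ β ∧ α + β ≤ (t + s) ^ (1/p : ℝ) ∧
      (∀ x ∈ K, ∀ y ∈ L, α • x + β • y ∈ pSum p (pSmul p t K) (pSmul p s L)) ∧
      (α * (a:ℝ) ^ (n:ℝ)⁻¹ + β * (b:ℝ) ^ (n:ℝ)⁻¹) ^ p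
        = t * (a:ℝ) ^ (p / (n:ℝ)) + s * (b:ℝ) ^ (p / (n:ℝ)) := by
  have hp0 : (0:ℝ) < p := lt_of_lt_of_le one_pos hp
  set c : ℝ := (a:ℝ) ^ (n:ℝ)⁻¹ with hcdef
  set d : ℝ := (b:ℝ) ^ (n:ℝ)⁻¹ with hddef
  have hc : (0:ℝ) < c := Real.rpow_pos_of_pos (by exact_mod_cast ha) _
  have hd : (0:ℝ) < d := Real.rpow_pos_of_pos (by exact_mod_cast hb) _
  have hap : c ^ p = (a:ℝ) ^ (p / (n:ℝ)) := by
    rw [hcdef, ← Real.rpow_mul (Nat.cast_nonneg a), inv_mul_eq_div]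
  have hbp : d ^ p = (b:ℝ) ^ (p / (n:ℝ)) := by
    rw [hddef, ← Real.rpow_mul (Nat.cast_nonneg b), inv_mul_eq_div]
  rcases eq_or_lt_of_le hp with hp1 | hp1
  · -- p = 1
    refine ⟨t, s, ht, hs, ?_, ?_, ?_⟩
    · rw [← hp1]; simp
    · intro x hx y hy
      rw [pSum, if_pos hp1.symm]
      refine Set.add_mem_add ?_ ?_
      · show t • x ∈ pSmul p t K
        rw [pSmul, ← hp1]
        have e : t ^ ((1:ℝ)/1) = t := by norm_num
        rw [e]
        exact Set.smul_mem_smul_set hx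
      · show s • y ∈ pSmul p s L
        rw [pSmul, ← hp1]
        have e : s ^ ((1:ℝ)/1) = s := by norm_num
        rw [e]
        exact Set.smul_mem_smul_set hy
    · rw [← hap, ← hbp, ← hp1, Real.rpow_one, Real.rpow_one, Real.rpow_one]
  · -- p > 1
    set q' : ℝ := 1 - 1/p with hq'
    have hq'0 : 0 ≤ q' := by
      have : 1/p ≤ 1 := by rw [div_le_one hp0]; exact hp
      rw [hq']; linarith
    have hq'sum : q' + 1/p = 1 := by rw [hq']; ring
    set A1 : ℝ := t * c ^ p with hA1
    set A2 : ℝ := s * d ^ p with hA2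
    have hA1n : 0 ≤ A1 := mul_nonneg ht (Real.rpow_nonneg hc.le _)
    have hA2n : 0 ≤ A2 := mul_nonneg hs (Real.rpow_nonneg hd.le _)
    have hS : 0 < A1 + A2 := by
      rcases lt_or_ge 0 t with htp | htp
      · have : 0 < A1 := mul_pos htp (Real.rpow_pos_of_pos hc _)
        linarith
      · have ht0 : t = 0 := le_antisymm htp ht
        have hsp : 0 < s := by linarith
        have : 0 < A2 := mul_pos hsp (Real.rpow_pos_of_pos hd _)
        linarith
    set S0 : ℝ := A1 + A2 with hS0
    set μ : ℝ := A2 / S0 with hμdef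
    have hμ0 : 0 ≤ μ := div_nonneg hA2n hS.le
    have hμ1 : μ ≤ 1 := by
      rw [hμdef, div_le_one hS]
      linarith
    have h1μ : 1 - μ = A1 / S0 := by
      rw [hμdef, eq_div_iff hS.ne', sub_mul, one_mul, div_mul_cancel₀ _ hS.ne', hS0]
      ring
    set α : ℝ := (A1 / S0) ^ q' * t ^ (1/p : ℝ) with hαdef
    set β : ℝ := (A2 / S0) ^ q' * s ^ (1/p : ℝ) with hβdef
    have hα0 : 0 ≤ α :=
      mul_nonneg (Real.rpow_nonneg (div_nonneg hA1n hS.le) _) (Real.rpow_nonneg ht _)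
    have hβ0 : 0 ≤ β :=
      mul_nonneg (Real.rpow_nonneg (div_nonneg hA2n hS.le) _) (Real.rpow_nonneg hs _)
    have hpq : p * q' + 1 = p := by
      rw [hq']
      field_simp
      ring
    -- key multiplicative identities
    have hNt : A1 ^ q' * t ^ (1/p:ℝ) * c = A1 := by
      rw [hA1, Real.mul_rpow ht (Real.rpow_nonneg hc.le _),
        ← Real.rpow_mul hc.le]
      calc t ^ q' * c ^ (p * q') * t ^ (1/p:ℝ) * c
          = (t ^ q' * t ^ (1/p:ℝ)) * (c ^ (p * q') * c ^ (1:ℝ)) := by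
            rw [Real.rpow_one]; ring
        _ = t ^ (q' + 1/p) * c ^ (p * q' + 1) := by
            rw [← Real.rpow_add' ht (by rw [hq'sum]; exact one_ne_zero),
              ← Real.rpow_add hc]
        _ = t * c ^ p := by rw [hq'sum, hpq, Real.rpow_one]
    have hNs : A2 ^ q' * s ^ (1/p:ℝ) * d = A2 := by
      rw [hA2, Real.mul_rpow hs (Real.rpow_nonneg hd.le _),
        ← Real.rpow_mul hd.le]
      calc s ^ q' * d ^ (p * q') * s ^ (1/p:ℝ) * d
          = (s ^ q' * s ^ (1/p:ℝ)) * (d ^ (p * q') * d ^ (1:ℝ)) := by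
            rw [Real.rpow_one]; ring
        _ = s ^ (q' + 1/p) * d ^ (p * q' + 1) := by
            rw [← Real.rpow_add' hs (by rw [hq'sum]; exact one_ne_zero),
              ← Real.rpow_add hd]
        _ = s * d ^ p := by rw [hq'sum, hpq, Real.rpow_one]
    have hαa : α * c = A1 / S0 ^ q' := by
      rw [hαdef, Real.div_rpow hA1n hS.le, div_mul_eq_mul_div, div_mul_eq_mul_div, hNt]
    have hβb : β * d = A2 / S0 ^ q' := by
      rw [hβdef, Real.div_rpow hA2n hS.le, div_mul_eq_mul_div, div_mul_eq_mul_div, hNs]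
    have hW : α * c + β * d = S0 ^ (1/p : ℝ) := by
      rw [hαa, hβb, ← add_div, ← hS0]
      nth_rewrite 1 [← Real.rpow_one S0]
      rw [← Real.rpow_sub hS]
      congr 1
      rw [hq']
      ring
    refine ⟨α, β, hα0, hβ0, ?_, ?_, ?_⟩
    · -- Hölder
      have ht' : t ^ (1/p:ℝ) = (t/(t+s)) ^ (1/p:ℝ) * (t+s) ^ (1/p:ℝ) := by
        rw [← Real.mul_rpow (div_nonneg ht hts.le) hts.le, div_mul_cancel₀ _ hts.ne']
      have hs' : s ^ (1/p:ℝ) = (s/(t+s)) ^ (1/p:ℝ) * (t+s) ^ (1/p:ℝ) := by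
        rw [← Real.mul_rpow (div_nonneg hs hts.le) hts.le, div_mul_cancel₀ _ hts.ne']
      have key1 : α ≤ (q' * (A1/S0) + (1/p) * (t/(t+s))) * (t+s) ^ (1/p:ℝ) := by
        rw [hαdef, ht', ← mul_assoc]
        refine mul_le_mul_of_nonneg_right ?_ (Real.rpow_nonneg hts.le _)
        exact Real.geom_mean_le_arith_mean2_weighted hq'0 (by positivity)
          (div_nonneg hA1n hS.le) (div_nonneg ht hts.le) hq'sum
      have key2 : β ≤ (q' * (A2/S0) + (1/p) * (s/(t+s))) * (t+s) ^ (1/p:ℝ) := by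
        rw [hβdef, hs', ← mul_assoc]
        refine mul_le_mul_of_nonneg_right ?_ (Real.rpow_nonneg hts.le _)
        exact Real.geom_mean_le_arith_mean2_weighted hq'0 (by positivity)
          (div_nonneg hA2n hS.le) (div_nonneg hs hts.le) hq'sum
      have hsum1 : A1/S0 + A2/S0 = 1 := by
        rw [← add_div, ← hS0]
        exact div_self hS.ne'
      have hsum2 : t/(t+s) + s/(t+s) = 1 := by
        rw [← add_div]
        exact div_self hts.ne'
      calc α + β ≤ (q' * (A1/S0) + (1/p) * (t/(t+s))) * (t+s) ^ (1/p:ℝ)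
            + (q' * (A2/S0) + (1/p) * (s/(t+s))) * (t+s) ^ (1/p:ℝ) := add_le_add key1 key2
        _ = (q' * (A1/S0 + A2/S0) + (1/p) * (t/(t+s) + s/(t+s))) * (t+s) ^ (1/p:ℝ) := by
            ring
        _ = (t+s) ^ (1/p:ℝ) := by rw [hsum1, hsum2, mul_one, mul_one, hq'sum, one_mul]
    · -- membership
      intro x hx y hy
      rw [pSum, if_neg hp1.ne']
      refine ⟨(t ^ (1/p : ℝ)) • x, ?_, (s ^ (1/p : ℝ)) • y, ?_, μ, ⟨hμ0, hμ1⟩, ?_⟩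
      · rw [pSmul]; exact Set.smul_mem_smul_set hx
      · rw [pSmul]; exact Set.smul_mem_smul_set hy
      · rw [smul_smul, smul_smul, h1μ, hαdef, hβdef, hμdef, hq']
    · -- identity
      rw [hW, ← Real.rpow_mul hS.le, one_div_mul_cancel hp0.ne', Real.rpow_one, hS0,
        hA1, hA2, hap, hbp]

end DBM
/-- Discrete `L_p` Brunn–Minkowski inequality for arbitrary non-negative
`L_p` linear combinations. -/
theorem discrete_Lp_BrunnMinkowski_linear (n : ℕ) (hn : 1 ≤ n) (t s p : ℝ)
    (ht : 0 ≤ t) (hs : 0 ≤ s) (hp : 1 ≤ p)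
    (K L : Set (Fin n → ℝ)) (hKb : Bornology.IsBounded K) (hLb : Bornology.IsBounded L)
    (hG : 0 < latG K * latG L) :
    t * (latG K : ℝ) ^ (p / (n : ℝ)) + s * (latG L : ℝ) ^ (p / (n : ℝ)) ≤
      (latG (pSum p (pSmul p t K) (pSmul p s L)
          + cube n (-1) ((⌈(t + s) ^ (1 / p : ℝ)⌉ : ℤ) : ℝ)) : ℝ) ^ (p / (n : ℝ)) := by
  have hn0 : 0 < n := hn
  have hp0 : (0:ℝ) < p := lt_of_lt_of_le one_pos hp
  by_cases hts : 0 < t + s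
  swap
  · have ht0 : t = 0 := by
      have := not_lt.1 hts
      linarith
    have hs0 : s = 0 := by
      have := not_lt.1 hts
      linarith
    rw [ht0, hs0]
    simp only [zero_mul, add_zero]
    exact Real.rpow_nonneg (Nat.cast_nonneg _) _
  have ha : 0 < latG K := Nat.pos_of_ne_zero (fun h => by rw [h] at hG; simp at hG)
  have hb : 0 < latG L := Nat.pos_of_ne_zero (fun h => by rw [h] at hG; simp at hG)
  obtain ⟨α, β, hα0, hβ0, hαβ, hmem, hid⟩ :=
    DBM.exists_alpha_beta t s p ht hs hp hts (latG K) (latG L) ha hb K L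
  have hAfin : (K ∩ intPts n).Finite := DBM.finite_inter_intPts hKb
  have hBfin : (L ∩ intPts n).Finite := DBM.finite_inter_intPts hLb
  set mR : ℝ := ((⌈(t + s) ^ (1 / p : ℝ)⌉ : ℤ) : ℝ) with hmR
  set P : Set (Fin n → ℝ) := pSum p (pSmul p t K) (pSmul p s L) with hPdef
  set M : Set (Fin n → ℝ) := P + cube n (-1) mR with hMdef
  have hpsm1 : Bornology.IsBounded (pSmul p t K) := by
    rw [pSmul]; exact DBM.isBounded_smulSet _ hKb
  have hpsm2 : Bornology.IsBounded (pSmul p s L) := by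
    rw [pSmul]; exact DBM.isBounded_smulSet _ hLb
  have hMb : Bornology.IsBounded M :=
    DBM.isBounded_addSet (DBM.isBounded_pSum hp hpsm1 hpsm2) (DBM.isBounded_cube n (-1) mR)
  have hMfin : (M ∩ intPts n).Finite := DBM.finite_inter_intPts hMb
  have hαβm : α + β ≤ mR := by
    refine le_trans hαβ ?_
    rw [hmR]
    exact_mod_cast Int.le_ceil _
  -- the core counting inequality
  have hF : ∀ x ∈ hAfin.toFinset, ∀ y ∈ hBfin.toFinset, ∀ r : Fin n → ℝ,
      (∀ i, 0 ≤ r i ∧ r i < α + β) →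
      (fun i => (⌊(α • x + β • y + r) i⌋ : ℝ)) ∈ hMfin.toFinset := by
    intro x hx y hy r hr
    rw [Set.Finite.mem_toFinset] at hx hy ⊢
    obtain ⟨hxK, hxI⟩ := hx
    obtain ⟨hyL, hyI⟩ := hy
    have hd0 : α • x + β • y ∈ P := hmem x hxK y hyL
    constructor
    · refine ⟨α • x + β • y, hd0,
        (fun i => (⌊(α • x + β • y + r) i⌋ : ℝ)) - (α • x + β • y), ?_, by funext i; simp⟩
      intro i
      have hfl := Int.floor_le ((α • x + β • y + r) i)
      have hfl2 := Int.sub_one_lt_floor ((α • x + β • y + r) i)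
      have hri := hr i
      constructor
      · simp only [Pi.sub_apply, Pi.add_apply, Pi.smul_apply, smul_eq_mul] at *
        linarith
      · simp only [Pi.sub_apply, Pi.add_apply, Pi.smul_apply, smul_eq_mul] at *
        linarith
    · intro i
      exact ⟨⌊(α • x + β • y + r) i⌋, rfl⟩
  have hAne : hAfin.toFinset.Nonempty :=
    (Set.Finite.toFinset_nonempty hAfin).2 (Set.nonempty_of_ncard_ne_zero ha.ne')
  have hBne : hBfin.toFinset.Nonempty :=
    (Set.Finite.toFinset_nonempty hBfin).2 (Set.nonempty_of_ncard_ne_zero hb.ne')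
  have hcore := DBM.core_main hn0 hAfin.toFinset hBfin.toFinset hMfin.toFinset hAne hBne
    (fun z hz i => ((Set.Finite.mem_toFinset hAfin).1 hz).2 i)
    (fun z hz i => ((Set.Finite.mem_toFinset hBfin).1 hz).2 i)
    hα0 hβ0 hF
  rw [← Set.ncard_eq_toFinset_card _ hAfin, ← Set.ncard_eq_toFinset_card _ hBfin,
    ← Set.ncard_eq_toFinset_card _ hMfin] at hcore
  have hcore' : (α * (latG K : ℝ) ^ (n:ℝ)⁻¹ + β * (latG L : ℝ) ^ (n:ℝ)⁻¹) ^ (n:ℕ)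
      ≤ (latG M : ℝ) := hcore
  set W : ℝ := α * (latG K : ℝ) ^ (n:ℝ)⁻¹ + β * (latG L : ℝ) ^ (n:ℝ)⁻¹ with hWdef
  have hW0 : 0 ≤ W := by
    have h1 : (0:ℝ) ≤ (latG K : ℝ) ^ (n:ℝ)⁻¹ := Real.rpow_nonneg (Nat.cast_nonneg _) _
    have h2 : (0:ℝ) ≤ (latG L : ℝ) ^ (n:ℝ)⁻¹ := Real.rpow_nonneg (Nat.cast_nonneg _) _
    positivity
  have hWp : W ^ p = (W ^ (n:ℕ)) ^ (p / (n:ℝ)) := by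
    rw [← Real.rpow_natCast W n, ← Real.rpow_mul hW0]
    congr 1
    field_simp
  rw [← hid, hWp]
  exact Real.rpow_le_rpow (pow_nonneg hW0 n) hcore' (div_nonneg hp0.le (Nat.cast_nonneg n))
end
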